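/- arXiv:1105.4513 — 9 statements merged into one kernel-verified Lean document; each statement's English description precedes it below -/
import Mathlib

section
/- Let λ be a nontrivial additive character of F_q and χ a multiplicative character of F_q^*. Then ∑_{X ∈ GL_n(F_q)} χ(det X) λ(tr X) = q^{n(n-1)/2} · G(χ, λ)^n, where G(χ, λ) = ∑_{x ∈ F_q^*} χ(x)λ(x) is the classical Gauss sum. -/
open Matrix Finset

set_option linter.unusedSectionVars false
variable {F : Type} [Field F] [Fintype F] [DecidableEq F]

private lemma trace_fromBlocks' {m k : Type} [Fintype m] [Fintype k]
    (A : Matrix m m F) (B : Matrix m k F) (C : Matrix k m F) (D : Matrix k k F) :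
    (fromBlocks A B C D).trace = A.trace + D.trace := by
  simp [Matrix.trace, Fintype.sum_sum_type, Matrix.diag, fromBlocks]

private lemma trace_reindex' {m k : Type} [Fintype m] [Fintype k] (e : m ≃ k)
    (A : Matrix m m F) : (Matrix.reindex e e A).trace = A.trace := by
  simp only [Matrix.trace, Matrix.diag, reindex_apply, submatrix_apply]
  exact Fintype.sum_equiv e.symm _ _ (fun i => rfl)

private lemma sum_fin_one (χ : MulChar F ℂ) (lam : AddChar F ℂ) :
    ∑ D : Matrix (Fin 1) (Fin 1) F, χ D.det * lam D.trace = gaussSum χ lam := by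
  refine Fintype.sum_bijective (fun D => D 0 0) ⟨?_, ?_⟩ _ _ ?_
  · intro D1 D2 h
    ext i j
    fin_cases i; fin_cases j; exact h
  · intro d; exact ⟨Matrix.of fun _ _ => d, rfl⟩
  · intro D; rw [Matrix.det_fin_one, Matrix.trace_fin_one]

/-- equivalence between blocks and block matrices -/
private def blocksEquiv (m k : Type) :
    (Matrix m m F × Matrix m k F × Matrix k m F × Matrix k k F) ≃
      Matrix (m ⊕ k) (m ⊕ k) F where
  toFun p := fromBlocks p.1 p.2.1 p.2.2.1 p.2.2.2
  invFun M := (M.toBlocks₁₁, M.toBlocks₁₂, M.toBlocks₂₁, M.toBlocks₂₂)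
  left_inv := by rintro ⟨A, B, C, D⟩; simp
  right_inv M := fromBlocks_toBlocks M

private lemma vanish (χ : MulChar F ℂ) (lam : AddChar F ℂ) (hlam : lam ≠ 1) {n : ℕ}
    (A : Matrix (Fin n) (Fin n) F) (C : Matrix (Fin 1) (Fin n) F) (hC : C ≠ 0) :
    ∑ p : Matrix (Fin n) (Fin 1) F × Matrix (Fin 1) (Fin 1) F,
      χ (fromBlocks A p.1 C p.2).det * lam (fromBlocks A p.1 C p.2).trace = 0 := by
  obtain ⟨t, ht⟩ := AddChar.ne_one_iff.mp hlam
  have hCj : ∃ j, C 0 j ≠ 0 := by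
    by_contra h
    push_neg at h
    apply hC
    ext i j
    simpa [Fin.fin_one_eq_zero i] using h j
  obtain ⟨j, hj⟩ := hCj
  set u : Matrix (Fin n) (Fin 1) F := Matrix.of fun k _ => if k = j then (C 0 j)⁻¹ * t else 0
    with hu
  have htr : (C * u).trace = t := by
    rw [Matrix.trace_fin_one, Matrix.mul_apply]
    rw [Finset.sum_eq_single j]
    · simp [hu, mul_inv_cancel_left₀ hj]
    · intro k _ hk; simp [hu, hk]
    · simp
  set S := ∑ p : Matrix (Fin n) (Fin 1) F × Matrix (Fin 1) (Fin 1) F,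
      χ (fromBlocks A p.1 C p.2).det * lam (fromBlocks A p.1 C p.2).trace with hS
  have key : lam t * S = S := by
    rw [hS, Finset.mul_sum]
    refine Fintype.sum_equiv
      ((Equiv.addRight (A * u)).prodCongr (Equiv.addRight (C * u))) _ _ ?_
    rintro ⟨B, D⟩
    simp only [Equiv.prodCongr_apply, Equiv.coe_addRight, Prod.map]
    have hmul : fromBlocks A (B + A * u) C (D + C * u)
        = fromBlocks A B C D * fromBlocks 1 u 0 1 := by
      rw [fromBlocks_multiply]
      simp [add_comm]
    have hdet : (fromBlocks A (B + A * u) C (D + C * u)).det = (fromBlocks A B C D).det := by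
      rw [hmul, Matrix.det_mul, Matrix.det_fromBlocks_zero₂₁]
      simp
    rw [hdet, trace_fromBlocks', trace_fromBlocks', Matrix.trace_add, htr,
      AddChar.map_add_eq_mul, AddChar.map_add_eq_mul, AddChar.map_add_eq_mul]
    ring
  have hz : (lam t - 1) * S = 0 := by rw [sub_mul, one_mul, key, sub_self]
  rcases mul_eq_zero.mp hz with h | h
  · exact absurd (by linear_combination h) ht
  · exact h

private lemma card_mat (n : ℕ) : Fintype.card (Matrix (Fin n) (Fin 1) F) = Fintype.card F ^ n := by
  rw [show Fintype.card (Matrix (Fin n) (Fin 1) F)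
      = Fintype.card (Fin n → Fin 1 → F) from rfl]
  simp [Fintype.card_fun]

private lemma matrix_sum_succ (χ : MulChar F ℂ) (lam : AddChar F ℂ) (hlam : lam ≠ 1) (n : ℕ) :
    ∑ M : Matrix (Fin (n+1)) (Fin (n+1)) F, χ M.det * lam M.trace
    = (Fintype.card F : ℂ) ^ n * gaussSum χ lam *
      ∑ M : Matrix (Fin n) (Fin n) F, χ M.det * lam M.trace := by
  have h1 := Fintype.sum_equiv
    (Matrix.reindex (finSumFinEquiv (m := n) (n := 1)) (finSumFinEquiv (m := n) (n := 1)))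
    (fun N : Matrix (Fin n ⊕ Fin 1) (Fin n ⊕ Fin 1) F => χ N.det * lam N.trace)
    (fun M : Matrix (Fin (n+1)) (Fin (n+1)) F => χ M.det * lam M.trace)
    (fun N => by simp only [Matrix.det_reindex_self, trace_reindex'])
  rw [← h1]
  have h2 := Fintype.sum_equiv (blocksEquiv (F := F) (Fin n) (Fin 1))
    (fun p : Matrix (Fin n) (Fin n) F × Matrix (Fin n) (Fin 1) F ×
        Matrix (Fin 1) (Fin n) F × Matrix (Fin 1) (Fin 1) F =>
      χ (fromBlocks p.1 p.2.1 p.2.2.1 p.2.2.2).det *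
        lam (fromBlocks p.1 p.2.1 p.2.2.1 p.2.2.2).trace)
    (fun N : Matrix (Fin n ⊕ Fin 1) (Fin n ⊕ Fin 1) F => χ N.det * lam N.trace)
    (fun p => rfl)
  rw [← h2, Fintype.sum_prod_type]
  have hinner : ∀ A : Matrix (Fin n) (Fin n) F,
      (∑ q : Matrix (Fin n) (Fin 1) F × Matrix (Fin 1) (Fin n) F × Matrix (Fin 1) (Fin 1) F,
        χ (fromBlocks A q.1 q.2.1 q.2.2).det * lam (fromBlocks A q.1 q.2.1 q.2.2).trace)
      = (Fintype.card F : ℂ) ^ n * gaussSum χ lam * (χ A.det * lam A.trace) := by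
    intro A
    have h3 := Fintype.sum_equiv
      (⟨fun x => (x.2.1, (x.1, x.2.2)), fun x => (x.2.1, (x.1, x.2.2)),
        fun x => rfl, fun x => rfl⟩ :
        (Matrix (Fin 1) (Fin n) F ×
          Matrix (Fin n) (Fin 1) F × Matrix (Fin 1) (Fin 1) F) ≃
        (Matrix (Fin n) (Fin 1) F ×
          Matrix (Fin 1) (Fin n) F × Matrix (Fin 1) (Fin 1) F))
      (fun x : Matrix (Fin 1) (Fin n) F ×
          Matrix (Fin n) (Fin 1) F × Matrix (Fin 1) (Fin 1) F =>
        χ (fromBlocks A x.2.1 x.1 x.2.2).det * lam (fromBlocks A x.2.1 x.1 x.2.2).trace)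
      (fun q : Matrix (Fin n) (Fin 1) F ×
          Matrix (Fin 1) (Fin n) F × Matrix (Fin 1) (Fin 1) F =>
        χ (fromBlocks A q.1 q.2.1 q.2.2).det * lam (fromBlocks A q.1 q.2.1 q.2.2).trace)
      (fun x => by rfl)
    rw [← h3, Fintype.sum_prod_type]
    rw [Finset.sum_eq_single_of_mem 0 (Finset.mem_univ 0)
      (fun C _ hC => vanish χ lam hlam A C hC)]
    have hterm : ∀ p : Matrix (Fin n) (Fin 1) F × Matrix (Fin 1) (Fin 1) F,
        χ (fromBlocks A p.1 0 p.2).det * lam (fromBlocks A p.1 0 p.2).trace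
        = (χ A.det * lam A.trace) * (χ p.2.det * lam p.2.trace) := by
      intro p
      rw [Matrix.det_fromBlocks_zero₂₁, trace_fromBlocks', map_mul χ, AddChar.map_add_eq_mul]
      ring
    rw [Finset.sum_congr rfl (fun p _ => hterm p), Fintype.sum_prod_type]
    simp only [← Finset.mul_sum, sum_fin_one, Finset.sum_const, Finset.card_univ, card_mat,
      nsmul_eq_mul]
    push_cast
    ring
  rw [Finset.sum_congr rfl (fun A _ => hinner A), ← Finset.mul_sum]

private lemma sum_GL_eq (χ : MulChar F ℂ) (lam : AddChar F ℂ) (n : ℕ) :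
    ∑ X : GL (Fin n) F,
        χ ((X : Matrix (Fin n) (Fin n) F).det) *
          lam ((X : Matrix (Fin n) (Fin n) F).trace)
      = ∑ M : Matrix (Fin n) (Fin n) F, χ M.det * lam M.trace := by
  have h0 : ∑ M ∈ Finset.univ.filter (fun M : Matrix (Fin n) (Fin n) F => IsUnit M),
      χ M.det * lam M.trace = ∑ M : Matrix (Fin n) (Fin n) F, χ M.det * lam M.trace := by
    refine Finset.sum_filter_of_ne ?_
    intro M _ h
    by_contra hu
    apply h
    rw [MulChar.map_nonunit χ (fun hd => hu ((Matrix.isUnit_iff_isUnit_det M).mpr hd)), zero_mul]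
  have h1 : ∑ M ∈ Finset.univ.filter (fun M : Matrix (Fin n) (Fin n) F => IsUnit M),
      χ M.det * lam M.trace
      = ∑ x : {M : Matrix (Fin n) (Fin n) F // IsUnit M}, χ (x : Matrix (Fin n) (Fin n) F).det *
          lam (x : Matrix (Fin n) (Fin n) F).trace :=
    Finset.sum_subtype _ (fun M => by simp) _
  rw [← h0, h1]
  exact Fintype.sum_equiv
    (⟨fun X => ⟨X.val, X.isUnit⟩, fun x => x.2.unit,
      fun X => Units.ext X.isUnit.unit_spec, fun x => Subtype.ext x.2.unit_spec⟩ :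
      GL (Fin n) F ≃ {M : Matrix (Fin n) (Fin n) F // IsUnit M}) _ _ (fun X => rfl)

theorem gauss_sum_GL_full_rank_identity {n : ℕ} {F : Type} [Field F] [Fintype F] [DecidableEq F]
    (χ : MulChar F ℂ) (lam : AddChar F ℂ) (hlam : lam ≠ 1) :
    ∑ X : GL (Fin n) F,
        χ ((X : Matrix (Fin n) (Fin n) F).det) *
          lam ((X : Matrix (Fin n) (Fin n) F).trace) =
      (Fintype.card F : ℂ) ^ (n * (n - 1) / 2) * (gaussSum χ lam) ^ n := by
  rw [sum_GL_eq]
  induction n with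
  | zero =>
    simp [Matrix.det_fin_zero, Matrix.trace_eq_zero_of_isEmpty]
    rw [show Fintype.card (Matrix (Fin 0) (Fin 0) F) = Fintype.card (Fin 0 → Fin 0 → F) from rfl]
    simp [Fintype.card_fun]
  | succ m ih =>
    rw [matrix_sum_succ χ lam hlam m, ih]
    have he : (m + 1) * ((m + 1) - 1) / 2 = m * (m - 1) / 2 + m := by
      rw [← Finset.sum_range_id, ← Finset.sum_range_id, Finset.sum_range_succ]
    rw [he, pow_add]
    ring
end

section
/- Let λ be a nontrivial additive character of F_q and let 1 ≤ u ≤ n. Then ∑_{X ∈ GL_n(F_q)} λ(tr_u X) = (-1)^u · q^{n(n-1)/2} · ∏_{i=1}^{n-u} (q^i - 1), where tr_u X = ∑_{i=1}^{u} x_{ii} is the partial trace of X = (x_{ij}). -/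
open Matrix Finset
set_option linter.unusedSectionVars false

section Aux

variable {F : Type} [Field F] [Fintype F] [DecidableEq F]

/-- The submodule of vectors whose coordinates in `[m, u)` vanish. -/
def Usub (n u m : ℕ) : Submodule F (Fin n → F) where
  carrier := {v | ∀ i : Fin n, m ≤ (i : ℕ) → (i : ℕ) < u → v i = 0}
  zero_mem' := by intro i _ _; rfl
  add_mem' := by intro a b ha hb i h1 h2; simp [ha i h1 h2, hb i h1 h2]
  smul_mem' := by intro c a ha i h1 h2; simp [ha i h1 h2]

/-- partial weight of a tuple of vectors -/
def pwt (n u : ℕ) {k : ℕ} (x : Fin k → Fin n → F) : F :=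
  ∑ j : Fin k, if h : (j : ℕ) < u ∧ (j : ℕ) < n then x j ⟨j, h.2⟩ else 0

open scoped Classical in
noncomputable def Sgl (lam : AddChar F ℂ) (n u k m : ℕ) : ℂ :=
  ∑ x : Fin k → Fin n → F,
    if LinearIndependent F x ∧ (∀ j : Fin k, x j ∈ Usub (F := F) n u m)
    then lam (pwt n u x) else 0

end Aux

section Helpers

variable {F : Type} [Field F] [Fintype F] [DecidableEq F]

open scoped Classical

lemma sum_addChar_submodule {M : Type} [AddCommGroup M] [Module F M] [Fintype M]
    (lam : AddChar F ℂ) (hlam : lam ≠ 1) (U : Submodule F M) (φ : M →ₗ[F] F)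
    (h : ∃ v ∈ U, φ v ≠ 0) : ∑ v : U, lam (φ v) = 0 := by
  have h2 : (lam.compAddMonoidHom ((φ.comp U.subtype).toAddMonoidHom)) ≠ 0 := by
    rw [AddChar.ne_zero_iff]
    obtain ⟨t, ht⟩ := AddChar.ne_one_iff.mp hlam
    obtain ⟨v, hvU, hv⟩ := h
    refine ⟨⟨(t * (φ v)⁻¹) • v, U.smul_mem _ hvU⟩, ?_⟩
    simpa [_root_.map_smul, smul_eq_mul, mul_assoc, inv_mul_cancel₀ hv] using ht
  have h3 := AddChar.sum_eq_zero_iff_ne_zero.mpr h2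
  simpa using h3

lemma card_span_eq {n k : ℕ} (x : Fin k → (Fin n → F)) (hx : LinearIndependent F x) :
    Fintype.card (Submodule.span F (Set.range x)) = Fintype.card F ^ k := by
  rw [Module.card_eq_pow_finrank (K := F), finrank_span_eq_card hx, Fintype.card_fin]

lemma sum_ite_mem_submodule {M : Type} [AddCommGroup M] [Module F M] [Fintype M]
    (U : Submodule F M) (f : M → ℂ) :
    ∑ v : M, (if v ∈ U then f v else 0) = ∑ v : U, f v := by
  classical
  rw [← Finset.subtype_univ (p := (· ∈ U)), Finset.sum_subtype_eq_sum_filter, Finset.sum_filter]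

end Helpers

section Main

variable {F : Type} [Field F] [Fintype F] [DecidableEq F]

open scoped Classical

lemma sum_ite_subtype {α : Type*} [Fintype α] (p : α → Prop) (f : α → ℂ) :
    ∑ a : α, (if p a then f a else 0) = ∑ a : {x // p x}, f (a : α) := by
  classical
  rw [← Finset.subtype_univ (p := p), Finset.sum_subtype_eq_sum_filter, Finset.sum_filter]

lemma Usub_mono {n u k : ℕ} {w : Fin n → F} (h : w ∈ Usub (F := F) n u k) :
    w ∈ Usub (F := F) n u (k+1) :=
  fun i h1 h2 => h i (le_trans (Nat.le_succ k) h1) h2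

lemma SglA (lam : AddChar F ℂ) (hlam : lam ≠ 1) {n u k : ℕ} (hk : k + 1 ≤ u) (hun : u ≤ n) :
    Sgl (F := F) lam n u (k+1) (k+1) = -((Fintype.card F : ℂ) ^ k) * Sgl lam n u k k := by
  classical
  have hku : k < u := hk
  have hkn : k < n := lt_of_lt_of_le hku hun
  set ck : Fin n := ⟨k, hkn⟩ with hck
  set G : (Fin (k+1) → Fin n → F) → ℂ := fun x =>
    if LinearIndependent F x ∧ (∀ j : Fin (k+1), x j ∈ Usub (F := F) n u (k+1))
    then lam (pwt n u x) else 0 with hG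
  have h1 : Sgl (F := F) lam n u (k+1) (k+1) =
      ∑ p : (Fin n → F) × (Fin k → Fin n → F), G (Fin.snoc p.2 p.1) := by
    rw [Sgl]
    exact (Fintype.sum_equiv (Fin.snocEquiv (fun _ => Fin n → F)) _ _ (fun p => rfl)).symm
  rw [h1, Fintype.sum_prod_type, Finset.sum_comm]
  have key : ∀ y : Fin k → Fin n → F, ∑ v : Fin n → F, G (Fin.snoc y v) =
      -((Fintype.card F : ℂ) ^ k) *
        (if LinearIndependent F y ∧ (∀ j : Fin k, y j ∈ Usub (F := F) n u k)
         then lam (pwt n u y) else 0) := by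
    intro y
    have hLI : ∀ v : Fin n → F, LinearIndependent F (Fin.snoc y v : Fin (k+1) → Fin n → F) ↔
        LinearIndependent F y ∧ v ∉ Submodule.span F (Set.range y) := fun v =>
      linearIndependent_fin_snoc
    have hmem : ∀ v : Fin n → F, (∀ j : Fin (k+1),
          (Fin.snoc y v : Fin (k+1) → Fin n → F) j ∈ Usub (F := F) n u (k+1)) ↔
        ((∀ j : Fin k, y j ∈ Usub (F := F) n u (k+1)) ∧ v ∈ Usub (F := F) n u (k+1)) := by
      intro v
      constructor
      · intro h
        refine ⟨fun j => ?_, ?_⟩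
        · have := h j.castSucc; rwa [Fin.snoc_castSucc] at this
        · have := h (Fin.last k); rwa [Fin.snoc_last] at this
      · rintro ⟨ha, hb⟩ j
        refine Fin.lastCases ?_ ?_ j
        · rwa [Fin.snoc_last]
        · intro i; rw [Fin.snoc_castSucc]; exact ha i
    have hwt : ∀ v : Fin n → F, pwt n u (Fin.snoc y v : Fin (k+1) → Fin n → F) =
        pwt n u y + v ck := by
      intro v
      simp only [pwt, Fin.sum_univ_castSucc, Fin.coe_castSucc, Fin.val_last, Fin.snoc_castSucc,
        Fin.snoc_last]
      rw [dif_pos ⟨hku, hkn⟩]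
    have step1 : ∀ v : Fin n → F, G (Fin.snoc y v) =
        (if LinearIndependent F y ∧ (∀ j : Fin k, y j ∈ Usub (F := F) n u (k+1)) then
          (if v ∈ Usub (F := F) n u (k+1) ∧ v ∉ Submodule.span F (Set.range y) then
             lam (pwt n u y) * lam (v ck) else 0)
         else 0) := by
      intro v
      rw [hG]
      simp only [hLI v, hmem v, hwt v, AddChar.map_add_eq_mul]
      by_cases hA : LinearIndependent F y
      <;> by_cases hB : ∀ j : Fin k, y j ∈ Usub (F := F) n u (k+1)
      <;> by_cases hC : v ∈ Usub (F := F) n u (k+1)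
      <;> by_cases hD : v ∉ Submodule.span F (Set.range y)
      <;> simp [hA, hB, hC, hD]
    simp only [step1]
    by_cases hQ : LinearIndependent F y ∧ (∀ j : Fin k, y j ∈ Usub (F := F) n u (k+1))
    · simp only [if_pos hQ]
      have pull : ∀ (c : Prop) (inst : Decidable c) (a b : ℂ),
          (if c then a * b else 0) = a * (if c then b else 0) := by
        intro c inst a b; split <;> simp
      simp_rw [pull, ← Finset.mul_sum]
      have hsp_le : Submodule.span F (Set.range y) ≤ Usub (F := F) n u (k+1) :=
        Submodule.span_le.mpr (by rintro _ ⟨j, rfl⟩; exact hQ.2 j)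
      have hsplit : ∀ v : Fin n → F,
          (if v ∈ Usub (F := F) n u (k+1) ∧ v ∉ Submodule.span F (Set.range y)
            then lam (v ck) else 0) =
          (if v ∈ Usub (F := F) n u (k+1) then lam (v ck) else 0) -
          (if v ∈ Submodule.span F (Set.range y) then lam (v ck) else 0) := by
        intro v
        by_cases h4 : v ∈ Submodule.span F (Set.range y)
        · have h3 : v ∈ Usub (F := F) n u (k+1) := hsp_le h4
          simp [h3, h4]
        · by_cases h3 : v ∈ Usub (F := F) n u (k+1) <;> simp [h3, h4]
      simp_rw [hsplit]
      rw [Finset.sum_sub_distrib, sum_ite_mem_submodule, sum_ite_mem_submodule]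
      have termA : ∑ v : Usub (F := F) n u (k+1), lam ((v : Fin n → F) ck) = 0 := by
        have := sum_addChar_submodule lam hlam (Usub (F := F) n u (k+1)) (LinearMap.proj ck)
          ⟨Pi.single ck 1, by
            constructor
            · intro i hi1 hi2
              have hckv : (ck : ℕ) = k := rfl
              have : i ≠ ck := by
                intro hcontra; rw [hcontra] at hi1; omega
              exact Pi.single_eq_of_ne this 1
            · simp⟩
        simpa using this
      rw [termA]
      by_cases hC : ∀ j : Fin k, y j ∈ Usub (F := F) n u k
      · have hco : ∀ j : Fin k, y j ck = 0 := fun j => hC j ck le_rfl hku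
        have termB : ∑ v : Submodule.span F (Set.range y), lam ((v : Fin n → F) ck) =
            ((Fintype.card F : ℂ) ^ k) := by
          have hker : ∀ v ∈ Submodule.span F (Set.range y), v ck = 0 := by
            intro v hv
            have : Submodule.span F (Set.range y) ≤ LinearMap.ker (LinearMap.proj (R := F)
                (φ := fun _ : Fin n => F) ck) := by
              rw [Submodule.span_le]
              rintro _ ⟨j, rfl⟩
              simpa using hco j
            simpa using this hv
          have : ∀ v : Submodule.span F (Set.range y), lam ((v : Fin n → F) ck) = 1 := by
            intro v; rw [hker v.1 v.2]; simp
          rw [Finset.sum_congr rfl (fun v _ => this v), Finset.sum_const, card_univ,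
            card_span_eq y hQ.1]
          simp
        rw [termB, if_pos ⟨hQ.1, hC⟩]
        ring
      · have termB : ∑ v : Submodule.span F (Set.range y), lam ((v : Fin n → F) ck) = 0 := by
          push_neg at hC
          obtain ⟨j0, hj0⟩ := hC
          have : ∃ i0 : Fin n, k ≤ (i0 : ℕ) ∧ (i0 : ℕ) < u ∧ y j0 i0 ≠ 0 := by
            by_contra hcon
            push_neg at hcon
            exact hj0 (fun i h1 h2 => hcon i h1 h2)
          obtain ⟨i0, hi1, hi2, hi3⟩ := this
          have hi0 : (i0 : ℕ) = k := by
            rcases Nat.lt_or_ge (i0 : ℕ) (k+1) with h | h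
            · omega
            · exact absurd (hQ.2 j0 i0 h hi2) hi3
          have hi0' : i0 = ck := Fin.ext (by simp [hck, hi0])
          have := sum_addChar_submodule lam hlam (Submodule.span F (Set.range y))
            (LinearMap.proj ck)
            ⟨y j0, Submodule.subset_span (Set.mem_range_self j0), by
              simpa [hi0'] using hi3⟩
          simpa using this
        rw [termB, if_neg (fun h => hC h.2)]
        ring
    · have hQ' : ¬ (LinearIndependent F y ∧ (∀ j : Fin k, y j ∈ Usub (F := F) n u k)) :=
        fun h => hQ ⟨h.1, fun j => Usub_mono (h.2 j)⟩
      simp [hQ, hQ']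
  rw [Finset.sum_congr rfl (fun y _ => key y), ← Finset.mul_sum, Sgl]

end Main

section Main2

variable {F : Type} [Field F] [Fintype F] [DecidableEq F]

open scoped Classical

lemma SglB (lam : AddChar F ℂ) {n u k : ℕ} (hk : u ≤ k) (hkn : k < n) :
    Sgl (F := F) lam n u (k+1) u =
      ((Fintype.card F : ℂ) ^ n - (Fintype.card F : ℂ) ^ k) * Sgl lam n u k u := by
  classical
  have htop : ∀ v : Fin n → F, v ∈ Usub (F := F) n u u :=
    fun v i h1 h2 => absurd h2 (not_lt.mpr h1)
  set G : (Fin (k+1) → Fin n → F) → ℂ := fun x =>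
    if LinearIndependent F x ∧ (∀ j : Fin (k+1), x j ∈ Usub (F := F) n u u)
    then lam (pwt n u x) else 0 with hG
  have h1 : Sgl (F := F) lam n u (k+1) u =
      ∑ p : (Fin n → F) × (Fin k → Fin n → F), G (Fin.snoc p.2 p.1) := by
    rw [Sgl]
    exact (Fintype.sum_equiv (Fin.snocEquiv (fun _ => Fin n → F)) _ _ (fun p => rfl)).symm
  rw [h1, Fintype.sum_prod_type, Finset.sum_comm]
  have key : ∀ y : Fin k → Fin n → F, ∑ v : Fin n → F, G (Fin.snoc y v) =
      ((Fintype.card F : ℂ) ^ n - (Fintype.card F : ℂ) ^ k) *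
        (if LinearIndependent F y ∧ (∀ j : Fin k, y j ∈ Usub (F := F) n u u)
         then lam (pwt n u y) else 0) := by
    intro y
    have hLI : ∀ v : Fin n → F, LinearIndependent F (Fin.snoc y v : Fin (k+1) → Fin n → F) ↔
        LinearIndependent F y ∧ v ∉ Submodule.span F (Set.range y) := fun v =>
      linearIndependent_fin_snoc
    have hwt : ∀ v : Fin n → F, pwt n u (Fin.snoc y v : Fin (k+1) → Fin n → F) =
        pwt n u y := by
      intro v
      simp only [pwt, Fin.sum_univ_castSucc, Fin.coe_castSucc, Fin.val_last, Fin.snoc_castSucc,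
        Fin.snoc_last]
      rw [dif_neg (fun h => absurd h.1 (not_lt.mpr hk)), add_zero]
    have step1 : ∀ v : Fin n → F, G (Fin.snoc y v) =
        (if LinearIndependent F y then
          (if v ∉ Submodule.span F (Set.range y) then lam (pwt n u y) else 0)
         else 0) := by
      intro v
      rw [hG]
      simp only [hLI v, hwt v]
      by_cases hA : LinearIndependent F y
      <;> by_cases hD : v ∉ Submodule.span F (Set.range y)
      <;> simp [hA, hD, htop]
    simp only [step1]
    by_cases hA : LinearIndependent F y
    · simp only [if_pos hA, if_pos (show LinearIndependent F y ∧
          ∀ j : Fin k, y j ∈ Usub (F := F) n u u from ⟨hA, fun j => htop _⟩)]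
      have hsplit : ∀ v : Fin n → F,
          (if v ∉ Submodule.span F (Set.range y) then lam (pwt n u y) else 0) =
          lam (pwt n u y) -
            (if v ∈ Submodule.span F (Set.range y) then lam (pwt n u y) else 0) := by
        intro v
        by_cases h4 : v ∈ Submodule.span F (Set.range y) <;> simp [h4]
      simp_rw [hsplit]
      rw [Finset.sum_sub_distrib, sum_ite_mem_submodule, Finset.sum_const, Finset.sum_const,
        card_univ, card_univ, card_span_eq y hA]
      have hcard : Fintype.card (Fin n → F) = Fintype.card F ^ n := by
        rw [Fintype.card_fun, Fintype.card_fin]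
      rw [hcard]
      push_cast
      ring
    · simp only [if_neg hA, if_neg (show ¬(LinearIndependent F y ∧
          ∀ j : Fin k, y j ∈ Usub (F := F) n u u) from fun h => hA h.1)]
      simp
  rw [Finset.sum_congr rfl (fun y _ => key y), ← Finset.mul_sum, Sgl]

lemma Sgl_zero (lam : AddChar F ℂ) (n u m : ℕ) : Sgl (F := F) lam n u 0 m = 1 := by
  classical
  rw [Sgl]
  rw [Fintype.sum_unique]
  rw [if_pos ⟨linearIndependent_empty_type, fun j => j.elim0⟩]
  simp [pwt]

lemma SglE (lam : AddChar F ℂ) (hlam : lam ≠ 1) {n u : ℕ} (hun : u ≤ n) :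
    ∀ k, k ≤ u → Sgl (F := F) lam n u k k =
      (-1 : ℂ) ^ k * (Fintype.card F : ℂ) ^ (∑ i ∈ range k, i) := by
  intro k
  induction k with
  | zero => intro _; simpa using Sgl_zero (F := F) lam n u 0
  | succ k ih =>
    intro h
    rw [SglA lam hlam h hun, ih (le_trans (Nat.le_succ k) h), Finset.sum_range_succ, pow_add]
    ring

lemma SglF (lam : AddChar F ℂ) (hlam : lam ≠ 1) {n u : ℕ} (hun : u ≤ n) :
    ∀ d, u + d ≤ n → Sgl (F := F) lam n u (u + d) u =
      (-1 : ℂ) ^ u * (Fintype.card F : ℂ) ^ (∑ i ∈ range u, i) *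
        ∏ j ∈ Ico u (u + d), ((Fintype.card F : ℂ) ^ n - (Fintype.card F : ℂ) ^ j) := by
  intro d
  induction d with
  | zero => intro _; simpa using SglE lam hlam hun u le_rfl
  | succ d ih =>
    intro h
    have h1 : u + d < n := by omega
    rw [show u + (d + 1) = (u + d) + 1 from rfl, SglB lam (Nat.le_add_right u d) h1,
      ih (by omega), Finset.prod_Ico_succ_top (Nat.le_add_right u d)]
    ring

end Main2

theorem partial_trace_sum_GL {n : ℕ} {F : Type} [Field F] [Fintype F] [DecidableEq F]
    (lam : AddChar F ℂ) (hlam : lam ≠ 1) (u : ℕ) (hu1 : 1 ≤ u) (hun : u ≤ n) :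
    ∑ X : GL (Fin n) F,
        lam (∑ i ∈ Finset.univ.filter (fun i : Fin n => (i : ℕ) < u),
          (X : Matrix (Fin n) (Fin n) F) i i) =
      (-1 : ℂ) ^ u * (Fintype.card F : ℂ) ^ (n * (n - 1) / 2) *
        ∏ i ∈ Finset.Icc 1 (n - u), ((Fintype.card F : ℂ) ^ i - 1) := by
  classical
  set q : ℂ := (Fintype.card F : ℂ) with hq
  have htop : ∀ v : Fin n → F, v ∈ Usub (F := F) n u u :=
    fun v i h1 h2 => absurd h2 (not_lt.mpr h1)
  -- weight identification
  have hw : ∀ x : Fin n → Fin n → F,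
      (∑ i ∈ Finset.univ.filter (fun i : Fin n => (i : ℕ) < u), x i i) = pwt n u x := by
    intro x
    rw [pwt, Finset.sum_filter]
    refine Finset.sum_congr rfl (fun j _ => ?_)
    by_cases hj : (j : ℕ) < u
    · rw [if_pos hj, dif_pos ⟨hj, j.isLt⟩]
    · rw [if_neg hj, dif_neg (fun hcon => hj hcon.1)]
  -- condition identification
  have hcond : ∀ x : Fin n → Fin n → F,
      (LinearIndependent F x ∧ ∀ j : Fin n, x j ∈ Usub (F := F) n u u) ↔
        IsUnit (Matrix.of x) := by
    intro x
    constructor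
    · intro h
      exact Matrix.linearIndependent_rows_iff_isUnit.mp h.1
    · intro h
      exact ⟨Matrix.linearIndependent_rows_iff_isUnit.mpr h, fun j => htop _⟩
  have hLHS : Sgl (F := F) lam n u n u = ∑ X : GL (Fin n) F,
      lam (∑ i ∈ Finset.univ.filter (fun i : Fin n => (i : ℕ) < u),
        (X : Matrix (Fin n) (Fin n) F) i i) := by
    rw [Sgl]
    have hsw : ∀ x : Fin n → Fin n → F,
        (if LinearIndependent F x ∧ (∀ j : Fin n, x j ∈ Usub (F := F) n u u)
         then lam (pwt n u x) else 0) =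
        (if IsUnit (Matrix.of x) then
          lam (∑ i ∈ Finset.univ.filter (fun i : Fin n => (i : ℕ) < u), x i i) else 0) := by
      intro x
      rw [hw x]
      by_cases h : IsUnit (Matrix.of x)
      · rw [if_pos h, if_pos ((hcond x).mpr h)]
      · rw [if_neg h, if_neg (fun hc => h ((hcond x).mp hc))]
    rw [Finset.sum_congr rfl (fun x _ => hsw x), ← Finset.sum_filter]
    refine Finset.sum_nbij' (fun x => if h : IsUnit (Matrix.of x) then h.unit else 1)
      (fun X : GL (Fin n) F => ((X : Matrix (Fin n) (Fin n) F) : Fin n → Fin n → F))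
      (fun a _ => Finset.mem_univ _) ?_ ?_ ?_ ?_
    · intro X _
      refine Finset.mem_filter.mpr ?_
      exact ⟨Finset.mem_univ _, X.isUnit⟩
    · intro x hx
      rw [Finset.mem_filter] at hx
      rw [dif_pos hx.2]
      exact hx.2.unit_spec
    · intro X _
      have h : IsUnit (Matrix.of ((X : Matrix (Fin n) (Fin n) F) : Fin n → Fin n → F)) :=
        X.isUnit
      rw [dif_pos h]
      exact Units.ext h.unit_spec
    · intro x hx
      rw [Finset.mem_filter] at hx
      have hv : ((if h : IsUnit (Matrix.of x) then h.unit else 1 : GL (Fin n) F) :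
          Matrix (Fin n) (Fin n) F) = Matrix.of x := by
        rw [dif_pos hx.2]
        exact hx.2.unit_spec
      rw [hv]
      rfl
  rw [← hLHS]
  have hval := SglF (F := F) lam hlam hun (n - u) (by omega)
  rw [show u + (n - u) = n from by omega] at hval
  rw [hval]
  -- algebra
  have hfac : ∀ j ∈ Finset.Ico u n, q ^ n - q ^ j = q ^ j * (q ^ (n - j) - 1) := by
    intro j hj
    rw [Finset.mem_Ico] at hj
    rw [mul_sub, mul_one, ← pow_add, show j + (n - j) = n from by omega]
  rw [Finset.prod_congr rfl hfac, Finset.prod_mul_distrib, Finset.prod_pow_eq_pow_sum]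
  have hexp : (∑ i ∈ range u, i) + (∑ j ∈ Finset.Ico u n, j) = n * (n - 1) / 2 := by
    rw [Finset.range_eq_Ico, Finset.sum_Ico_consecutive _ (Nat.zero_le u) hun,
      ← Finset.range_eq_Ico, Finset.sum_range_id]
  have hre : ∏ j ∈ Finset.Ico u n, (q ^ (n - j) - 1) =
      ∏ i ∈ Finset.Icc 1 (n - u), (q ^ i - 1) := by
    refine Finset.prod_nbij' (fun j => n - j) (fun i => n - i) ?_ ?_ ?_ ?_ ?_
    · intro a ha; rw [Finset.mem_Ico] at ha; rw [Finset.mem_Icc]; omega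
    · intro b hb; rw [Finset.mem_Icc] at hb; rw [Finset.mem_Ico]; omega
    · intro a ha; rw [Finset.mem_Ico] at ha; omega
    · intro b hb; rw [Finset.mem_Icc] at hb; omega
    · intro a _; rfl
  rw [hre, ← hexp, pow_add]
  ring
end

section
/- Let χ be a nontrivial multiplicative character of F_q^*, λ a nontrivial additive character of F_q, and 1 ≤ u < n. Then ∑_{X ∈ GL_n(F_q)} χ(det X) λ(tr_u X) = 0, where tr_u X is the sum of the first u diagonal entries of X. -/
open Matrix Finset

theorem partial_trace_sum_GL_nontrivial_char {n : ℕ} {F : Type} [Field F] [Fintype F]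
    [DecidableEq F] (χ : MulChar F ℂ) (hχ : χ ≠ 1)
    (lam : AddChar F ℂ) (hlam : lam ≠ 1) (u : ℕ) (hu1 : 1 ≤ u) (hun : u < n) :
    ∑ X : GL (Fin n) F,
        χ ((X : Matrix (Fin n) (Fin n) F).det) *
          lam (∑ i ∈ Finset.univ.filter (fun i : Fin n => (i : ℕ) < u),
            (X : Matrix (Fin n) (Fin n) F) i i) = 0 := by
  obtain ⟨a, ha⟩ : ∃ a : Fˣ, χ a ≠ 1 := by
    by_contra h
    push_neg at h
    exact hχ (MulChar.eq_one_iff.mpr h)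
  set i0 : Fin n := ⟨u, hun⟩ with hi0
  set d : Fin n → F := fun i => if i = i0 then (a : F) else 1 with hd
  have hdet : (Matrix.diagonal d).det = (a : F) := by
    simp [Matrix.det_diagonal, hd]
  have hDu : IsUnit (Matrix.diagonal d) := by
    rw [Matrix.isUnit_iff_isUnit_det, hdet]
    exact a.isUnit
  set D : GL (Fin n) F := hDu.unit with hDdef
  have hDval : (D : Matrix (Fin n) (Fin n) F) = Matrix.diagonal d := rfl
  set S := ∑ X : GL (Fin n) F,
        χ ((X : Matrix (Fin n) (Fin n) F).det) *
          lam (∑ i ∈ Finset.univ.filter (fun i : Fin n => (i : ℕ) < u),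
            (X : Matrix (Fin n) (Fin n) F) i i) with hS
  have key : χ (a : F) * S = S := by
    rw [hS, Finset.mul_sum]
    refine Fintype.sum_bijective (fun X => D * X) (Group.mulLeft_bijective D) _ _ ?_
    intro X
    have h1 : ((D * X : GL (Fin n) F) : Matrix (Fin n) (Fin n) F)
        = Matrix.diagonal d * (X : Matrix (Fin n) (Fin n) F) := by
      simp [hDval]
    rw [h1, Matrix.det_mul, hdet, _root_.map_mul]
    have h2 : ∀ i ∈ Finset.univ.filter (fun i : Fin n => (i : ℕ) < u),
        (Matrix.diagonal d * (X : Matrix (Fin n) (Fin n) F)) i i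
          = (X : Matrix (Fin n) (Fin n) F) i i := by
      intro i hi
      rw [Finset.mem_filter] at hi
      have hne : i ≠ i0 := by
        intro h
        rw [h] at hi
        exact absurd hi.2 (by simp [hi0])
      rw [Matrix.diagonal_mul]
      simp [hd, hne]
    rw [Finset.sum_congr rfl h2]
    ring
  have h0 : (χ (a : F) - 1) * S = 0 := by
    rw [sub_mul, one_mul, key, sub_self]
  rcases mul_eq_zero.mp h0 with h | h
  · exact absurd (sub_eq_zero.mp h) ha
  · exact h
end

section
/- Uniformly over all nonzero matrices U ∈ M_n(F_q) and nontrivial additive characters λ of F_q, the bound |∑_{X ∈ GL_n(F_q)} λ(tr(U^t X))| ≤ C_n · q^{n² - n} holds, where C_n is a constant depending only on n. Concretely, |∑_{X ∈ GL_n(F_q)} λ(tr(U^t X))| ≤ q^{n(n-1)/2} · ∏_{i=1}^{n-1}(q^i - 1) ≤ q^{n² - n}. -/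
open Matrix Finset

private lemma gauss_prod_helper (q : ℝ) (m : ℕ) :
    q ^ m * ∏ i ∈ Finset.range m, (q ^ m - q ^ i) =
      q ^ ((m+1) * m / 2) * ∏ i ∈ Finset.Icc 1 m, (q ^ i - 1) := by
  have h0 : ∀ i ∈ Finset.range m, q ^ m - q ^ i = q ^ i * (q ^ (m - i) - 1) := by
    intro i hi
    rw [Finset.mem_range] at hi
    rw [mul_sub, mul_one, ← pow_add]
    congr 2
    omega
  rw [Finset.prod_congr rfl h0, Finset.prod_mul_distrib, Finset.prod_pow_eq_pow_sum]
  have h1 : ∏ i ∈ Finset.range m, (q ^ (m - i) - 1) = ∏ i ∈ Finset.Icc 1 m, (q ^ i - 1) := by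
    rw [← Finset.Ico_add_one_right_eq_Icc, Finset.prod_Ico_eq_prod_range]
    rw [← Finset.prod_range_reflect]
    norm_num
    apply Finset.prod_congr rfl
    intro i hi
    rw [Finset.mem_range] at hi
    congr 2
    omega
  rw [h1, ← mul_assoc, ← pow_add]
  congr 2
  have h4 : (∑ i ∈ Finset.range (m+1), i) = (m+1)*m/2 := by
    simpa using Finset.sum_range_id (m+1)
  have h5 : ∑ i ∈ Finset.range (m+1), i = (∑ i ∈ Finset.range m, i) + m :=
    Finset.sum_range_succ _ m
  omega

theorem gauss_sum_GL_bound {n : ℕ} {F : Type} [Field F] [Fintype F] [DecidableEq F]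
    (lam : AddChar F ℂ) (hlam : lam ≠ 1)
    (U : Matrix (Fin n) (Fin n) F) (hU : U ≠ 0) :
    ‖(∑ X : GL (Fin n) F,
        lam ((Uᵀ * (X : Matrix (Fin n) (Fin n) F)).trace))‖ ≤
      (Fintype.card F : ℝ) ^ (n * (n - 1) / 2) *
        ∏ i ∈ Finset.Icc 1 (n - 1), ((Fintype.card F : ℝ) ^ i - 1) ∧
    (Fintype.card F : ℝ) ^ (n * (n - 1) / 2) *
        ∏ i ∈ Finset.Icc 1 (n - 1), ((Fintype.card F : ℝ) ^ i - 1) ≤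
      (Fintype.card F : ℝ) ^ (n ^ 2 - n) := by
  classical
  obtain _ | m := n
  · exact absurd (Subsingleton.elim U 0) hU
  set q := Fintype.card F with hq
  have hq1 : 1 ≤ q := Fintype.card_pos
  have hq1R : (1:ℝ) ≤ (q:ℝ) := by exact_mod_cast hq1
  -- find a nonzero column of U
  have hex : ∃ i j, U i j ≠ 0 := by
    by_contra h
    push_neg at h
    exact hU (by ext i j; exact h i j)
  obtain ⟨i0, j0, hU0⟩ := hex
  set u : Fin (m+1) → F := fun i => U i j0 with hu_def
  have hu : u i0 ≠ 0 := hU0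
  -- the dot-product linear functional and its kernel
  let phiu : (Fin (m+1) → F) →ₗ[F] F :=
    { toFun := fun c => u ⬝ᵥ c
      map_add' := fun x y => dotProduct_add u x y
      map_smul' := fun a x => by simp [dotProduct_smul] }
  have hphiu : ∀ c, phiu c = u ⬝ᵥ c := fun _ => rfl
  have hWrank : Module.finrank F ↥(LinearMap.ker phiu) = m := by
    have hsurj : Function.Surjective phiu := by
      intro t
      refine ⟨Pi.single i0 ((u i0)⁻¹ * t), ?_⟩
      rw [hphiu, dotProduct_single, ← mul_assoc, mul_inv_cancel₀ hu, one_mul]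
    have h1 : LinearMap.range phiu = ⊤ := LinearMap.range_eq_top.mpr hsurj
    have h2 := LinearMap.finrank_range_add_finrank_ker phiu
    rw [h1, finrank_top, Module.finrank_self, Module.finrank_fintype_fun_eq_card,
      Fintype.card_fin] at h2
    omega
  -- the full character sum over all vectors vanishes
  have h_sum_all : ∑ c : (Fin (m+1) → F), lam (u ⬝ᵥ c) = 0 := by
    have hne : (lam.compAddMonoidHom phiu.toAddMonoidHom) ≠ 0 := by
      rw [AddChar.ne_zero_iff]
      obtain ⟨t, ht⟩ := AddChar.ne_one_iff.mp hlam
      refine ⟨Pi.single i0 ((u i0)⁻¹ * t), ?_⟩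
      simpa [hphiu, dotProduct_single, ← mul_assoc, mul_inv_cancel₀ hu] using ht
    simpa [hphiu] using AddChar.sum_eq_zero_iff_ne_zero.mpr hne
  have h_abs : ∀ x : F, ‖lam x‖ = 1 := by
    intro x
    exact AddChar.norm_apply lam x
  -- step 1 : sum over GL = sum over invertible matrices
  have step1 : ∑ X : GL (Fin (m+1)) F, lam ((Uᵀ * (X : Matrix (Fin (m+1)) (Fin (m+1)) F)).trace)
      = ∑ M ∈ univ.filter (fun M : Matrix (Fin (m+1)) (Fin (m+1)) F => IsUnit M),
          lam ((Uᵀ * M).trace) := by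
    refine Finset.sum_nbij'
      (i := fun (X : GL (Fin (m+1)) F) => (X : Matrix (Fin (m+1)) (Fin (m+1)) F))
      (j := fun M => if h : IsUnit M then (h.unit : GL (Fin (m+1)) F) else 1)
      (fun X _ => by simp [Units.isUnit]) (fun M hM => mem_univ _) ?_ ?_ (fun X _ => rfl)
    · intro X _
      have h : IsUnit ((X : Matrix (Fin (m+1)) (Fin (m+1)) F)) := X.isUnit
      show (if h : IsUnit ((X : Matrix (Fin (m+1)) (Fin (m+1)) F)) then h.unit else 1) = X
      rw [dif_pos h]
      exact Units.ext h.unit_spec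
    · intro M hM
      rw [mem_filter] at hM
      show ((if h : IsUnit M then h.unit else 1 : GL (Fin (m+1)) F)
        : Matrix (Fin (m+1)) (Fin (m+1)) F) = M
      rw [dif_pos hM.2]
      exact hM.2.unit_spec
  -- step 2 : fiber the sum over the matrix with column j0 zeroed out
  have step2 : ∑ M ∈ univ.filter (fun M : Matrix (Fin (m+1)) (Fin (m+1)) F => IsUnit M),
          lam ((Uᵀ * M).trace)
      = ∑ N : Matrix (Fin (m+1)) (Fin (m+1)) F,
          ∑ M ∈ (univ.filter (fun M : Matrix (Fin (m+1)) (Fin (m+1)) F => IsUnit M)).filter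
            (fun M => M.updateCol j0 0 = N), lam ((Uᵀ * M).trace) :=
    (Finset.sum_fiberwise _ _ _).symm
  -- trace decomposition
  have htr : ∀ (N : Matrix (Fin (m+1)) (Fin (m+1)) F), (∀ i, N i j0 = 0) →
      ∀ c, (Uᵀ * (N.updateCol j0 c)).trace = (Uᵀ * N).trace + u ⬝ᵥ c := by
    intro N hN0 c
    have e : ∀ (M : Matrix (Fin (m+1)) (Fin (m+1)) F),
        (Uᵀ * M).trace = ∑ j, ∑ i, U i j * M i j := by
      intro M
      simp [Matrix.trace, Matrix.mul_apply, Matrix.diag, Matrix.transpose_apply]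
    rw [e, e]
    conv_lhs => rw [Finset.sum_eq_sum_sdiff_singleton_add (mem_univ j0)]
    conv_rhs => rw [Finset.sum_eq_sum_sdiff_singleton_add (mem_univ j0)]
    have h1 : ∑ j ∈ univ \ {j0}, ∑ i, U i j * (N.updateCol j0 c) i j
        = ∑ j ∈ univ \ {j0}, ∑ i, U i j * N i j := by
      refine Finset.sum_congr rfl fun j hj => Finset.sum_congr rfl fun i _ => ?_
      rw [Matrix.updateCol_ne (by simpa using (Finset.mem_sdiff.mp hj).2)]
    have h2 : ∑ i, U i j0 * (N.updateCol j0 c) i j0 = u ⬝ᵥ c := by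
      simp [Matrix.updateCol_self, dotProduct, hu_def]
    have h3 : ∑ i, U i j0 * N i j0 = (0 : F) := by simp [hN0]
    rw [h1, h2, h3]
    ring
  -- the predicate singling out the fibers with a nonzero contribution
  set P : Matrix (Fin (m+1)) (Fin (m+1)) F → Prop := fun N =>
      (∀ i, N i j0 = 0) ∧
      (LinearIndependent F fun k : Fin m => fun i => N i (j0.succAbove k)) ∧
      (∀ k : Fin m, u ⬝ᵥ (fun i => N i (j0.succAbove k)) = 0) with hP
  -- main pointwise estimate for each fiber
  have claim : ∀ N : Matrix (Fin (m+1)) (Fin (m+1)) F,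
      ‖(∑ M ∈ (univ.filter
          (fun M : Matrix (Fin (m+1)) (Fin (m+1)) F => IsUnit M)).filter
          (fun M => M.updateCol j0 0 = N), lam ((Uᵀ * M).trace))‖
        ≤ if P N then (q:ℝ)^m else 0 := by
    intro N
    by_cases hN0 : ∀ i, N i j0 = 0
    swap
    · have hempty : (univ.filter
          (fun M : Matrix (Fin (m+1)) (Fin (m+1)) F => IsUnit M)).filter
          (fun M => M.updateCol j0 0 = N) = ∅ := by
        refine Finset.filter_eq_empty_iff.mpr (fun {M} hM heq => hN0 (fun i => ?_))
        rw [← heq]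
        simp [Matrix.updateCol_self]
      rw [hempty, Finset.sum_empty, norm_zero]
      split_ifs <;> positivity
    -- now: column j0 of N vanishes
    set L : (Fin (m+1) → F) →ₗ[F] F := (LinearMap.proj j0).comp (Matrix.cramer N) with hL
    have hLc : ∀ c, L c = (N.updateCol j0 c).det := fun c => rfl
    -- reindex the fiber by the new column
    have hre : ∑ M ∈ (univ.filter
          (fun M : Matrix (Fin (m+1)) (Fin (m+1)) F => IsUnit M)).filter
          (fun M => M.updateCol j0 0 = N), lam ((Uᵀ * M).trace)
        = ∑ c ∈ univ.filter (fun c : Fin (m+1) → F => ¬ L c = 0),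
            lam ((Uᵀ * (N.updateCol j0 c)).trace) := by
      have hback : ∀ M : Matrix (Fin (m+1)) (Fin (m+1)) F, M.updateCol j0 0 = N →
          N.updateCol j0 (fun i => M i j0) = M := by
        intro M hM
        ext i j
        by_cases hj : j = j0
        · subst hj; rw [Matrix.updateCol_self]
        · rw [Matrix.updateCol_ne hj, ← hM, Matrix.updateCol_ne hj]
      refine Finset.sum_nbij' (i := fun M => (fun i => M i j0))
        (j := fun c => N.updateCol j0 c) ?_ ?_ ?_ ?_ ?_
      · intro M hM
        simp only [mem_filter, mem_univ, true_and] at hM ⊢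
        rw [hLc, hback M hM.2]
        intro h
        exact (Matrix.isUnit_iff_isUnit_det M).mp hM.1 |>.ne_zero (by simpa using h)
      · intro c hc
        simp only [mem_filter, mem_univ, true_and] at hc ⊢
        constructor
        · exact (Matrix.isUnit_iff_isUnit_det _).mpr
            (isUnit_iff_ne_zero.mpr (by rw [← hLc]; exact hc))
        · ext i j
          by_cases hj : j = j0
          · subst hj; simp [Matrix.updateCol_self, hN0]
          · rw [Matrix.updateCol_ne hj, Matrix.updateCol_ne hj]
      · intro M hM
        simp only [mem_filter, mem_univ, true_and] at hM
        exact hback M hM.2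
      · intro c hc
        funext i
        simp [Matrix.updateCol_self]
      · intro M hM
        simp only [mem_filter, mem_univ, true_and] at hM
        rw [hback M hM.2]
    -- factor out the constant character value
    have hfac : ∑ c ∈ univ.filter (fun c : Fin (m+1) → F => ¬ L c = 0),
          lam ((Uᵀ * (N.updateCol j0 c)).trace)
        = lam ((Uᵀ * N).trace) *
            ∑ c ∈ univ.filter (fun c : Fin (m+1) → F => ¬ L c = 0), lam (u ⬝ᵥ c) := by
      rw [Finset.mul_sum]
      refine Finset.sum_congr rfl fun c _ => ?_
      rw [htr N hN0 c, AddChar.map_add_eq_mul]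
    have habs : ‖(∑ M ∈ (univ.filter
          (fun M : Matrix (Fin (m+1)) (Fin (m+1)) F => IsUnit M)).filter
          (fun M => M.updateCol j0 0 = N), lam ((Uᵀ * M).trace))‖
        = ‖(∑ c ∈ univ.filter (fun c : Fin (m+1) → F => ¬ L c = 0),
            lam (u ⬝ᵥ c))‖ := by
      rw [hre, hfac, norm_mul, h_abs, one_mul]
    rw [habs]
    -- split off the kernel sum
    have hsplit : ∑ c ∈ univ.filter (fun c : Fin (m+1) → F => ¬ L c = 0), lam (u ⬝ᵥ c)
        = - ∑ c ∈ univ.filter (fun c : Fin (m+1) → F => L c = 0), lam (u ⬝ᵥ c) := by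
      have h := Finset.sum_filter_add_sum_filter_not univ
        (fun c : Fin (m+1) → F => L c = 0) (fun c => lam (u ⬝ᵥ c))
      rw [h_sum_all] at h
      linear_combination h
    by_cases hperp : ∀ c, L c = 0 → u ⬝ᵥ c = 0
    · by_cases hc0ex : ∃ c0, ¬ L c0 = 0
      swap
      · push_neg at hc0ex
        have : univ.filter (fun c : Fin (m+1) → F => ¬ L c = 0) = ∅ :=
          Finset.filter_eq_empty_iff.mpr (fun {c} _ h => h (hc0ex c))
        rw [this, Finset.sum_empty, norm_zero]
        split_ifs <;> positivity
      obtain ⟨c0, hc0⟩ := hc0ex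
      -- here P N holds
      have hPN : P N := by
        refine ⟨hN0, ?_, ?_⟩
        · have hunit : IsUnit (N.updateCol j0 c0) :=
            (Matrix.isUnit_iff_isUnit_det _).mpr (isUnit_iff_ne_zero.mpr
              (by rw [← hLc]; exact hc0))
          have hli : LinearIndependent F (fun j => (N.updateCol j0 c0)ᵀ j) :=
            Matrix.linearIndependent_cols_iff_isUnit.mpr hunit
          have hli2 := hli.comp j0.succAbove (Fin.succAbove_right_injective)
          have heq : (fun j => (N.updateCol j0 c0)ᵀ j) ∘ j0.succAbove
              = (fun k : Fin m => fun i => N i (j0.succAbove k)) := by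
            funext k i
            show (N.updateCol j0 c0) i (j0.succAbove k) = N i (j0.succAbove k)
            rw [Matrix.updateCol_ne (Fin.succAbove_ne j0 k)]
          rwa [heq] at hli2
        · intro k
          apply hperp
          rw [hLc]
          apply Matrix.det_zero_of_column_eq (Fin.ne_succAbove j0 k)
          intro r
          rw [Matrix.updateCol_self, Matrix.updateCol_ne (Fin.succAbove_ne j0 k)]
      rw [if_pos hPN, hsplit]
      -- the kernel sum is a sum of ones
      have hsum : ∑ c ∈ univ.filter (fun c : Fin (m+1) → F => L c = 0), lam (u ⬝ᵥ c)
          = ((univ.filter (fun c : Fin (m+1) → F => L c = 0)).card : ℂ) := by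
        rw [Finset.sum_congr rfl (fun c hc => ?_), Finset.sum_const, nsmul_eq_mul, mul_one]
        rw [hperp c (by simpa using (Finset.mem_filter.mp hc).2), AddChar.map_zero_eq_one]
      rw [hsum, norm_neg, Complex.norm_natCast]
      have hcard : (univ.filter (fun c : Fin (m+1) → F => L c = 0)).card
          = Fintype.card ↥(LinearMap.ker L) := by
        rw [← Fintype.card_subtype]
        exact Fintype.card_congr (Equiv.subtypeEquivRight (by simp [LinearMap.mem_ker]))
      have hrank : Module.finrank F ↥(LinearMap.ker L) ≤ m := by
        have hne : LinearMap.ker L < ⊤ := lt_top_iff_ne_top.mpr (fun h => hc0 (by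
          have : c0 ∈ LinearMap.ker L := h ▸ Submodule.mem_top
          simpa [LinearMap.mem_ker] using this))
        have hlt := Submodule.finrank_lt (K := F) hne.ne
        rw [Module.finrank_fintype_fun_eq_card, Fintype.card_fin] at hlt
        omega
      rw [hcard, Module.card_eq_pow_finrank (K := F) (V := ↥(LinearMap.ker L))]
      push_cast
      exact pow_le_pow_right₀ hq1R hrank
    · -- the character is nontrivial on the kernel: the sum vanishes
      push_neg at hperp
      obtain ⟨c1, hc1, hc1u⟩ := hperp
      have hker0 : ∑ c ∈ univ.filter (fun c : Fin (m+1) → F => L c = 0), lam (u ⬝ᵥ c) = 0 := by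
        have hconv : ∑ c ∈ univ.filter (fun c : Fin (m+1) → F => L c = 0), lam (u ⬝ᵥ c)
            = ∑ x : ↥(LinearMap.ker L), lam (u ⬝ᵥ (x : Fin (m+1) → F)) := by
          refine Finset.sum_subtype _ (fun x => ?_) _
          simp [LinearMap.mem_ker]
        rw [hconv]
        have hne : (lam.compAddMonoidHom
            ((phiu.comp (LinearMap.ker L).subtype).toAddMonoidHom)) ≠ 0 := by
          rw [AddChar.ne_zero_iff]
          obtain ⟨t, ht⟩ := AddChar.ne_one_iff.mp hlam
          refine ⟨⟨((u ⬝ᵥ c1)⁻¹ * t) • c1,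
            Submodule.smul_mem _ _ (LinearMap.mem_ker.mpr hc1)⟩, ?_⟩
          have hv : phiu (((u ⬝ᵥ c1)⁻¹ * t) • c1) = t := by
            rw [LinearMap.map_smul, hphiu, smul_eq_mul, mul_comm (u ⬝ᵥ c1)⁻¹ t, mul_assoc,
              inv_mul_cancel₀ hc1u, mul_one]
          simpa [hv] using ht
        have hz := AddChar.sum_eq_zero_iff_ne_zero.mpr hne
        rw [← hz]
        refine Finset.sum_congr rfl fun x _ => ?_
        simp [hphiu]
      rw [hsplit, hker0, neg_zero, norm_zero]
      split_ifs <;> positivity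
  -- counting the good fibers
  have hcount : (univ.filter P).card ≤ ∏ i : Fin m, (q ^ m - q ^ (i : ℕ)) := by
    have key : Fintype.card ↥(univ.filter P) ≤
        Fintype.card { s : Fin m → ↥(LinearMap.ker phiu) // LinearIndependent F s } := by
      have hg : ∀ N ∈ univ.filter P, ∀ k : Fin m,
          (fun i => N i (j0.succAbove k)) ∈ LinearMap.ker phiu := by
        intro N hN k
        rw [mem_filter] at hN
        rw [LinearMap.mem_ker, hphiu]
        exact hN.2.2.2 k
      refine Fintype.card_le_of_injective (fun N =>
        ⟨fun k => ⟨fun i => (N : Matrix (Fin (m+1)) (Fin (m+1)) F) i (j0.succAbove k),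
          hg N N.2 k⟩, ?_⟩) ?_
      · have hLI := (Finset.mem_filter.mp N.2).2.2.1
        exact hLI.of_comp (LinearMap.ker phiu).subtype
      · intro N1 N2 h
        rw [Subtype.mk.injEq] at h
        apply Subtype.ext
        ext i j
        by_cases hj : j = j0
        · subst hj
          rw [(Finset.mem_filter.mp N1.2).2.1 i, (Finset.mem_filter.mp N2.2).2.1 i]
        · obtain ⟨k, hk⟩ := Fin.exists_succAbove_eq hj
          have h' := congrFun h k
          rw [Subtype.mk.injEq] at h'
          have h'' := congrFun h' i
          rw [← hk]
          exact h''
    have hcnt : Fintype.card { s : Fin m → ↥(LinearMap.ker phiu) // LinearIndependent F s }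
        = ∏ i : Fin m, (q ^ m - q ^ (i : ℕ)) := by
      have hc := card_linearIndependent (K := F) (V := ↥(LinearMap.ker phiu)) (k := m)
        (by rw [hWrank])
      rw [Nat.card_eq_fintype_card] at hc
      rw [hc, hWrank]
    have hcc : (univ.filter P).card = Fintype.card ↥(univ.filter P) :=
      (Fintype.card_coe _).symm
    rw [hcc]
    exact key.trans (le_of_eq hcnt)
  -- assemble everything
  constructor
  · calc ‖(∑ X : GL (Fin (m+1)) F,
          lam ((Uᵀ * (X : Matrix (Fin (m+1)) (Fin (m+1)) F)).trace))‖
        ≤ ∑ N : Matrix (Fin (m+1)) (Fin (m+1)) F, ‖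
            (∑ M ∈ (univ.filter
              (fun M : Matrix (Fin (m+1)) (Fin (m+1)) F => IsUnit M)).filter
              (fun M => M.updateCol j0 0 = N), lam ((Uᵀ * M).trace))‖ := by
          rw [step1, step2]
          exact norm_sum_le _ _
      _ ≤ ∑ N : Matrix (Fin (m+1)) (Fin (m+1)) F, (if P N then (q:ℝ)^m else 0) :=
          Finset.sum_le_sum (fun N _ => claim N)
      _ = ((univ.filter P).card : ℝ) * (q:ℝ)^m := by
          rw [← Finset.sum_filter, Finset.sum_const, nsmul_eq_mul]
      _ ≤ ((∏ i : Fin m, (q ^ m - q ^ (i : ℕ)) : ℕ) : ℝ) * (q:ℝ)^m := by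
          apply mul_le_mul_of_nonneg_right _ (by positivity)
          exact_mod_cast hcount
      _ = (q:ℝ)^m * ∏ i ∈ Finset.range m, ((q:ℝ)^m - (q:ℝ)^i) := by
          rw [mul_comm]
          congr 1
          rw [← Fin.prod_univ_eq_prod_range (fun i => (q:ℝ)^m - (q:ℝ)^i) m, Nat.cast_prod]
          refine Finset.prod_congr rfl fun i _ => ?_
          rw [Nat.cast_sub (Nat.pow_le_pow_right hq1 i.isLt.le)]
          push_cast
          ring
      _ = (q:ℝ) ^ ((m+1) * (m+1-1) / 2) *
            ∏ i ∈ Finset.Icc 1 (m+1-1), ((q:ℝ) ^ i - 1) := by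
          rw [gauss_prod_helper]
          norm_num
  · simp only [Nat.add_sub_cancel]
    have hfac1 : ∀ i ∈ Finset.Icc 1 m, (0:ℝ) ≤ (q:ℝ) ^ i - 1 := by
      intro i _
      have := one_le_pow₀ hq1R (n := i)
      linarith
    calc (q:ℝ) ^ ((m+1) * m / 2) * ∏ i ∈ Finset.Icc 1 m, ((q:ℝ) ^ i - 1)
        ≤ (q:ℝ) ^ ((m+1) * m / 2) * ∏ i ∈ Finset.Icc 1 m, (q:ℝ) ^ i := by
          apply mul_le_mul_of_nonneg_left _ (by positivity)
          exact Finset.prod_le_prod hfac1 (fun i _ => by linarith)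
      _ = (q:ℝ) ^ ((m+1) * m / 2) * (q:ℝ) ^ (∑ i ∈ Finset.Icc 1 m, i) := by
          rw [Finset.prod_pow_eq_pow_sum]
      _ = (q:ℝ) ^ ((m+1) * m / 2 + ∑ i ∈ Finset.Icc 1 m, i) := by rw [← pow_add]
      _ = (q:ℝ) ^ ((m+1)^2 - (m+1)) := by
          congr 1
          have hs : ∑ i ∈ Finset.range (m+1), i = ∑ i ∈ Finset.Icc 1 m, i := by
            rw [Finset.range_eq_Ico, Finset.sum_eq_sum_Ico_succ_bot (Nat.succ_pos m),
              Nat.succ_eq_add_one, Finset.Ico_add_one_right_eq_Icc]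
            simp
          have e2 : (∑ i ∈ Finset.range (m+1), i) * 2 = (m+1) * m := by
            simpa using Finset.sum_range_id_mul_two (m+1)
          have e3 : (m+1) * m / 2 = ∑ i ∈ Finset.range (m+1), i := by
            simpa using (Finset.sum_range_id (m+1)).symm
          have hp : (m+1)^2 = (m+1)*(m+1) := pow_two _
          have e4 : (m+1)*(m+1) = (m+1)*m + (m+1) := by ring
          rw [hp, e3, ← hs]
          omega
end

section
/- Let λ be a nontrivial additive character of F_q, U ∈ M_n(F_q) of rank u < n, and 1 ≤ u. Then the Gauss sum over the special linear group satisfies ∑_{X ∈ SL_n(F_q)} λ(tr(U^t X)) = (1/(q-1)) · ∑_{Y ∈ GL_n(F_q)} λ(tr(U^t Y)). -/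
open Matrix Finset

lemma exists_fixing_g {n : ℕ} {F : Type} [Field F] [Fintype F] [DecidableEq F]
    (U : Matrix (Fin n) (Fin n) F) (hdet : Uᵀ.det = 0) (c : Fˣ) :
    ∃ g : GL (Fin n) F, ((g : Matrix (Fin n) (Fin n) F)).det = (c : F) ∧
      Uᵀ * (g : Matrix (Fin n) (Fin n) F) = Uᵀ := by
  obtain ⟨v, hv0, hv⟩ := (Matrix.exists_mulVec_eq_zero_iff).2 hdet
  obtain ⟨i, hi⟩ : ∃ i, v i ≠ 0 := by
    by_contra h
    push_neg at h
    exact hv0 (funext h)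
  set w : Fin n → F := fun j => if j = i then ((c : F) - 1) / v i else 0 with hw
  have hwv : w ⬝ᵥ v = (c : F) - 1 := by
    simp [hw, dotProduct, Finset.sum_ite_eq', div_mul_cancel₀ _ hi]
  set M : Matrix (Fin n) (Fin n) F := 1 + vecMulVec v w with hM
  have hMdet : M.det = (c : F) := by
    rw [hM, vecMulVec_eq Unit, det_one_add_replicateCol_mul_replicateRow, hwv]
    ring
  have hMfix : Uᵀ * M = Uᵀ := by
    have : Uᵀ * vecMulVec v w = 0 := by
      ext a b
      simp only [mul_apply, vecMulVec_apply, Matrix.zero_apply]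
      calc ∑ k, Uᵀ a k * (v k * w b) = (∑ k, Uᵀ a k * v k) * w b := by
            rw [Finset.sum_mul]; congr 1; ext k; ring
        _ = 0 := by
            have : (Uᵀ *ᵥ v) a = 0 := by rw [hv]; rfl
            rw [show ∑ k, Uᵀ a k * v k = (Uᵀ *ᵥ v) a from rfl, this, zero_mul]
    rw [hM, Matrix.mul_add, Matrix.mul_one, this, add_zero]
  refine ⟨Matrix.GeneralLinearGroup.mkOfDetNeZero M ?_, hMdet, hMfix⟩
  rw [hMdet]; exact c.ne_zero

theorem gauss_sum_SL_eq_avg_GL {n : ℕ} {F : Type} [Field F] [Fintype F] [DecidableEq F]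
    (lam : AddChar F ℂ) (hlam : lam ≠ 1)
    (U : Matrix (Fin n) (Fin n) F) (u : ℕ) (hu : U.rank = u) (hu1 : 1 ≤ u) (hun : u < n) :
    ∑ X : Matrix.SpecialLinearGroup (Fin n) F,
        lam ((Uᵀ * (X : Matrix (Fin n) (Fin n) F)).trace) =
      (1 / ((Fintype.card F : ℂ) - 1)) *
        ∑ Y : GL (Fin n) F, lam ((Uᵀ * (Y : Matrix (Fin n) (Fin n) F)).trace) := by
  -- det Uᵀ = 0 since rank < n
  have hdet : Uᵀ.det = 0 := by
    by_contra h
    have hrk : Uᵀ.rank = n := by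
      have := Matrix.rank_of_isUnit Uᵀ ((Matrix.isUnit_iff_isUnit_det Uᵀ).2 (isUnit_iff_ne_zero.2 h))
      simpa using this
    rw [Matrix.rank_transpose, hu] at hrk
    omega
  choose g hgdet hgfix using exists_fixing_g U hdet
  -- the bijection Fˣ × SL ≃ GL
  set f : Fˣ × Matrix.SpecialLinearGroup (Fin n) F → GL (Fin n) F :=
    fun p => g p.1 * Matrix.SpecialLinearGroup.toGL p.2 with hf
  have hbij : Function.Bijective f := by
    constructor
    · rintro ⟨c, X⟩ ⟨c', X'⟩ h
      have hdetf : ∀ (c : Fˣ) (X : Matrix.SpecialLinearGroup (Fin n) F),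
          ((f (c, X) : Matrix (Fin n) (Fin n) F)).det = (c : F) := by
        intro c X
        simp only [hf, Units.val_mul, Matrix.det_mul, hgdet]
        have : ((Matrix.SpecialLinearGroup.toGL X : GL (Fin n) F) :
            Matrix (Fin n) (Fin n) F).det = 1 := X.2
        rw [this, mul_one]
      have hc : c = c' := by
        have := hdetf c X
        rw [h, hdetf c' X'] at this
        exact Units.ext this.symm
      subst hc
      have : Matrix.SpecialLinearGroup.toGL X = Matrix.SpecialLinearGroup.toGL X' := by
        have := mul_left_cancel h
        exact this
      refine Prod.ext rfl ?_
      have hinj : Function.Injective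
          (Matrix.SpecialLinearGroup.toGL (n := Fin n) (R := F)) := by
        intro a b hab
        ext i j
        have : ((Matrix.SpecialLinearGroup.toGL a : GL (Fin n) F) :
            Matrix (Fin n) (Fin n) F) = ((Matrix.SpecialLinearGroup.toGL b : GL (Fin n) F) :
            Matrix (Fin n) (Fin n) F) := by rw [hab]
        exact congrFun (congrFun this i) j
      exact hinj this
    · intro Y
      set c : Fˣ := Matrix.GeneralLinearGroup.det Y with hc
      have hXdet : (((g c)⁻¹ * Y : GL (Fin n) F) : Matrix (Fin n) (Fin n) F).det = 1 := by
        have h1 : Matrix.GeneralLinearGroup.det ((g c)⁻¹ * Y) = c⁻¹ * c := by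
          rw [_root_.map_mul, map_inv]
          congr 1
          · congr 1
            exact Units.ext (hgdet c)
        have : Matrix.GeneralLinearGroup.det ((g c)⁻¹ * Y) = 1 := by
          rw [h1, inv_mul_cancel]
        have h2 := congrArg (Units.val) this
        simpa using h2
      refine ⟨⟨c, ⟨(((g c)⁻¹ * Y : GL (Fin n) F) : Matrix (Fin n) (Fin n) F), hXdet⟩⟩, ?_⟩
      simp only [hf]
      have : Matrix.SpecialLinearGroup.toGL
          (⟨(((g c)⁻¹ * Y : GL (Fin n) F) : Matrix (Fin n) (Fin n) F), hXdet⟩ :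
            Matrix.SpecialLinearGroup (Fin n) F) = (g c)⁻¹ * Y := by
        apply Units.ext
        rfl
      rw [this, ← mul_assoc, mul_inv_cancel, one_mul]
  -- rewrite the GL sum
  have hsum : ∑ Y : GL (Fin n) F, lam ((Uᵀ * (Y : Matrix (Fin n) (Fin n) F)).trace) =
      ((Fintype.card F : ℂ) - 1) *
        ∑ X : Matrix.SpecialLinearGroup (Fin n) F,
          lam ((Uᵀ * (X : Matrix (Fin n) (Fin n) F)).trace) := by
    rw [← Function.Bijective.sum_comp hbij
      (fun Y => lam ((Uᵀ * (Y : Matrix (Fin n) (Fin n) F)).trace))]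
    rw [Fintype.sum_prod_type]
    have hterm : ∀ (c : Fˣ) (X : Matrix.SpecialLinearGroup (Fin n) F),
        lam ((Uᵀ * ((f (c, X) : GL (Fin n) F) : Matrix (Fin n) (Fin n) F)).trace) =
          lam ((Uᵀ * (X : Matrix (Fin n) (Fin n) F)).trace) := by
      intro c X
      congr 1
      have : ((f (c, X) : GL (Fin n) F) : Matrix (Fin n) (Fin n) F) =
          ((g c : GL (Fin n) F) : Matrix (Fin n) (Fin n) F) *
            (X : Matrix (Fin n) (Fin n) F) := rfl
      rw [this, ← Matrix.mul_assoc, hgfix]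
    calc ∑ c : Fˣ, ∑ X : Matrix.SpecialLinearGroup (Fin n) F,
          lam ((Uᵀ * ((f (c, X) : GL (Fin n) F) : Matrix (Fin n) (Fin n) F)).trace)
        = ∑ _c : Fˣ, ∑ X : Matrix.SpecialLinearGroup (Fin n) F,
          lam ((Uᵀ * (X : Matrix (Fin n) (Fin n) F)).trace) := by
          apply Finset.sum_congr rfl; intro c _
          apply Finset.sum_congr rfl; intro X _
          exact hterm c X
      _ = (Fintype.card Fˣ : ℂ) * ∑ X : Matrix.SpecialLinearGroup (Fin n) F,
          lam ((Uᵀ * (X : Matrix (Fin n) (Fin n) F)).trace) := by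
          rw [Finset.sum_const, Finset.card_univ, nsmul_eq_mul]
      _ = ((Fintype.card F : ℂ) - 1) * ∑ X : Matrix.SpecialLinearGroup (Fin n) F,
          lam ((Uᵀ * (X : Matrix (Fin n) (Fin n) F)).trace) := by
          congr 1
          rw [Fintype.card_units]
          have h1 : 1 ≤ Fintype.card F := Fintype.card_pos
          push_cast [Nat.cast_sub h1]
          ring
  rw [hsum]
  have hne : ((Fintype.card F : ℂ) - 1) ≠ 0 := by
    have h2 : 2 ≤ Fintype.card F := Fintype.one_lt_card
    have : (Fintype.card F : ℂ) ≠ 1 := by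
      intro h
      have : (Fintype.card F : ℂ) = ((1 : ℕ) : ℂ) := by simpa using h
      have h3 : Fintype.card F = 1 := Nat.cast_injective this
      omega
    exact sub_ne_zero.2 this
  field_simp
end

section
/- Let λ be a nontrivial additive character of F_q and U ∈ M_n(F_q) of rank u < n. Then ∑_{X ∈ SL_n(F_q)} λ(tr(U^t X)) = (-1)^u · q^{n(n-1)/2} · ∏_{i=2}^{n-u} (q^i - 1), where the empty product (when n - u < 2) equals 1. -/
open Matrix Finset Module Submodule

set_option maxHeartbeats 1000000
set_option linter.unusedSectionVars false

variable {F : Type} [Field F] [Fintype F] [DecidableEq F]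

omit [Fintype F] [DecidableEq F] in
lemma aux_surj {V : Type*} [AddCommGroup V] [Module F V] {ψ : V →ₗ[F] F} (hψ : ψ ≠ 0) :
    Function.Surjective ψ := by
  obtain ⟨v, hv⟩ : ∃ v, ψ v ≠ 0 := by
    by_contra h; push_neg at h; exact hψ (LinearMap.ext fun v => h v)
  intro a
  exact ⟨(a / ψ v) • v, by rw [LinearMap.map_smul, smul_eq_mul, div_mul_cancel₀ _ hv]⟩

omit [DecidableEq F] in
lemma aux_char_sum {V : Type*} [AddCommGroup V] [Module F V] [Fintype V]
    (lam : AddChar F ℂ) (hlam : lam ≠ 1) {ψ : V →ₗ[F] F} (hψ : ψ ≠ 0) :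
    ∑ x : V, lam (ψ x) = 0 := by
  have hne : (lam.compAddMonoidHom ψ.toAddMonoidHom) ≠ 0 := by
    rw [AddChar.ne_zero_iff]
    obtain ⟨a, ha⟩ := AddChar.ne_one_iff.mp hlam
    obtain ⟨v, hv⟩ := aux_surj hψ a
    exact ⟨v, by simpa [hv] using ha⟩
  simpa using AddChar.sum_eq_zero_iff_ne_zero.mpr hne

omit [Fintype F] [DecidableEq F] in
lemma aux_multiple {V : Type*} [AddCommGroup V] [Module F V] {φ ψ : V →ₗ[F] F} (hφ : φ ≠ 0)
    (h : ∀ v, φ v = 0 → ψ v = 0) : ∃ c : F, ψ = c • φ := by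
  obtain ⟨v₀, hv₀⟩ := aux_surj hφ (1 : F)
  refine ⟨ψ v₀, LinearMap.ext fun v => ?_⟩
  have hker : φ (v - φ v • v₀) = 0 := by
    simp [map_sub, LinearMap.map_smul, hv₀, smul_eq_mul]
  have := h _ hker
  rw [map_sub, LinearMap.map_smul, sub_eq_zero] at this
  rw [this]
  simp [hv₀, smul_eq_mul, mul_comm]

omit [DecidableEq F] in
open scoped Classical in
lemma aux_inner {V : Type*} [AddCommGroup V] [Module F V] [Fintype V]
    (lam : AddChar F ℂ) (W : Submodule F V) (ψ : V →ₗ[F] F) (c : ℂ) :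
    ∑ y : V, (if y ∈ W then 0 else c * lam (ψ y)) =
      c * ((∑ y : V, lam (ψ y)) - ∑ y : W, lam (ψ (y : V))) := by
  have h1 : ∑ y : V, (if y ∈ W then (0:ℂ) else c * lam (ψ y))
      = ∑ y : V, (c * lam (ψ y) - if y ∈ W then c * lam (ψ y) else 0) := by
    apply Finset.sum_congr rfl; intro y _; split_ifs <;> ring
  rw [h1, Finset.sum_sub_distrib, ← Finset.mul_sum]
  have h2 : ∑ y : V, (if y ∈ W then c * lam (ψ y) else 0)
      = ∑ y : W, c * lam (ψ (y : V)) := by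
    rw [← Finset.sum_filter]
    rw [Finset.sum_subtype (p := fun y => y ∈ W) (Finset.univ.filter (fun y : V => y ∈ W))
      (by simp) (fun y : V => c * lam (ψ y))]
  rw [h2, ← Finset.mul_sum, mul_sub]

set_option maxHeartbeats 2000000 in
open scoped Classical in
lemma key_sum (lam : AddChar F ℂ) (hlam : lam ≠ 1) :
    ∀ (m : ℕ) (V : Type) [AddCommGroup V] [Module F V] [Fintype V]
      (φ : Fin m → (V →ₗ[F] F)),
      ∑ x : Fin m → V, (if LinearIndependent F x then lam (∑ i, φ i (x i)) else 0) =
        (-1 : ℂ) ^ (finrank F (span F (Set.range φ))) *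
          (Fintype.card F : ℂ) ^ (∑ i ∈ range (finrank F (span F (Set.range φ))), i) *
          ∏ j ∈ Ico (finrank F (span F (Set.range φ))) m,
            ((Fintype.card F : ℂ) ^ (finrank F V) - (Fintype.card F : ℂ) ^ j) := by
  intro m
  induction m with
  | zero =>
    intro V _ _ _ φ
    rw [Fintype.sum_unique]
    rw [if_pos (linearIndependent_empty_type)]
    have hr : finrank F ↥(span F (Set.range φ)) = 0 := by
      rw [Set.range_eq_empty, span_empty]
      exact finrank_bot F (V →ₗ[F] F)
    rw [hr]
    simp
  | succ m ih =>
    intro V _ _ _ φ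
    set L : V →ₗ[F] F := φ (Fin.last m) with hLdef
    set φ' : Fin m → (V →ₗ[F] F) := fun i => φ i.castSucc with hφ'def
    have hrange : Set.range φ = insert L (Set.range φ') := by
      ext ψ; constructor
      · rintro ⟨i, rfl⟩
        rcases Fin.eq_castSucc_or_eq_last i with ⟨j, rfl⟩ | rfl
        · exact Set.mem_insert_of_mem _ ⟨j, rfl⟩
        · exact Set.mem_insert _ _
      · rintro (rfl | ⟨j, rfl⟩)
        · exact ⟨Fin.last m, rfl⟩
        · exact ⟨j.castSucc, rfl⟩
    have hcard : ∀ x : Fin m → V, LinearIndependent F x →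
        (Fintype.card ↥(span F (Set.range x)) : ℂ) = (Fintype.card F : ℂ) ^ m := by
      intro x hx
      rw [card_eq_pow_finrank (K := F) (V := ↥(span F (Set.range x))),
        finrank_span_eq_card hx, Fintype.card_fin]
      push_cast
      ring
    have h1 : ∑ x : Fin (m+1) → V, (if LinearIndependent F x then lam (∑ i, φ i (x i)) else 0)
        = ∑ x : Fin m → V, ∑ y : V,
            (if LinearIndependent F (Fin.snoc x y : Fin (m+1) → V)
              then lam (∑ i, φ i ((Fin.snoc x y : Fin (m+1) → V) i)) else 0) := by
      rw [← Equiv.sum_comp (Fin.snocEquiv (fun _ => V))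
        (fun x : Fin (m+1) → V => if LinearIndependent F x then lam (∑ i, φ i (x i)) else 0)]
      rw [Fintype.sum_prod_type]
      rw [Finset.sum_comm]
      rfl
    have h2 : ∀ (x : Fin m → V) (y : V),
        (if LinearIndependent F (Fin.snoc x y : Fin (m+1) → V)
          then lam (∑ i, φ i ((Fin.snoc x y : Fin (m+1) → V) i)) else 0)
        = (if LinearIndependent F x then
            (if y ∈ span F (Set.range x) then 0
              else lam (∑ i, φ' i (x i)) * lam (L y)) else 0) := by
      intro x y
      have hsnoc : LinearIndependent F (Fin.snoc x y : Fin (m+1) → V) ↔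
          (LinearIndependent F x ∧ y ∉ span F (Set.range x)) := linearIndependent_fin_snoc
      have hsum : (∑ i, φ i ((Fin.snoc x y : Fin (m+1) → V) i)) = (∑ i, φ' i (x i)) + L y := by
        rw [Fin.sum_univ_castSucc]
        simp [hφ'def, hLdef]
      simp only [hsnoc, hsum]
      by_cases hx : LinearIndependent F x <;> by_cases hy : y ∈ span F (Set.range x) <;>
        simp [hx, hy, AddChar.map_add_eq_mul]
    rw [h1]
    simp_rw [h2]
    by_cases hL0 : L = 0
    · -- last functional is zero
      have h3 : ∀ x : Fin m → V,
          (∑ y : V, (if LinearIndependent F x then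
            (if y ∈ span F (Set.range x) then 0
              else lam (∑ i, φ' i (x i)) * lam (L y)) else 0))
          = (if LinearIndependent F x then lam (∑ i, φ' i (x i)) else 0) *
              ((Fintype.card V : ℂ) - (Fintype.card F : ℂ) ^ m) := by
        intro x
        by_cases hx : LinearIndependent F x
        · simp only [if_pos hx]
          rw [aux_inner lam (span F (Set.range x)) L (lam (∑ i, φ' i (x i)))]
          have e1 : ∑ y : V, lam (L y) = (Fintype.card V : ℂ) := by
            rw [Finset.sum_congr rfl (fun y _ => by rw [hL0, LinearMap.zero_apply,
              AddChar.map_zero_eq_one])]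
            simp [Finset.card_univ]
          have e2 : ∑ y : ↥(span F (Set.range x)), lam (L (y : V)) = (Fintype.card F : ℂ) ^ m := by
            rw [Finset.sum_congr rfl (fun y _ => by rw [hL0, LinearMap.zero_apply,
              AddChar.map_zero_eq_one])]
            simp only [Finset.sum_const, Finset.card_univ, nsmul_eq_mul, mul_one]
            exact hcard x hx
          rw [e1, e2]
        · simp [hx]
      simp_rw [h3]
      rw [← Finset.sum_mul]
      rw [ih V φ']
      have hspan : span F (Set.range φ) = span F (Set.range φ') := by
        rw [hrange, hL0, span_insert_zero]
      rw [hspan]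
      have hum : finrank F (span F (Set.range φ')) ≤ m :=
        (finrank_range_le_card φ').trans_eq (Fintype.card_fin m)
      rw [Finset.prod_Ico_succ_top hum]
      have hV : (Fintype.card V : ℂ) = (Fintype.card F : ℂ) ^ (finrank F V) := by
        rw [card_eq_pow_finrank (K := F) (V := V)]; push_cast; ring
      rw [hV]
      ring
    · -- last functional nonzero
      set K : Submodule F V := LinearMap.ker L with hKdef
      have h3 : ∀ x : Fin m → V,
          (∑ y : V, (if LinearIndependent F x then
            (if y ∈ span F (Set.range x) then 0
              else lam (∑ i, φ' i (x i)) * lam (L y)) else 0))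
          = (if (LinearIndependent F x ∧ ∀ i, x i ∈ K) then
              (-((Fintype.card F : ℂ) ^ m)) * lam (∑ i, φ' i (x i)) else 0) := by
        intro x
        by_cases hx : LinearIndependent F x
        · simp only [if_pos hx]
          rw [aux_inner lam (span F (Set.range x)) L (lam (∑ i, φ' i (x i)))]
          rw [aux_char_sum lam hlam hL0]
          by_cases hker : ∀ i, x i ∈ K
          · have hle : span F (Set.range x) ≤ K :=
              span_le.mpr (by rintro v ⟨i, rfl⟩; exact hker i)
            have e2 : ∑ y : ↥(span F (Set.range x)), lam (L (y : V)) =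
                (Fintype.card F : ℂ) ^ m := by
              rw [Finset.sum_congr rfl (fun y _ => by
                rw [show L (y : V) = 0 from LinearMap.mem_ker.mp (hle y.2),
                  AddChar.map_zero_eq_one])]
              simp only [Finset.sum_const, Finset.card_univ, nsmul_eq_mul, mul_one]
              exact hcard x hx
            rw [e2, if_pos ⟨hx, hker⟩]
            ring
          · have e2 : ∑ y : ↥(span F (Set.range x)), lam (L (y : V)) = 0 := by
              push_neg at hker
              obtain ⟨i, hi⟩ := hker
              have hres : (L.domRestrict (span F (Set.range x))) ≠ 0 := by
                intro h0
                have h00 := DFunLike.congr_fun h0 ⟨x i, subset_span (Set.mem_range_self i)⟩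
                simp only [LinearMap.domRestrict_apply, LinearMap.zero_apply] at h00
                exact hi (LinearMap.mem_ker.mpr h00)
              exact aux_char_sum lam hlam hres
            rw [e2, if_neg (by tauto)]
            ring
        · simp [hx]
      simp_rw [h3]
      have h4 : ∑ x : Fin m → V, (if (LinearIndependent F x ∧ ∀ i, x i ∈ K) then
            (-((Fintype.card F : ℂ) ^ m)) * lam (∑ i, φ' i (x i)) else 0)
          = (-((Fintype.card F : ℂ) ^ m)) * ∑ x : Fin m → V,
              (if (LinearIndependent F x ∧ ∀ i, x i ∈ K) then lam (∑ i, φ' i (x i)) else 0) := by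
        rw [Finset.mul_sum]
        exact Finset.sum_congr rfl (fun x _ => by split_ifs <;> ring)
      rw [h4]
      set ψ : Fin m → (↥K →ₗ[F] F) := fun i => (φ' i).domRestrict K with hψdef
      have h5 : ∑ x : Fin m → V,
            (if (LinearIndependent F x ∧ ∀ i, x i ∈ K) then lam (∑ i, φ' i (x i)) else 0)
          = ∑ z : Fin m → ↥K, (if LinearIndependent F z then lam (∑ i, ψ i (z i)) else 0) := by
        have hcomm : ∀ x : Fin m → V,
            (if (LinearIndependent F x ∧ ∀ i, x i ∈ K) then lam (∑ i, φ' i (x i)) else 0)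
            = (if (∀ i, x i ∈ K) then
                (if LinearIndependent F x then lam (∑ i, φ' i (x i)) else 0) else 0) := by
          intro x
          by_cases hA : LinearIndependent F x <;> by_cases hB : (∀ i, x i ∈ K) <;>
            simp [hA, hB]
        simp_rw [hcomm]
        rw [← Finset.sum_filter]
        rw [Finset.sum_subtype (p := fun x : Fin m → V => ∀ i, x i ∈ K)
          (Finset.univ.filter (fun x : Fin m → V => ∀ i, x i ∈ K)) (by simp)
          (fun x : Fin m → V => if LinearIndependent F x then lam (∑ i, φ' i (x i)) else 0)]
        refine Fintype.sum_equiv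
          ⟨fun x => fun i => (⟨x.1 i, x.2 i⟩ : ↥K),
            fun z => ⟨fun i => (z i : V), fun i => (z i).2⟩,
            fun x => rfl, fun z => rfl⟩ _ _ ?_
        intro x
        simp only [Equiv.coe_fn_mk]
        exact if_congr (LinearMap.linearIndependent_iff
          (v := fun i => (⟨x.1 i, x.2 i⟩ : ↥K)) K.subtype (ker_subtype K)) rfl rfl
      rw [h5, ih ↥K ψ]
      have hdim : finrank F V = finrank F ↥K + 1 := by
        have h6 := L.finrank_range_add_finrank_ker
        rw [LinearMap.range_eq_top.mpr (aux_surj hL0), finrank_top, finrank_self] at h6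
        rw [← hKdef] at h6
        omega
      have hLmem : L ∈ span F (Set.range φ) := subset_span ⟨Fin.last m, rfl⟩
      have hu : finrank F (span F (Set.range φ)) = finrank F (span F (Set.range ψ)) + 1 := by
        set ρ : (V →ₗ[F] F) →ₗ[F] (↥K →ₗ[F] F) := (K.subtype).dualMap with hρdef
        set W : Submodule F (V →ₗ[F] F) := span F (Set.range φ) with hWdef
        set σ : ↥W →ₗ[F] (↥K →ₗ[F] F) := ρ.comp W.subtype with hσdef
        have hrn := LinearMap.finrank_range_add_finrank_ker (K := F) (V := ↥W) (V₂ := ↥K →ₗ[F] F) σ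
        have hran : LinearMap.range σ = span F (Set.range ψ) := by
          rw [hσdef, LinearMap.range_comp, Submodule.range_subtype, hWdef, Submodule.map_span]
          rw [hrange, Set.image_insert_eq]
          have hρL : ρ L = 0 := by
            ext k
            exact LinearMap.mem_ker.mp k.2
          rw [hρL, span_insert_zero]
          congr 1
          rw [← Set.range_comp]
          rfl
        have tW : ↥W := ⟨L, hLmem⟩
        have htne : (⟨L, hLmem⟩ : ↥W) ≠ 0 := by
          intro ht
          exact hL0 (by simpa using congrArg Subtype.val ht)
        have hkerσ : LinearMap.ker σ = span F {(⟨L, hLmem⟩ : ↥W)} := by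
          ext w
          simp only [LinearMap.mem_ker, mem_span_singleton]
          constructor
          · intro h0
            obtain ⟨c, hc⟩ := aux_multiple hL0 (fun v hv => by
              have h00 := DFunLike.congr_fun h0 (⟨v, LinearMap.mem_ker.mpr hv⟩ : ↥K)
              exact h00)
            exact ⟨c, Subtype.ext (by simpa using hc.symm)⟩
          · rintro ⟨c, rfl⟩
            ext k
            have : L ((k : V)) = 0 := LinearMap.mem_ker.mp k.2
            simp [hσdef, hρdef, this]
        rw [hran, hkerσ, finrank_span_singleton (K := F) (V := ↥W) htne] at hrn
        omega
      rw [hu, hdim, Finset.sum_range_succ]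
      have hu'm : finrank F (span F (Set.range ψ)) ≤ m :=
        (finrank_range_le_card ψ).trans_eq (Fintype.card_fin m)
      set u' : ℕ := finrank F (span F (Set.range ψ)) with hu'def
      set d' : ℕ := finrank F ↥K with hd'def
      have hfac : ∀ j ∈ Ico u' m,
          (Fintype.card F : ℂ) ^ (d' + 1) - (Fintype.card F : ℂ) ^ (j + 1)
          = (Fintype.card F : ℂ) * ((Fintype.card F : ℂ) ^ d' - (Fintype.card F : ℂ) ^ j) := by
        intro j _
        rw [pow_succ, pow_succ]
        ring
      have hprod : ∏ j ∈ Ico (u' + 1) (m + 1),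
            ((Fintype.card F : ℂ) ^ (d' + 1) - (Fintype.card F : ℂ) ^ j)
          = (Fintype.card F : ℂ) ^ (m - u') *
            ∏ j ∈ Ico u' m, ((Fintype.card F : ℂ) ^ d' - (Fintype.card F : ℂ) ^ j) := by
        rw [← Finset.prod_Ico_add'
          (fun j => ((Fintype.card F : ℂ) ^ (d' + 1) - (Fintype.card F : ℂ) ^ j)) u' m 1]
        rw [Finset.prod_congr rfl hfac, Finset.prod_mul_distrib, Finset.prod_const, Nat.card_Ico]
      rw [hprod]
      have hqq : (Fintype.card F : ℂ) ^ ((∑ i ∈ range u', i) + u') *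
            (Fintype.card F : ℂ) ^ (m - u')
          = (Fintype.card F : ℂ) ^ (∑ i ∈ range u', i) * (Fintype.card F : ℂ) ^ m := by
        rw [← pow_add, ← pow_add]
        congr 1
        omega
      calc (-((Fintype.card F : ℂ) ^ m)) * ((-1 : ℂ) ^ u' *
              (Fintype.card F : ℂ) ^ (∑ i ∈ range u', i) *
              ∏ j ∈ Ico u' m, ((Fintype.card F : ℂ) ^ d' - (Fintype.card F : ℂ) ^ j))
          = (-1 : ℂ) ^ (u' + 1) * ((Fintype.card F : ℂ) ^ (∑ i ∈ range u', i) *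
              (Fintype.card F : ℂ) ^ m) *
              ∏ j ∈ Ico u' m, ((Fintype.card F : ℂ) ^ d' - (Fintype.card F : ℂ) ^ j) := by
            ring
        _ = (-1 : ℂ) ^ (u' + 1) * ((Fintype.card F : ℂ) ^ ((∑ i ∈ range u', i) + u') *
              (Fintype.card F : ℂ) ^ (m - u')) *
              ∏ j ∈ Ico u' m, ((Fintype.card F : ℂ) ^ d' - (Fintype.card F : ℂ) ^ j) := by
            rw [hqq]
        _ = (-1 : ℂ) ^ (u' + 1) * (Fintype.card F : ℂ) ^ ((∑ i ∈ range u', i) + u') *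
              ((Fintype.card F : ℂ) ^ (m - u') *
              ∏ j ∈ Ico u' m, ((Fintype.card F : ℂ) ^ d' - (Fintype.card F : ℂ) ^ j)) := by
            ring

set_option maxHeartbeats 1000000 in
open scoped Classical in
lemma gl_sum (lam : AddChar F ℂ) (hlam : lam ≠ 1) {n u : ℕ}
    (U : Matrix (Fin n) (Fin n) F) (hu : U.rank = u) :
    ∑ X : Matrix (Fin n) (Fin n) F, (if IsUnit X.det then lam ((Uᵀ * X).trace) else 0)
      = (-1 : ℂ) ^ u * (Fintype.card F : ℂ) ^ (∑ i ∈ range u, i) *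
        ∏ j ∈ Ico u n, ((Fintype.card F : ℂ) ^ n - (Fintype.card F : ℂ) ^ j) := by
  set β : (Fin n → F) →ₗ[F] ((Fin n → F) →ₗ[F] F) :=
    { toFun := fun a => ∑ i, a i • (LinearMap.proj i : (Fin n → F) →ₗ[F] F),
      map_add' := by intro a b; simp [add_smul, Finset.sum_add_distrib],
      map_smul' := by
        intro c a
        simp [Pi.smul_apply, smul_eq_mul, mul_smul, Finset.smul_sum] } with hβ
  have hβapp : ∀ a x, β a x = ∑ i, a i * x i := by
    intro a x
    simp [hβ, LinearMap.sum_apply, LinearMap.smul_apply, LinearMap.proj_apply, smul_eq_mul]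
  have hβinj : Function.Injective β := by
    intro a b hab
    funext j
    have h := congrArg (fun g => g (Pi.single j (1 : F))) hab
    simp only [hβapp] at h
    rw [Finset.sum_eq_single j (fun i _ hij => by simp [Pi.single_apply, hij])
        (by simp), Finset.sum_eq_single j (fun i _ hij => by simp [Pi.single_apply, hij])
        (by simp)] at h
    simpa using h
  set φ : Fin n → ((Fin n → F) →ₗ[F] F) := fun j => β (U j) with hφ
  have htr : ∀ X : Matrix (Fin n) (Fin n) F, (Uᵀ * X).trace = ∑ j, φ j (X j) := by
    intro X
    rw [Matrix.trace]
    simp only [Matrix.diag_apply, Matrix.mul_apply, Matrix.transpose_apply]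
    rw [Finset.sum_comm]
    refine Finset.sum_congr rfl (fun j _ => ?_)
    rw [hφ]
    simp [hβapp]
  have hmat : ∑ X : Matrix (Fin n) (Fin n) F, (if IsUnit X.det then lam ((Uᵀ * X).trace) else 0)
      = ∑ x : Fin n → (Fin n → F),
          (if LinearIndependent F x then lam (∑ j, φ j (x j)) else 0) := by
    rw [← Equiv.sum_comp (Matrix.of (m := Fin n) (n := Fin n) (α := F))
      (fun X => if IsUnit X.det then lam ((Uᵀ * X).trace) else 0)]
    refine Finset.sum_congr rfl (fun x _ => ?_)
    rw [htr]
    refine if_congr ?_ rfl rfl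
    rw [← Matrix.isUnit_iff_isUnit_det]
    exact (Matrix.linearIndependent_rows_iff_isUnit (A := Matrix.of x)).symm
  rw [hmat, key_sum lam hlam n (Fin n → F) φ]
  have hrank : finrank F (span F (Set.range φ)) = u := by
    have h1 : Set.range φ = β '' Set.range (fun j => U j) := by
      rw [hφ]; exact Set.range_comp β (fun j => U j)
    rw [h1, ← Submodule.map_span]
    have hrn := (β.comp (span F (Set.range (fun j => U j))).subtype).finrank_range_add_finrank_ker
    have hker0 : LinearMap.ker (β.comp (span F (Set.range (fun j => U j))).subtype) = ⊥ := by
      rw [LinearMap.ker_eq_bot]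
      exact hβinj.comp (Submodule.injective_subtype _)
    have hrange2 : LinearMap.range (β.comp (span F (Set.range (fun j => U j))).subtype)
        = Submodule.map β (span F (Set.range (fun j => U j))) := by
      rw [LinearMap.range_comp, Submodule.range_subtype]
    rw [hker0, finrank_bot, hrange2] at hrn
    have hrowspan : finrank F (span F (Set.range (fun j => U j))) = u := by
      have h2 := Matrix.rank_eq_finrank_span_cols Uᵀ
      rw [Matrix.rank_transpose] at h2
      rw [← hu, h2]
      rfl
    omega
  rw [hrank, finrank_fin_fun]

set_option maxHeartbeats 1000000 in
open scoped Classical in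
lemma class_sum (lam : AddChar F ℂ) {n u : ℕ}
    (U : Matrix (Fin n) (Fin n) F) (hu : U.rank = u) (hun : u < n) (a : Fˣ) :
    ∑ X : Matrix (Fin n) (Fin n) F, (if X.det = (a : F) then lam ((Uᵀ * X).trace) else 0)
      = ∑ X : Matrix (Fin n) (Fin n) F, (if X.det = 1 then lam ((Uᵀ * X).trace) else 0) := by
  set p : Submodule F (Fin n → F) := LinearMap.range (Uᵀ.mulVecLin) with hp
  have hplt : p < ⊤ := by
    rw [lt_top_iff_ne_top]
    intro htop
    have h1 : finrank F ↥p = n := by rw [htop, finrank_top, finrank_fin_fun]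
    have h2 : finrank F ↥p = u := by
      have : finrank F ↥p = Uᵀ.rank := rfl
      rw [this, Matrix.rank_transpose, hu]
    omega
  obtain ⟨ψ, hψ0, hψmap⟩ := Submodule.exists_dual_map_eq_bot_of_lt_top hplt inferInstance
  have hψp : ∀ v ∈ p, ψ v = 0 := by
    intro v hv
    have hm : ψ v ∈ Submodule.map ψ p := Submodule.mem_map_of_mem hv
    rw [hψmap] at hm
    exact (Submodule.mem_bot F).mp hm
  obtain ⟨w, hw⟩ := aux_surj (F := F) hψ0 (1 : F)
  set cvec : Fin n → F := fun i => ψ (fun j => if i = j then (1 : F) else 0) with hcvec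
  have hψx : ∀ x : Fin n → F, ψ x = ∑ j, x j * cvec j := by
    intro x
    rw [LinearMap.pi_apply_eq_sum_univ ψ x]
    simp only [smul_eq_mul, hcvec]
  set D : Matrix (Fin n) (Fin n) F := 1 + Matrix.vecMulVec (((a : F) - 1) • w) cvec with hD
  have hDdet : D.det = (a : F) := by
    rw [hD, Matrix.vecMulVec_eq Unit, Matrix.det_one_add_replicateCol_mul_replicateRow]
    have hdot : cvec ⬝ᵥ (((a : F) - 1) • w) = (a : F) - 1 := by
      rw [dotProduct]
      have he : ∀ i, cvec i * ((((a : F) - 1) • w) i) = ((a : F) - 1) * (w i * cvec i) := by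
        intro i; simp only [Pi.smul_apply, smul_eq_mul]; ring
      rw [Finset.sum_congr rfl (fun i _ => he i), ← Finset.mul_sum, ← hψx w, hw, mul_one]
    rw [hdot]
    ring
  have hDU : Matrix.vecMulVec (((a : F) - 1) • w) cvec * Uᵀ = 0 := by
    ext i k
    rw [Matrix.mul_apply]
    simp only [Matrix.vecMulVec_apply, Matrix.zero_apply]
    have hcol : ψ (fun j => Uᵀ j k) = 0 := by
      apply hψp
      exact ⟨Pi.single k 1, by
        funext j
        simp [Matrix.mulVecLin_apply, Matrix.mulVec_single]⟩
    calc ∑ j, ((((a : F) - 1) • w) i * cvec j) * Uᵀ j k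
        = (((a : F) - 1) • w) i * ∑ j, (Uᵀ j k) * cvec j := by
          rw [Finset.mul_sum]
          exact Finset.sum_congr rfl (fun j _ => by ring)
      _ = 0 := by rw [← hψx (fun j => Uᵀ j k), hcol, mul_zero]
  have htreq : ∀ X : Matrix (Fin n) (Fin n) F, (Uᵀ * (X * D)).trace = (Uᵀ * X).trace := by
    intro X
    rw [← Matrix.mul_assoc, Matrix.trace_mul_comm, ← Matrix.mul_assoc]
    have hD2 : D * Uᵀ = Uᵀ := by
      rw [hD, Matrix.add_mul, Matrix.one_mul, hDU, add_zero]
    rw [hD2, Matrix.trace_mul_comm]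
  have hDunit : IsUnit D := by
    rw [Matrix.isUnit_iff_isUnit_det, hDdet]
    exact a.isUnit
  obtain ⟨Du, hDu⟩ := hDunit
  rw [← Equiv.sum_comp (Units.mulRight Du)
    (fun X => if X.det = (a : F) then lam ((Uᵀ * X).trace) else 0)]
  refine Finset.sum_congr rfl (fun X _ => ?_)
  have happ : (Units.mulRight Du) X = X * D := by
    simp [Units.mulRight, hDu]
  rw [happ]
  rw [Matrix.det_mul, hDdet, htreq]
  refine if_congr ?_ rfl rfl
  constructor
  · intro h
    exact mul_right_cancel₀ (Units.ne_zero a) (h.trans (one_mul (a : F)).symm)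
  · intro h
    rw [h, one_mul]

theorem gauss_sum_SL_low_rank {n : ℕ} {F : Type} [Field F] [Fintype F] [DecidableEq F]
    (lam : AddChar F ℂ) (hlam : lam ≠ 1)
    (U : Matrix (Fin n) (Fin n) F) (u : ℕ) (hu : U.rank = u) (hun : u < n) :
    ∑ X : Matrix.SpecialLinearGroup (Fin n) F,
        lam ((Uᵀ * (X : Matrix (Fin n) (Fin n) F)).trace) =
      (-1 : ℂ) ^ u * (Fintype.card F : ℂ) ^ (n * (n - 1) / 2) *
        ∏ i ∈ Finset.Icc 2 (n - u), ((Fintype.card F : ℂ) ^ i - 1) := by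
  classical
  have hSL : ∑ X : Matrix.SpecialLinearGroup (Fin n) F,
        lam ((Uᵀ * (X : Matrix (Fin n) (Fin n) F)).trace)
      = ∑ X : Matrix (Fin n) (Fin n) F,
          (if X.det = 1 then lam ((Uᵀ * X).trace) else 0) := by
    calc ∑ X : Matrix.SpecialLinearGroup (Fin n) F,
          lam ((Uᵀ * (X : Matrix (Fin n) (Fin n) F)).trace)
        = ∑ X : {A : Matrix (Fin n) (Fin n) F // A.det = 1},
            lam ((Uᵀ * (X : Matrix (Fin n) (Fin n) F)).trace) :=
          Fintype.sum_equiv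
            ⟨fun X => ⟨X.1, X.2⟩, fun X => ⟨X.1, X.2⟩, fun _ => rfl, fun _ => rfl⟩
            _ _ (fun _ => rfl)
      _ = ∑ X : Matrix (Fin n) (Fin n) F,
            (if X.det = 1 then lam ((Uᵀ * X).trace) else 0) := by
          rw [← Finset.sum_filter]
          exact (Finset.sum_subtype (p := fun A : Matrix (Fin n) (Fin n) F => A.det = 1)
            (Finset.univ.filter (fun A : Matrix (Fin n) (Fin n) F => A.det = 1)) (by simp)
            (fun A => lam ((Uᵀ * A).trace))).symm
  have hGL : ∑ X : Matrix (Fin n) (Fin n) F, (if IsUnit X.det then lam ((Uᵀ * X).trace) else 0)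
      = ∑ a : Fˣ, ∑ X : Matrix (Fin n) (Fin n) F,
          (if X.det = (a : F) then lam ((Uᵀ * X).trace) else 0) := by
    rw [Finset.sum_comm]
    refine Finset.sum_congr rfl (fun X _ => ?_)
    by_cases hdet : X.det = 0
    · rw [if_neg (by simp [hdet])]
      exact (Finset.sum_eq_zero (fun a _ =>
        if_neg (fun h => Units.ne_zero a (h.symm.trans hdet)))).symm
    · rw [if_pos (isUnit_iff_ne_zero.mpr hdet)]
      rw [Finset.sum_eq_single (Units.mk0 X.det hdet)]
      · rw [if_pos (show X.det = ↑(Units.mk0 X.det hdet) by simp)]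
      · intro b _ hb
        exact if_neg (fun h => hb (Units.ext (by rw [← h]; rfl)))
      · intro habs; exact absurd (Finset.mem_univ _) habs
  have hkey := gl_sum lam hlam U hu
  rw [hGL, Finset.sum_congr rfl (fun a _ => class_sum lam U hu hun a),
    Finset.sum_const, Finset.card_univ, ← hSL, nsmul_eq_mul] at hkey
  have hcardq : (1 : ℕ) < Fintype.card F := Fintype.one_lt_card
  have hcards : ((Fintype.card Fˣ : ℕ) : ℂ) = (Fintype.card F : ℂ) - 1 := by
    rw [Fintype.card_units]
    push_cast [Nat.cast_sub (le_of_lt hcardq)]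
    ring
  rw [hcards] at hkey
  have hq1 : (Fintype.card F : ℂ) - 1 ≠ 0 := by
    refine sub_ne_zero_of_ne ?_
    exact_mod_cast Nat.ne_of_gt hcardq
  apply mul_left_cancel₀ hq1
  rw [hkey]
  have hsplit : ∀ j ∈ Ico u n,
      ((Fintype.card F : ℂ) ^ n - (Fintype.card F : ℂ) ^ j)
      = (Fintype.card F : ℂ) ^ j * ((Fintype.card F : ℂ) ^ (n - j) - 1) := by
    intro j hj
    have hj' : j ≤ n := le_of_lt (mem_Ico.mp hj).2
    rw [mul_sub, mul_one, ← pow_add]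
    congr 2
    omega
  rw [Finset.prod_congr rfl hsplit, Finset.prod_mul_distrib, Finset.prod_pow_eq_pow_sum]
  have hre : ∏ j ∈ Ico u n, ((Fintype.card F : ℂ) ^ (n - j) - 1)
      = ∏ i ∈ Icc 1 (n - u), ((Fintype.card F : ℂ) ^ i - 1) := by
    refine Finset.prod_nbij' (fun j => n - j) (fun i => n - i) ?_ ?_ ?_ ?_ ?_
    · intro j hj; simp only [mem_Ico] at hj; show n - j ∈ Icc 1 (n - u)
      simp only [mem_Icc]; omega
    · intro i hi; simp only [mem_Icc] at hi; show n - i ∈ Ico u n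
      simp only [mem_Ico]; omega
    · intro j hj; simp only [mem_Ico] at hj; show n - (n - j) = j; omega
    · intro i hi; simp only [mem_Icc] at hi; show n - (n - i) = i; omega
    · intro j _; rfl
  have hIcc : ∏ i ∈ Icc 1 (n - u), ((Fintype.card F : ℂ) ^ i - 1)
      = ((Fintype.card F : ℂ) - 1) * ∏ i ∈ Icc 2 (n - u), ((Fintype.card F : ℂ) ^ i - 1) := by
    have h1 : Icc 1 (n - u) = insert 1 (Icc 2 (n - u)) := by
      ext i; simp only [mem_Icc, mem_insert]; omega
    rw [h1, Finset.prod_insert (by simp), pow_one]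
  have hexp : (∑ i ∈ range u, i) + (∑ j ∈ Ico u n, j) = n * (n - 1) / 2 := by
    rw [← Finset.sum_range_id]
    rw [Finset.range_eq_Ico, Finset.range_eq_Ico]
    exact Finset.sum_Ico_consecutive (f := fun i => i) (Nat.zero_le u) (le_of_lt hun)
  have hpow : (Fintype.card F : ℂ) ^ (∑ i ∈ range u, i) *
      (Fintype.card F : ℂ) ^ (∑ j ∈ Ico u n, j) = (Fintype.card F : ℂ) ^ (n * (n - 1) / 2) := by
    rw [← pow_add, hexp]
  rw [hre, hIcc]
  calc (-1 : ℂ) ^ u * (Fintype.card F : ℂ) ^ (∑ i ∈ range u, i) *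
        ((Fintype.card F : ℂ) ^ (∑ j ∈ Ico u n, j) *
          (((Fintype.card F : ℂ) - 1) * ∏ i ∈ Icc 2 (n - u), ((Fintype.card F : ℂ) ^ i - 1)))
      = (-1 : ℂ) ^ u * ((Fintype.card F : ℂ) ^ (∑ i ∈ range u, i) *
          (Fintype.card F : ℂ) ^ (∑ j ∈ Ico u n, j)) *
          (((Fintype.card F : ℂ) - 1) * ∏ i ∈ Icc 2 (n - u), ((Fintype.card F : ℂ) ^ i - 1)) := by
        ring
    _ = ((Fintype.card F : ℂ) - 1) * ((-1 : ℂ) ^ u *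
          (Fintype.card F : ℂ) ^ (n * (n - 1) / 2) *
          ∏ i ∈ Icc 2 (n - u), ((Fintype.card F : ℂ) ^ i - 1)) := by
        rw [hpow]; ring
end

section
/- Let λ be a nontrivial additive character of F_q and U ∈ GL_n(F_q). Then ∑_{X ∈ SL_n(F_q)} λ(tr(U^t X)) = q^{n(n-1)/2} · K_n(λ, det U), where K_n(λ, y) = ∑_{x₁x₂···x_n = y, x_i ∈ F_q^*} λ(x₁ + x₂ + ... + x_n) is the n-dimensional Kloosterman sum. -/
open Matrix Finset

/-- The hyper-Kloosterman sum `K_n(λ, y) = ∑_{x₁⋯xₙ = y} λ(x₁ + ⋯ + xₙ)`, the sum being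
over `n`-tuples of nonzero elements of `F` with product `y`. -/
noncomputable def kloostermanSum (n : ℕ) {F : Type} [Field F] [Fintype F] [DecidableEq F]
    (lam : AddChar F ℂ) (y : F) : ℂ :=
  ∑ v ∈ Finset.univ.filter (fun v : Fin n → Fˣ => (∏ i, (v i : F)) = y),
    lam (∑ i, (v i : F))

set_option linter.unusedSectionVars false
set_option maxHeartbeats 1000000

namespace GaussSumSLAux

variable {F : Type} [Field F] [Fintype F] [DecidableEq F] {n : ℕ}

lemma lam_map_sum {M : Type*} [CommMonoid M] (lam : AddChar F M) {ι : Type*} (s : Finset ι)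
    (f : ι → F) : lam (∑ i ∈ s, f i) = ∏ i ∈ s, lam (f i) := by
  classical
  induction s using Finset.cons_induction with
  | empty => simp
  | cons a s ha ih => rw [Finset.sum_cons, Finset.prod_cons, AddChar.map_add_eq_mul, ih]

lemma vecsum (lam : AddChar F ℂ) (hlam : lam ≠ 1) {k : ℕ} (v : Fin k → F) :
    ∑ c : Fin k → F, lam (∑ j, v j * c j) =
      if v = 0 then ((Fintype.card F : ℂ)) ^ k else 0 := by
  have hp : lam.IsPrimitive := AddChar.IsPrimitive.of_ne_one hlam
  have : ∀ c : Fin k → F, lam (∑ j, v j * c j) = ∏ j, lam (v j * c j) := fun c =>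
    lam_map_sum lam univ _
  simp_rw [this]
  rw [← Fintype.prod_sum (fun j x => lam (v j * x))]
  have : ∀ j, (∑ x, lam (v j * x)) = if v j = 0 then (Fintype.card F : ℂ) else 0 := by
    intro j
    simpa [mul_comm] using AddChar.sum_mulShift (v j) hp
  simp_rw [this]
  by_cases hv : v = 0
  · simp [hv]
  · rw [if_neg hv]
    obtain ⟨j, hj⟩ := Function.ne_iff.mp hv
    have hj' : v j ≠ 0 := by simpa using hj
    exact Finset.prod_eq_zero (mem_univ j) (by simp [hj'])

def colEquiv (k : ℕ) : Matrix (Fin k) (Fin 1) F ≃ (Fin k → F) where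
  toFun C := fun j => C j 0
  invFun c := Matrix.of fun j _ => c j
  left_inv C := by ext j i; fin_cases i <;> rfl
  right_inv c := rfl

lemma bilin (lam : AddChar F ℂ) (hlam : lam ≠ 1) {k : ℕ} (M : Matrix (Fin k) (Fin k) F)
    (hM : IsUnit M.det) :
    ∑ B : Matrix (Fin 1) (Fin k) F, ∑ C : Matrix (Fin k) (Fin 1) F,
      lam ((B * M * C) 0 0) = (Fintype.card F : ℂ) ^ k := by
  have step : ∀ B : Matrix (Fin 1) (Fin k) F,
      ∑ C : Matrix (Fin k) (Fin 1) F, lam ((B * M * C) 0 0) =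
        if B = 0 then (Fintype.card F : ℂ) ^ k else 0 := by
    intro B
    have := Fintype.sum_equiv (colEquiv k) (fun C => lam ((B * M * C) 0 0))
      (fun c => lam (∑ j, (B * M) 0 j * c j)) (fun C => by
        show lam ((B * M * C) 0 0) = lam (∑ j, (B * M) 0 j * C j 0)
        rw [Matrix.mul_apply])
    rw [this, vecsum lam hlam]
    congr 1
    simp only [eq_iff_iff]
    constructor
    · intro h
      have hBM : B * M = 0 := by
        ext i j
        have hi : i = 0 := Subsingleton.elim _ _
        subst hi
        exact congrFun h j
      have : B = 0 := by
        have := congrArg (fun X => X * M⁻¹) hBM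
        simpa [Matrix.mul_assoc, Matrix.mul_nonsing_inv M hM] using this
      exact this
    · rintro rfl
      ext j
      simp [Matrix.mul_apply]
  simp_rw [step]
  simp

lemma trace_fromBlocks' (A : Matrix (Fin 1) (Fin 1) F) (B : Matrix (Fin 1) (Fin n) F)
    (C : Matrix (Fin n) (Fin 1) F) (D : Matrix (Fin n) (Fin n) F) :
    (fromBlocks A B C D).trace = A 0 0 + D.trace := by
  simp [Matrix.trace, Fintype.sum_sum_type, Matrix.diag]

lemma det_block_linear (A : Matrix (Fin 1) (Fin 1) F) (B : Matrix (Fin 1) (Fin n) F)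
    (C : Matrix (Fin n) (Fin 1) F) (D : Matrix (Fin n) (Fin n) F) :
    (fromBlocks A B C D).det = A 0 0 * D.det + (fromBlocks 0 B C D).det := by
  set M0 := fromBlocks (0 : Matrix (Fin 1) (Fin 1) F) B C D with hM0
  have h1 : fromBlocks A B C D =
      updateRow M0 (Sum.inl 0) (A 0 0 • (Pi.single (Sum.inl 0) 1 : Fin 1 ⊕ Fin n → F) + M0 (Sum.inl 0)) := by
    ext i j
    rcases i with i | i
    · have hi : i = 0 := Subsingleton.elim _ _
      subst hi
      rcases j with j | j
      · have hj : j = 0 := Subsingleton.elim _ _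
        subst hj
        simp [M0, Matrix.updateRow_apply, fromBlocks, Pi.single_apply]
      · simp [M0, Matrix.updateRow_apply, fromBlocks, Pi.single_apply]
    · rcases j with j | j <;>
        simp [M0, Matrix.updateRow_apply, fromBlocks]
  have h2 : updateRow M0 (Sum.inl 0) ((Pi.single (Sum.inl 0) 1 : Fin 1 ⊕ Fin n → F)) =
      fromBlocks 1 0 C D := by
    ext i j
    rcases i with i | i
    · have hi : i = 0 := Subsingleton.elim _ _
      subst hi
      rcases j with j | j
      · have hj : j = 0 := Subsingleton.elim _ _
        subst hj
        simp [Matrix.updateRow_apply, fromBlocks, Pi.single_apply]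
      · simp [Matrix.updateRow_apply, fromBlocks, Pi.single_apply]
    · rcases j with j | j <;>
        simp [M0, Matrix.updateRow_apply, fromBlocks, Pi.single_apply]
  rw [h1, Matrix.det_updateRow_add, Matrix.det_updateRow_smul, h2,
    Matrix.updateRow_eq_self, Matrix.det_fromBlocks_zero₁₂, det_one, one_mul]

lemma det_block_zero (B : Matrix (Fin 1) (Fin n) F) (C : Matrix (Fin n) (Fin 1) F)
    (D : Matrix (Fin n) (Fin n) F) (hD : IsUnit D.det) :
    (fromBlocks (0 : Matrix (Fin 1) (Fin 1) F) B C D).det =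
      -(D.det * (B * D⁻¹ * C) 0 0) := by
  have : Invertible D := D.invertibleOfIsUnitDet hD
  rw [Matrix.det_fromBlocks₂₂, Matrix.invOf_eq_nonsing_inv]
  rw [zero_sub, Matrix.det_fin_one]
  simp [mul_comm]

def scalEquiv : Matrix (Fin 1) (Fin 1) F ≃ F where
  toFun A := A 0 0
  invFun a := Matrix.of fun _ _ => a
  left_inv A := by
    ext i j
    have hi : i = 0 := Subsingleton.elim _ _
    have hj : j = 0 := Subsingleton.elim _ _
    subst hi; subst hj; rfl
  right_inv a := rfl

lemma trace_reindex' {α β : Type*} [Fintype α] [Fintype β] [DecidableEq α] [DecidableEq β]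
    (e : α ≃ β) (Z : Matrix α α F) : (reindex e e Z).trace = Z.trace := by
  simp only [Matrix.trace, Matrix.reindex_apply, Matrix.diag, Matrix.submatrix_apply]
  exact Fintype.sum_equiv e.symm (fun b => Z (e.symm b) (e.symm b)) (fun a => Z a a)
    (fun b => rfl)

def quadEquiv (n : ℕ) : (Matrix (Fin 1) (Fin n) F × Matrix (Fin n) (Fin 1) F ×
    Matrix (Fin n) (Fin n) F × F) ≃ Matrix (Fin 1 ⊕ Fin n) (Fin 1 ⊕ Fin n) F where
  toFun p := fromBlocks (scalEquiv.symm p.2.2.2) p.1 p.2.1 p.2.2.1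
  invFun M := (M.toBlocks₁₂, M.toBlocks₂₁, M.toBlocks₂₂, scalEquiv M.toBlocks₁₁)
  left_inv := by
    rintro ⟨B, C, D, a⟩
    simp [Matrix.toBlocks_fromBlocks₁₁, Matrix.toBlocks_fromBlocks₁₂,
      Matrix.toBlocks_fromBlocks₂₁, Matrix.toBlocks_fromBlocks₂₂]
  right_inv M := by
    show fromBlocks (scalEquiv.symm (scalEquiv M.toBlocks₁₁)) _ _ _ = M
    rw [Equiv.symm_apply_apply]
    exact Matrix.fromBlocks_toBlocks M

lemma asum (lam : AddChar F ℂ) (hlam : lam ≠ 1) (e k d : F) (c : ℂ) :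
    ∑ a : F, (if a * e + k = d then lam a * c else 0) =
      if e = 0 then 0 else lam ((d - k) * e⁻¹) * c := by
  by_cases he : e = 0
  · subst he
    simp only [mul_zero, zero_add]
    by_cases hk : k = d
    · simp [hk, ← Finset.sum_mul, AddChar.sum_eq_zero_of_ne_one hlam]
    · simp [hk]
  · rw [if_neg he]
    have hcond : ∀ a : F, (a * e + k = d) = (a = (d - k) * e⁻¹) := by
      intro a
      simp only [eq_iff_iff]
      rw [eq_mul_inv_iff_mul_eq₀ he]
      constructor
      · intro h; linear_combination h
      · intro h; linear_combination h
    simp_rw [hcond]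
    rw [Finset.sum_ite_eq' Finset.univ ((d - k) * e⁻¹) (fun a => lam a * c)]
    simp

lemma kloo_succ (lam : AddChar F ℂ) (d : F) :
    kloostermanSum (n + 1) lam d =
      ∑ x : Fˣ, lam x * kloostermanSum n lam (((x⁻¹ : Fˣ) : F) * d) := by
  rw [kloostermanSum, Finset.sum_filter]
  rw [← Fintype.sum_equiv (Fin.consEquiv (fun _ : Fin (n + 1) => Fˣ))
    (fun p : Fˣ × (Fin n → Fˣ) =>
      if (∏ i, ((Fin.cons p.1 p.2 : Fin (n + 1) → Fˣ) i : F)) = d then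
        lam (∑ i, ((Fin.cons p.1 p.2 : Fin (n + 1) → Fˣ) i : F)) else 0)
    (fun v : Fin (n + 1) → Fˣ =>
      if (∏ i, (v i : F)) = d then lam (∑ i, (v i : F)) else 0)
    (fun p => rfl)]
  rw [Fintype.sum_prod_type]
  refine Finset.sum_congr rfl fun x _ => ?_
  rw [kloostermanSum, Finset.sum_filter, Finset.mul_sum]
  refine Finset.sum_congr rfl fun w _ => ?_
  have hprod : (∏ i, ((Fin.cons x w : Fin (n + 1) → Fˣ) i : F)) = (x : F) * ∏ i, (w i : F) := by
    rw [show (fun i => ((Fin.cons x w : Fin (n + 1) → Fˣ) i : F)) =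
        Fin.cons (x : F) (fun i => (w i : F)) from funext fun i =>
          congrFun (Fin.comp_cons (Units.val) x w) i]
    exact Fin.prod_cons _ _
  have hsum : (∑ i, ((Fin.cons x w : Fin (n + 1) → Fˣ) i : F)) = (x : F) + ∑ i, (w i : F) := by
    rw [show (fun i => ((Fin.cons x w : Fin (n + 1) → Fˣ) i : F)) =
        Fin.cons (x : F) (fun i => (w i : F)) from funext fun i =>
          congrFun (Fin.comp_cons (Units.val) x w) i]
    exact Fin.sum_cons _ _
  rw [hprod, hsum]
  have hc : ((x : F) * ∏ i, (w i : F) = d) ↔ ((∏ i, (w i : F)) = ((x⁻¹ : Fˣ) : F) * d) := by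
    rw [Units.val_inv_eq_inv_val, eq_inv_mul_iff_mul_eq₀ (Units.ne_zero x)]
  rw [AddChar.map_add_eq_mul]
  by_cases h1 : (x : F) * ∏ i, (w i : F) = d
  · rw [if_pos h1, if_pos (hc.mp h1)]
  · rw [if_neg h1, if_neg (fun hh => h1 (hc.mpr hh)), mul_zero]

lemma sum_over_units (g : F → ℂ) :
    ∑ u : Fˣ, g u = ∑ x : F, if x = 0 then 0 else g x := by
  rw [show (∑ x : F, if x = 0 then 0 else g x) =
      ∑ x ∈ Finset.univ.filter (fun x : F => ¬x = 0), g x by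
    rw [Finset.sum_filter]
    exact Finset.sum_congr rfl fun x _ => by by_cases hx : x = 0 <;> simp [hx]]
  refine Finset.sum_nbij' (fun u => (u : F))
    (fun x => if hx : x = 0 then 1 else Units.mk0 x hx) ?_ ?_ ?_ ?_ ?_
  · intro u _; simp [Units.ne_zero u]
  · intro x hx
    simp at hx
    simp [hx]
  · intro u _; simp [Units.ne_zero u]
  · intro x hx
    simp at hx
    simp [hx]
  · intro u _; rfl

lemma unit_reindex (lam : AddChar F ℂ) {d : F} (hd : d ≠ 0) (g : F → ℂ) :
    ∑ u : Fˣ, lam (d * (u : F)⁻¹) * g u =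
      ∑ x : Fˣ, lam x * g (((x⁻¹ : Fˣ) : F) * d) := by
  refine Fintype.sum_equiv ((Equiv.inv Fˣ).trans (Equiv.mulLeft (Units.mk0 d hd)))
    _ _ fun u => ?_
  simp only [Equiv.trans_apply, Equiv.inv_apply, Equiv.coe_mulLeft]
  congr 1
  · congr 1
    simp [Units.val_inv_eq_inv_val]
  · congr 1
    rw [mul_inv, inv_inv]
    push_cast [Units.val_inv_eq_inv_val]
    field_simp
    simp [hd]

noncomputable def matS (n : ℕ) (lam : AddChar F ℂ) (d : F) : ℂ :=
  ∑ Y : Matrix (Fin n) (Fin n) F, if Y.det = d then lam Y.trace else 0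

lemma matS_succ (lam : AddChar F ℂ) (hlam : lam ≠ 1) (d : F) :
    matS (n + 1) lam d = (Fintype.card F : ℂ) ^ n *
      ∑ x : F, (if x = 0 then 0 else lam (d * x⁻¹) * matS n lam x) := by
  classical
  set q : ℂ := (Fintype.card F : ℂ)
  let e : Fin 1 ⊕ Fin n ≃ Fin (n + 1) := finSumFinEquiv.trans (finCongr (by omega))
  -- Step 1: reindex
  have step1 : matS (n + 1) lam d =
      ∑ Z : Matrix (Fin 1 ⊕ Fin n) (Fin 1 ⊕ Fin n) F,
        if Z.det = d then lam Z.trace else 0 := by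
    rw [matS]
    exact (Fintype.sum_equiv (Matrix.reindex e e)
      (fun Z : Matrix (Fin 1 ⊕ Fin n) (Fin 1 ⊕ Fin n) F => if Z.det = d then lam Z.trace else 0)
      (fun Y : Matrix (Fin (n+1)) (Fin (n+1)) F => if Y.det = d then lam Y.trace else 0)
      (fun Z => by
        show (if Z.det = d then lam Z.trace else 0) =
          (if ((reindex e e) Z).det = d then lam ((reindex e e) Z).trace else 0)
        rw [Matrix.det_reindex_self, trace_reindex'])).symm
  rw [step1]
  -- Step 2: block coordinates
  have step2 : (∑ Z : Matrix (Fin 1 ⊕ Fin n) (Fin 1 ⊕ Fin n) F,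
      if Z.det = d then lam Z.trace else 0) =
      ∑ B : Matrix (Fin 1) (Fin n) F, ∑ C : Matrix (Fin n) (Fin 1) F,
        ∑ D : Matrix (Fin n) (Fin n) F, ∑ a : F,
          if (fromBlocks (Matrix.of fun _ _ => a) B C D).det = d
            then lam ((fromBlocks (Matrix.of fun _ _ => a) B C D).trace) else 0 := by
    rw [← Fintype.sum_equiv (quadEquiv n)
      (fun p : Matrix (Fin 1) (Fin n) F × Matrix (Fin n) (Fin 1) F ×
          Matrix (Fin n) (Fin n) F × F =>
        if (fromBlocks (Matrix.of fun _ _ => p.2.2.2) p.1 p.2.1 p.2.2.1).det = d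
          then lam ((fromBlocks (Matrix.of fun _ _ => p.2.2.2) p.1 p.2.1 p.2.2.1).trace) else 0)
      (fun Z => if Z.det = d then lam Z.trace else 0)
      (fun p => rfl)]
    simp only [Fintype.sum_prod_type]
  rw [step2]
  -- Step 3: innermost sum over a
  have inner : ∀ (B : Matrix (Fin 1) (Fin n) F) (C : Matrix (Fin n) (Fin 1) F)
      (D : Matrix (Fin n) (Fin n) F),
      (∑ a : F, if (fromBlocks (Matrix.of fun _ _ => a) B C D).det = d
          then lam ((fromBlocks (Matrix.of fun _ _ => a) B C D).trace) else 0)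
      = if D.det = 0 then 0
          else lam ((d - (fromBlocks 0 B C D).det) * D.det⁻¹) * lam D.trace := by
    intro B C D
    have h1 : ∀ a : F, (fromBlocks (Matrix.of fun _ _ => a) B C D).det =
        a * D.det + (fromBlocks 0 B C D).det := fun a => det_block_linear _ _ _ _
    have h2 : ∀ a : F, (fromBlocks (Matrix.of fun _ _ => a) B C D).trace =
        a + D.trace := fun a => trace_fromBlocks' _ _ _ _
    simp_rw [h1, h2, AddChar.map_add_eq_mul]
    exact asum lam hlam D.det _ d (lam D.trace)
  simp_rw [inner]
  -- Step 4: reorder sums to put D outermost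
  rw [show (∑ B : Matrix (Fin 1) (Fin n) F, ∑ C : Matrix (Fin n) (Fin 1) F,
      ∑ D : Matrix (Fin n) (Fin n) F,
        (if D.det = 0 then 0
          else lam ((d - (fromBlocks 0 B C D).det) * D.det⁻¹) * lam D.trace)) =
      ∑ D : Matrix (Fin n) (Fin n) F, ∑ B : Matrix (Fin 1) (Fin n) F,
        ∑ C : Matrix (Fin n) (Fin 1) F,
        (if D.det = 0 then 0
          else lam ((d - (fromBlocks 0 B C D).det) * D.det⁻¹) * lam D.trace) from (Finset.sum_congr rfl fun B _ => Finset.sum_comm).trans Finset.sum_comm]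
  -- Step 5: the B, C sums
  have inner2 : ∀ D : Matrix (Fin n) (Fin n) F,
      (∑ B : Matrix (Fin 1) (Fin n) F, ∑ C : Matrix (Fin n) (Fin 1) F,
        (if D.det = 0 then 0
          else lam ((d - (fromBlocks 0 B C D).det) * D.det⁻¹) * lam D.trace))
      = if D.det = 0 then 0 else q ^ n * (lam (d * D.det⁻¹) * lam D.trace) := by
    intro D
    by_cases hD : D.det = 0
    · simp [hD]
    · simp only [if_neg hD]
      have hu : IsUnit D.det := isUnit_iff_ne_zero.mpr hD
      have hinv : IsUnit (D⁻¹).det := Matrix.isUnit_nonsing_inv_det D hu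
      have key : ∀ (B : Matrix (Fin 1) (Fin n) F) (C : Matrix (Fin n) (Fin 1) F),
          lam ((d - (fromBlocks 0 B C D).det) * D.det⁻¹) * lam D.trace =
          (lam (d * D.det⁻¹) * lam D.trace) * lam ((B * D⁻¹ * C) 0 0) := by
        intro B C
        rw [det_block_zero B C D hu]
        rw [show (d - -(D.det * (B * D⁻¹ * C) 0 0)) * D.det⁻¹ =
            d * D.det⁻¹ + (B * D⁻¹ * C) 0 0 from by field_simp; ring]
        rw [AddChar.map_add_eq_mul]
        ring
      simp_rw [key, ← Finset.mul_sum]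
      rw [bilin lam hlam D⁻¹ hinv]
      ring
  simp_rw [inner2]
  -- Step 6: group by determinant
  rw [← Finset.sum_fiberwise Finset.univ (fun D : Matrix (Fin n) (Fin n) F => D.det)
    (fun D => if D.det = 0 then 0 else q ^ n * (lam (d * D.det⁻¹) * lam D.trace))]
  rw [Finset.mul_sum]
  refine Finset.sum_congr rfl fun x _ => ?_
  by_cases hx : x = 0
  · rw [if_pos hx, mul_zero]
    refine Finset.sum_eq_zero fun D hD => ?_
    rw [Finset.mem_filter] at hD
    rw [if_pos (hD.2.trans hx)]
  · rw [if_neg hx, matS, ← Finset.sum_filter, Finset.mul_sum, Finset.mul_sum]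
    refine Finset.sum_congr rfl fun D hD => ?_
    rw [Finset.mem_filter] at hD
    rw [hD.2, if_neg hx]

lemma expfact (n : ℕ) : (n + 1) * n / 2 = n * (n - 1) / 2 + n := by
  cases n with
  | zero => rfl
  | succ m =>
    show (m + 2) * (m + 1) / 2 = (m + 1) * m / 2 + (m + 1)
    rw [show (m + 2) * (m + 1) = 2 * (m + 1) + (m + 1) * m from by ring,
      Nat.mul_add_div (by norm_num)]
    omega

lemma matS_eq (lam : AddChar F ℂ) (hlam : lam ≠ 1) :
    ∀ (n : ℕ) (d : F), d ≠ 0 →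
      matS n lam d = (Fintype.card F : ℂ) ^ (n * (n - 1) / 2) * kloostermanSum n lam d := by
  intro n
  induction n with
  | zero =>
    intro d hd
    have h1 : ∀ Y : Matrix (Fin 0) (Fin 0) F,
        (if Y.det = d then lam Y.trace else 0) = if (1 : F) = d then 1 else 0 := by
      intro Y
      rw [Matrix.det_fin_zero]
      simp [Matrix.trace]
    have hcard : Fintype.card (Matrix (Fin 0) (Fin 0) F) = 1 := by
      simp [Fintype.card_eq_one_iff]
      exact ⟨0, fun y => Matrix.ext fun i _ => i.elim0⟩
    have hcard2 : Fintype.card (Fin 0 → Fˣ) = 1 := by simp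
    rw [matS]
    simp_rw [h1]
    rw [Finset.sum_const, Finset.card_univ, hcard, one_smul]
    rw [kloostermanSum]
    have : ∀ v : Fin 0 → Fˣ, (∏ i, (v i : F)) = (1 : F) := fun v => by simp
    simp_rw [this]
    by_cases h : (1 : F) = d
    · rw [if_pos h, Finset.filter_true_of_mem (fun v _ => h)]
      simp
    · rw [if_neg h]
      rw [Finset.filter_false_of_mem (fun v _ => h)]
      simp
  | succ n ih =>
    intro d hd
    rw [matS_succ lam hlam d]
    have step : (∑ x : F, (if x = 0 then 0 else lam (d * x⁻¹) * matS n lam x)) =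
        ∑ x : F, (if x = 0 then 0 else lam (d * x⁻¹) *
          ((Fintype.card F : ℂ) ^ (n * (n - 1) / 2) * kloostermanSum n lam x)) := by
      refine Finset.sum_congr rfl fun x _ => ?_
      by_cases hx : x = 0
      · simp [hx]
      · rw [if_neg hx, if_neg hx, ih x hx]
    rw [step, ← sum_over_units (fun x => lam (d * x⁻¹) *
      ((Fintype.card F : ℂ) ^ (n * (n - 1) / 2) * kloostermanSum n lam x))]
    rw [unit_reindex lam hd (fun x => (Fintype.card F : ℂ) ^ (n * (n - 1) / 2) *
      kloostermanSum n lam x)]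
    have : (∑ x : Fˣ, lam x * ((Fintype.card F : ℂ) ^ (n * (n - 1) / 2) *
        kloostermanSum n lam (((x⁻¹ : Fˣ) : F) * d))) =
        (Fintype.card F : ℂ) ^ (n * (n - 1) / 2) *
          ∑ x : Fˣ, lam x * kloostermanSum n lam (((x⁻¹ : Fˣ) : F) * d) := by
      rw [Finset.mul_sum]
      exact Finset.sum_congr rfl fun x _ => by ring
    rw [this, ← kloo_succ lam d]
    rw [show (n + 1) * ((n + 1) - 1) / 2 = n * (n - 1) / 2 + n from by
      simpa using expfact n]
    rw [pow_add]
    ring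

end GaussSumSLAux

open GaussSumSLAux in
theorem gauss_sum_SL_full_rank {n : ℕ} {F : Type} [Field F] [Fintype F] [DecidableEq F]
    (lam : AddChar F ℂ) (hlam : lam ≠ 1) (U : GL (Fin n) F) :
    ∑ X : Matrix.SpecialLinearGroup (Fin n) F,
        lam (((U : Matrix (Fin n) (Fin n) F)ᵀ * (X : Matrix (Fin n) (Fin n) F)).trace) =
      (Fintype.card F : ℂ) ^ (n * (n - 1) / 2) *
        kloostermanSum n lam ((U : Matrix (Fin n) (Fin n) F).det) := by
  classical
  set V : Matrix (Fin n) (Fin n) F := (U : Matrix (Fin n) (Fin n) F) with hV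
  have hd : IsUnit V.det := by
    have : IsUnit V := ⟨U, rfl⟩
    exact (Matrix.isUnit_iff_isUnit_det V).mp this
  have hd0 : V.det ≠ 0 := hd.ne_zero
  have hUT : IsUnit Vᵀ.det := by rwa [Matrix.det_transpose]
  have key : (∑ X : Matrix.SpecialLinearGroup (Fin n) F, lam ((Vᵀ * (X : Matrix (Fin n) (Fin n) F)).trace))
      = matS n lam V.det := by
    rw [matS, ← Finset.sum_filter]
    refine Finset.sum_bij' (fun (X : Matrix.SpecialLinearGroup (Fin n) F) _ => Vᵀ * (X : Matrix (Fin n) (Fin n) F))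
      (fun Y hY => (⟨Vᵀ⁻¹ * Y, ?_⟩ : Matrix.SpecialLinearGroup (Fin n) F)) ?_ ?_ ?_ ?_ ?_
    · rw [Finset.mem_filter] at hY
      rw [Matrix.det_mul, Matrix.det_nonsing_inv, hY.2, Matrix.det_transpose]
      exact Ring.inverse_mul_cancel _ hd
    · intro X _
      rw [Finset.mem_filter]
      refine ⟨Finset.mem_univ _, ?_⟩
      rw [Matrix.det_mul, Matrix.SpecialLinearGroup.det_coe, mul_one, Matrix.det_transpose]
    · intro Y hY
      exact Finset.mem_univ _
    · intro X _
      ext i j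
      show (Vᵀ⁻¹ * (Vᵀ * (X : Matrix (Fin n) (Fin n) F))) i j = _
      rw [← Matrix.mul_assoc, Matrix.nonsing_inv_mul _ hUT, Matrix.one_mul]
    · intro Y hY
      show Vᵀ * (Vᵀ⁻¹ * Y) = Y
      rw [← Matrix.mul_assoc, Matrix.mul_nonsing_inv _ hUT, Matrix.one_mul]
    · intro X _
      rfl
  rw [key, matS_eq lam hlam n V.det hd0]
end

section
/- Let λ be a nontrivial additive character of F_q. Then for every c ∈ F_q^*, ∑_{X ∈ GL_n(F_q), det X = c} λ(tr X) = q^{n(n-1)/2} · K_n(λ, c), where K_n(λ, c) is the n-dimensional Kloosterman sum. -/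
open Matrix Finset

/-- Auxiliary: the fixed-determinant trace sum, over plain matrices. -/
noncomputable def gsfdAux (n : ℕ) {F : Type} [Field F] [Fintype F] [DecidableEq F]
    (lam : AddChar F ℂ) (c : F) : ℂ :=
  ∑ M ∈ Finset.univ.filter (fun M : Matrix (Fin n) (Fin n) F => M.det = c), lam M.trace

lemma trace_transvection_mul {n : ℕ} {F : Type} [Field F] (j : Fin (n + 1)) (hj : j ≠ 0)
    (t : F) (M : Matrix (Fin (n + 1)) (Fin (n + 1)) F) :
    (Matrix.transvection j 0 t * M).trace = M.trace + t * M 0 j := by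
  have h : ∀ k, (Matrix.transvection j 0 t * M) k k
      = M k k + (if k = j then t * M 0 j else 0) := by
    intro k
    by_cases hk : k = j
    · subst hk; simp
    · simp [Matrix.transvection_mul_apply_of_ne j 0 k k hk t M, hk]
  unfold Matrix.trace Matrix.diag
  simp only [h, Finset.sum_add_distrib, Finset.sum_ite_eq' Finset.univ j, Finset.mem_univ,
    if_true]

/-- Vanishing of fibers whose first row has a nonzero entry off the diagonal position. -/
lemma gsfd_fiber_vanish {n : ℕ} {F : Type} [Field F] [Fintype F] [DecidableEq F]
    (lam : AddChar F ℂ) (hlam : lam ≠ 1) (c : F) (r : Fin (n + 1) → F)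
    (j : Fin (n + 1)) (hj : j ≠ 0) (hrj : r j ≠ 0) :
    ∑ M ∈ Finset.univ.filter
      (fun M : Matrix (Fin (n + 1)) (Fin (n + 1)) F => M.det = c ∧ M 0 = r),
      lam M.trace = 0 := by
  obtain ⟨a, ha⟩ := AddChar.ne_one_iff.mp hlam
  set t : F := a * (r j)⁻¹ with ht
  have htrj : t * r j = a := by
    rw [ht, mul_assoc, inv_mul_cancel₀ hrj, mul_one]
  set s := Finset.univ.filter
      (fun M : Matrix (Fin (n + 1)) (Fin (n + 1)) F => M.det = c ∧ M 0 = r) with hs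
  have key : (∑ M ∈ s, lam M.trace) * lam a = ∑ M ∈ s, lam M.trace := by
    rw [Finset.sum_mul]
    refine Finset.sum_nbij' (fun M => Matrix.transvection j 0 t * M)
      (fun M => Matrix.transvection j 0 (-t) * M) ?_ ?_ ?_ ?_ ?_
    · intro M hM
      rw [hs, Finset.mem_filter] at hM ⊢
      obtain ⟨-, hdet, hrow⟩ := hM
      refine ⟨Finset.mem_univ _, ?_, ?_⟩
      · rw [Matrix.det_mul, Matrix.det_transvection_of_ne _ _ hj, one_mul, hdet]
      · funext b
        show (Matrix.transvection j 0 t * M) 0 b = r b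
        rw [Matrix.transvection_mul_apply_of_ne j 0 0 b (Ne.symm hj) t M, hrow]
    · intro M hM
      rw [hs, Finset.mem_filter] at hM ⊢
      obtain ⟨-, hdet, hrow⟩ := hM
      refine ⟨Finset.mem_univ _, ?_, ?_⟩
      · rw [Matrix.det_mul, Matrix.det_transvection_of_ne _ _ hj, one_mul, hdet]
      · funext b
        show (Matrix.transvection j 0 (-t) * M) 0 b = r b
        rw [Matrix.transvection_mul_apply_of_ne j 0 0 b (Ne.symm hj) (-t) M, hrow]
    · intro M _
      show Matrix.transvection j 0 (-t) * (Matrix.transvection j 0 t * M) = M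
      rw [← Matrix.mul_assoc, Matrix.transvection_mul_transvection_same _ _ hj,
        neg_add_cancel]
      simp [Matrix.transvection]
    · intro M _
      show Matrix.transvection j 0 t * (Matrix.transvection j 0 (-t) * M) = M
      rw [← Matrix.mul_assoc, Matrix.transvection_mul_transvection_same _ _ hj,
        add_neg_cancel]
      simp [Matrix.transvection]
    · intro M hM
      rw [hs, Finset.mem_filter] at hM
      obtain ⟨-, -, hrow⟩ := hM
      show lam M.trace * lam a = lam (Matrix.transvection j 0 t * M).trace
      rw [trace_transvection_mul j hj, hrow, htrj, AddChar.map_add_eq_mul]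
  have h2 : (∑ M ∈ s, lam M.trace) * (lam a - 1) = 0 := by
    rw [mul_sub, mul_one, key, sub_self]
  rcases mul_eq_zero.mp h2 with h | h
  · exact h
  · exact absurd (sub_eq_zero.mp h) ha

lemma gsfd_det_of_row {n : ℕ} {F : Type} [Field F] [Fintype F] [DecidableEq F] (d : F)
    (M : Matrix (Fin (n + 1)) (Fin (n + 1)) F)
    (hM : M 0 = fun j => if j = 0 then d else 0) :
    M.det = d * (M.submatrix Fin.succ Fin.succ).det := by
  rw [Matrix.det_succ_row_zero]
  rw [Finset.sum_eq_single 0]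
  · simp [hM, Fin.succAbove_zero]
  · intro b _ hb
    simp [hM, hb]
  · simp

/-- The inverse map used in the good-fiber bijection. -/
def gsfdBack (n : ℕ) {F : Type} [Field F] (d : F)
    (p : (Fin n → F) × Matrix (Fin n) (Fin n) F) :
    Matrix (Fin (n + 1)) (Fin (n + 1)) F :=
  Matrix.of fun i k =>
    if hi : i = 0 then (if k = 0 then d else 0)
    else (if hk : k = 0 then p.1 (i.pred hi) else p.2 (i.pred hi) (k.pred hk))

lemma gsfd_fiber_good {n : ℕ} {F : Type} [Field F] [Fintype F] [DecidableEq F]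
    (lam : AddChar F ℂ) (c d : F) (hd : d ≠ 0) :
    ∑ M ∈ Finset.univ.filter
      (fun M : Matrix (Fin (n + 1)) (Fin (n + 1)) F =>
        M.det = c ∧ M 0 = fun j => if j = 0 then d else 0), lam M.trace
    = lam d * ((Fintype.card F : ℂ) ^ n * gsfdAux n lam (c * d⁻¹)) := by
  have htr : ∀ M : Matrix (Fin (n + 1)) (Fin (n + 1)) F,
      M.trace = M 0 0 + (M.submatrix Fin.succ Fin.succ).trace := by
    intro M
    simp [Matrix.trace, Matrix.diag, Fin.sum_univ_succ]
  have key : ∑ M ∈ Finset.univ.filter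
      (fun M : Matrix (Fin (n + 1)) (Fin (n + 1)) F =>
        M.det = c ∧ M 0 = fun j => if j = 0 then d else 0), lam M.trace
      = ∑ p ∈ (Finset.univ : Finset (Fin n → F)) ×ˢ
          (Finset.univ.filter (fun A : Matrix (Fin n) (Fin n) F => A.det = c * d⁻¹)),
          lam d * lam p.2.trace := by
    refine Finset.sum_nbij'
      (fun M => ((fun i => M i.succ 0), M.submatrix Fin.succ Fin.succ))
      (gsfdBack n d)
      ?_ ?_ ?_ ?_ ?_
    · intro M hM
      rw [Finset.mem_filter] at hM
      obtain ⟨-, hdet, hrow⟩ := hM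
      rw [Finset.mem_product, Finset.mem_filter]
      refine ⟨Finset.mem_univ _, Finset.mem_univ _, ?_⟩
      have h1 := gsfd_det_of_row d M hrow
      rw [hdet] at h1
      field_simp [h1]
      rw [h1]; ring
    · intro p hp
      rw [Finset.mem_product, Finset.mem_filter] at hp
      obtain ⟨-, -, hdet⟩ := hp
      rw [Finset.mem_filter]
      have hrow : gsfdBack n d p 0
          = fun j : Fin (n + 1) => if j = 0 then d else 0 := by
        funext k
        simp [gsfdBack]
      refine ⟨Finset.mem_univ _, ?_, hrow⟩
      rw [gsfd_det_of_row d _ hrow]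
      have hsub : (gsfdBack n d p).submatrix Fin.succ Fin.succ = p.2 := by
        ext i k
        simp [gsfdBack, Matrix.submatrix_apply, Fin.succ_ne_zero]
      rw [hsub, hdet]
      field_simp
    · intro M hM
      rw [Finset.mem_filter] at hM
      obtain ⟨-, -, hrow⟩ := hM
      ext i k
      by_cases hi : i = 0
      · subst hi
        simp [gsfdBack, hrow]
      · by_cases hk : k = 0
        · subst hk
          simp [gsfdBack, hi, Fin.succ_pred]
        · simp [gsfdBack, hi, hk, Fin.succ_pred]
    · intro p hp
      refine Prod.ext ?_ ?_
      · funext i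
        simp [gsfdBack, Fin.succ_ne_zero]
      · ext i k
        simp [gsfdBack, Fin.succ_ne_zero]
    · intro M hM
      rw [Finset.mem_filter] at hM
      obtain ⟨-, -, hrow⟩ := hM
      have h00 : M 0 0 = d := by rw [hrow]; simp
      rw [htr M, h00, AddChar.map_add_eq_mul]
  have hcard : ((Finset.univ : Finset (Fin n → F)).card : ℂ) = (Fintype.card F : ℂ) ^ n := by
    rw [Finset.card_univ, Fintype.card_fun]
    push_cast
    simp
  rw [key, Finset.sum_product]
  have h2 : (∑ x : Fin n → F, ∑ y ∈ Finset.univ.filter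
        (fun A : Matrix (Fin n) (Fin n) F => A.det = c * d⁻¹), lam d * lam (x, y).2.trace)
      = ∑ _x : Fin n → F, ∑ y ∈ Finset.univ.filter
        (fun A : Matrix (Fin n) (Fin n) F => A.det = c * d⁻¹), lam d * lam y.trace := rfl
  rw [h2, Finset.sum_const, nsmul_eq_mul, ← Finset.mul_sum, hcard, gsfdAux]
  ring

lemma gsfdAux_succ {n : ℕ} {F : Type} [Field F] [Fintype F] [DecidableEq F]
    (lam : AddChar F ℂ) (hlam : lam ≠ 1) (c : F) (hc : c ≠ 0) :
    gsfdAux (n + 1) lam c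
      = (Fintype.card F : ℂ) ^ n * ∑ d : Fˣ, lam (d : F) * gsfdAux n lam (c * (d : F)⁻¹) := by
  classical
  rw [gsfdAux]
  rw [← Finset.sum_fiberwise (Finset.univ.filter
      (fun M : Matrix (Fin (n + 1)) (Fin (n + 1)) F => M.det = c)) (fun M => M 0)
      (fun M => lam M.trace)]
  simp only [Finset.filter_filter]
  set e : F → (Fin (n + 1) → F) := fun d j => if j = 0 then d else 0 with he
  have step1 : (∑ r : Fin (n + 1) → F, ∑ M ∈ Finset.univ.filter
        (fun M : Matrix (Fin (n + 1)) (Fin (n + 1)) F => M.det = c ∧ M 0 = r), lam M.trace)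
      = ∑ r ∈ Finset.univ.image e, ∑ M ∈ Finset.univ.filter
        (fun M : Matrix (Fin (n + 1)) (Fin (n + 1)) F => M.det = c ∧ M 0 = r), lam M.trace := by
    refine (Finset.sum_subset (Finset.subset_univ _) ?_).symm
    intro r _ hr
    have hex : ∃ j : Fin (n + 1), j ≠ 0 ∧ r j ≠ 0 := by
      by_contra hcon
      push_neg at hcon
      apply hr
      rw [Finset.mem_image]
      refine ⟨r 0, Finset.mem_univ _, ?_⟩
      funext j
      by_cases hj : j = 0
      · subst hj; simp [he]
      · simp [he, hj, hcon j hj]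
    obtain ⟨j, hj, hrj⟩ := hex
    exact gsfd_fiber_vanish lam hlam c r j hj hrj
  rw [step1, Finset.sum_image (by
    intro d _ d' _ hdd
    have := congrFun hdd 0
    simpa [he] using this)]
  rw [← Finset.sum_erase_add _ _ (Finset.mem_univ (0 : F))]
  have h0 : ∑ M ∈ Finset.univ.filter
      (fun M : Matrix (Fin (n + 1)) (Fin (n + 1)) F => M.det = c ∧ M 0 = e 0), lam M.trace
      = 0 := by
    rw [Finset.sum_eq_zero]
    intro M hM
    rw [Finset.mem_filter] at hM
    obtain ⟨-, hdet, hrow⟩ := hM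
    exfalso
    apply hc
    rw [← hdet]
    apply Matrix.det_eq_zero_of_row_eq_zero 0
    intro k
    rw [hrow]
    simp [he]
  rw [h0, add_zero]
  have step2 : (∑ d ∈ Finset.univ.erase (0 : F), ∑ M ∈ Finset.univ.filter
        (fun M : Matrix (Fin (n + 1)) (Fin (n + 1)) F => M.det = c ∧ M 0 = e d), lam M.trace)
      = ∑ u : Fˣ, ∑ M ∈ Finset.univ.filter
        (fun M : Matrix (Fin (n + 1)) (Fin (n + 1)) F => M.det = c ∧ M 0 = e (u : F)),
        lam M.trace := by
    refine Finset.sum_bij' (fun d hd => Units.mk0 d (Finset.ne_of_mem_erase hd))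
      (fun u _ => (u : F)) ?_ ?_ ?_ ?_ ?_
    · intro a ha; exact Finset.mem_univ _
    · intro u _
      exact Finset.mem_erase.mpr ⟨Units.ne_zero u, Finset.mem_univ _⟩
    · intro a ha; rfl
    · intro u _; exact Units.ext rfl
    · intro a ha; rfl
  rw [step2]
  rw [Finset.mul_sum]
  refine Finset.sum_congr rfl ?_
  intro u _
  rw [show e (u : F) = fun j : Fin (n + 1) => if j = 0 then (u : F) else 0 from rfl]
  rw [gsfd_fiber_good lam c (u : F) (Units.ne_zero u)]
  ring

lemma kloostermanSum_succ {n : ℕ} {F : Type} [Field F] [Fintype F] [DecidableEq F]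
    (lam : AddChar F ℂ) (c : F) :
    kloostermanSum (n + 1) lam c
      = ∑ d : Fˣ, lam (d : F) * kloostermanSum n lam (c * (d : F)⁻¹) := by
  classical
  have hrw : ∀ d : Fˣ, lam (d : F) * kloostermanSum n lam (c * (d : F)⁻¹)
      = ∑ w ∈ Finset.univ.filter
          (fun w : Fin n → Fˣ => (∏ i, (w i : F)) = c * (d : F)⁻¹),
          lam ((d : F) + ∑ i, (w i : F)) := by
    intro d
    rw [kloostermanSum, Finset.mul_sum]
    exact Finset.sum_congr rfl fun w _ => (AddChar.map_add_eq_mul lam _ _).symm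
  simp_rw [hrw]
  rw [Finset.sum_sigma']
  rw [kloostermanSum]
  refine Finset.sum_nbij' (fun v => ⟨v 0, fun k => v k.succ⟩)
    (fun p => Fin.cons p.1 p.2) ?_ ?_ ?_ ?_ ?_
  · intro v hv
    rw [Finset.mem_filter] at hv
    obtain ⟨-, hv⟩ := hv
    rw [Finset.mem_sigma]
    refine ⟨Finset.mem_univ _, ?_⟩
    rw [Finset.mem_filter]
    refine ⟨Finset.mem_univ _, ?_⟩
    rw [Fin.prod_univ_succ] at hv
    have h0 : ((v 0 : F)) ≠ 0 := Units.ne_zero _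
    field_simp [← hv]
    rw [← hv]; ring
  · intro p hp
    rw [Finset.mem_sigma, Finset.mem_filter] at hp
    obtain ⟨-, -, hp⟩ := hp
    rw [Finset.mem_filter]
    refine ⟨Finset.mem_univ _, ?_⟩
    rw [Fin.prod_univ_succ]
    simp only [Fin.cons_zero, Fin.cons_succ]
    rw [hp]
    have h0 : ((p.1 : F)) ≠ 0 := Units.ne_zero _
    field_simp
  · intro v _
    exact Fin.cons_self_tail v
  · intro p _
    rcases p with ⟨d, w⟩
    simp
  · intro v _
    have := Fin.sum_univ_succ (fun i => (v i : F))
    simp only [this]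

theorem gauss_sum_fixed_det {n : ℕ} {F : Type} [Field F] [Fintype F] [DecidableEq F]
    (lam : AddChar F ℂ) (hlam : lam ≠ 1) (c : Fˣ) :
    ∑ X ∈ Finset.univ.filter
        (fun X : GL (Fin n) F => (X : Matrix (Fin n) (Fin n) F).det = (c : F)),
        lam ((X : Matrix (Fin n) (Fin n) F).trace) =
      (Fintype.card F : ℂ) ^ (n * (n - 1) / 2) * kloostermanSum n lam (c : F) := by
  have key : ∀ m : ℕ, ∀ c : Fˣ, gsfdAux m lam (c : F)
      = (Fintype.card F : ℂ) ^ (m * (m - 1) / 2) * kloostermanSum m lam (c : F) := by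
    intro m
    induction m with
    | zero =>
      intro c
      rw [gsfdAux, kloostermanSum]
      simp only [Matrix.det_fin_zero, Matrix.trace, Matrix.diag]
      by_cases h : (1 : F) = (c : F)
      · simp [h, Finset.filter_true_of_mem, Finset.univ_unique]
        exact Fintype.card_eq_one_iff.mpr ⟨0, fun M => Matrix.ext fun i _ => i.elim0⟩
      · simp [h, Finset.filter_false_of_mem]
    | succ k ih =>
      intro c
      rw [gsfdAux_succ lam hlam _ (Units.ne_zero c), kloostermanSum_succ]
      have hco : ∀ d : Fˣ, (c : F) * (d : F)⁻¹ = ((c * d⁻¹ : Fˣ) : F) := by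
        intro d; simp
      have hih : ∀ d : Fˣ, gsfdAux k lam ((c : F) * (d : F)⁻¹)
          = (Fintype.card F : ℂ) ^ (k * (k - 1) / 2)
            * kloostermanSum k lam ((c : F) * (d : F)⁻¹) := by
        intro d
        rw [hco d]
        exact ih (c * d⁻¹)
      simp_rw [hih]
      rw [Finset.mul_sum, Finset.mul_sum]
      refine Finset.sum_congr rfl fun d _ => ?_
      rw [Nat.triangle_succ, pow_add]
      ring
  have hGL : (∑ X ∈ Finset.univ.filter
      (fun X : GL (Fin n) F => (X : Matrix (Fin n) (Fin n) F).det = (c : F)),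
      lam ((X : Matrix (Fin n) (Fin n) F).trace)) = gsfdAux n lam (c : F) := by
    rw [gsfdAux]
    refine Finset.sum_bij' (fun X _ => (X : Matrix (Fin n) (Fin n) F))
      (fun M hM => Matrix.GeneralLinearGroup.mkOfDetNeZero M (by
        rw [Finset.mem_filter] at hM
        rw [hM.2]
        exact Units.ne_zero c)) ?_ ?_ ?_ ?_ ?_
    · intro X hX
      rw [Finset.mem_filter] at hX ⊢
      exact ⟨Finset.mem_univ _, hX.2⟩
    · intro M hM
      rw [Finset.mem_filter] at hM ⊢
      exact ⟨Finset.mem_univ _, hM.2⟩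
    · intro X hX
      exact Units.ext rfl
    · intro M hM
      rfl
    · intro X hX
      rfl
  rw [hGL, key n c]
end

section
/- Assuming the Deligne bound |K_n(λ, y)| ≤ n·q^{(n-1)/2} for hyper-Kloosterman sums, for n ≥ 3 and uniformly over all nonzero U ∈ M_n(F_q) and nontrivial additive characters λ, |∑_{X ∈ SL_n(F_q)} λ(tr(U^t X))| ≤ C_n · q^{n² - n - 1} for a constant C_n depending only on n. -/
open Matrix Finset
set_option linter.unusedSectionVars false

namespace GaussSL

variable {F : Type} [Field F] [Fintype F] [DecidableEq F]

noncomputable def cof {k : ℕ} (Y : Fin k → Fin (k+1) → F) (j : Fin (k+1)) : F :=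
  (Matrix.of (Fin.cons (Pi.single j 1) Y)).det

lemma updateRow_cons {k : ℕ} (x v : Fin (k+1) → F) (Y : Fin k → Fin (k+1) → F) :
    (Matrix.of (Fin.cons x Y)).updateRow 0 v = Matrix.of (Fin.cons v Y) := by
  ext i j
  refine Fin.cases ?_ (fun i => ?_) i
  · simp [Matrix.updateRow_self]
  · simp [Matrix.updateRow_ne (Fin.succ_ne_zero i)]

lemma det_cons_expand {k : ℕ} (x : Fin (k+1) → F) (Y : Fin k → Fin (k+1) → F) :
    (Matrix.of (Fin.cons x Y)).det = ∑ j, x j * cof Y j := by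
  set M := Matrix.of (Fin.cons x Y) with hM
  have h1 : M = M.updateRow 0 (∑ j, Pi.single j (x j)) := by
    rw [Finset.univ_sum_single, hM]
    rw [updateRow_cons]
  have h2 : M.updateRow 0 (∑ j, Pi.single j (x j))
      = Function.update M 0 (∑ j, Pi.single j (x j)) := rfl
  have h3 := (Matrix.detRowAlternating :
      (Fin (k+1) → F) [⋀^Fin (k+1)]→ₗ[F] F).toMultilinearMap.map_update_sum
      Finset.univ (0 : Fin (k+1)) (fun j => Pi.single j (x j)) M
  calc M.det = (Matrix.detRowAlternating (Function.update M 0 (∑ j, Pi.single j (x j))) : F) := by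
        rw [← h2, ← h1]; rfl
    _ = ∑ j, (Matrix.detRowAlternating (Function.update M 0 (Pi.single j (x j))) : F) := h3
    _ = ∑ j, x j * cof Y j := by
        refine Finset.sum_congr rfl fun j _ => ?_
        have h4 : Pi.single j (x j) = x j • (Pi.single j 1 : Fin (k+1) → F) := by
          funext l
          simp only [Pi.single_apply, Pi.smul_apply, smul_eq_mul]
          split <;> simp
        calc (Matrix.detRowAlternating (Function.update M 0 (Pi.single j (x j))) : F)
            = (M.updateRow 0 (x j • (Pi.single j 1 : Fin (k+1) → F))).det := by rw [← h4]; rfl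
          _ = x j * (M.updateRow 0 (Pi.single j 1 : Fin (k+1) → F)).det :=
              Matrix.det_updateRow_smul M 0 (x j) (Pi.single j 1 : Fin (k+1) → F)
          _ = x j * cof Y j := by rw [hM, updateRow_cons]; rfl

lemma trace_decomp {k : ℕ} (W X : Matrix (Fin k) (Fin k) F) :
    (Wᵀ * X).trace = ∑ i, ∑ j, W i j * X i j := by
  simp only [Matrix.trace, Matrix.diag, Matrix.mul_apply, Matrix.transpose_apply]
  exact Finset.sum_comm

def emb {k : ℕ} (A : Matrix (Fin k) (Fin k) F) : Fin k → Fin (k+1) → F :=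
  fun i => Fin.cons 0 (A i)

lemma cof_emb_zero {k : ℕ} (A : Matrix (Fin k) (Fin k) F) : cof (emb A) 0 = A.det := by
  unfold cof
  rw [Matrix.det_succ_column_zero]
  rw [Finset.sum_eq_single 0]
  · have hsub : (Matrix.of (Fin.cons (Pi.single (0:Fin (k+1)) (1:F)) (emb A))).submatrix
        (Fin.succAbove 0) Fin.succ = A := by
      ext i j
      simp [Fin.succAbove_zero, emb, Fin.cons_succ]
    rw [hsub]
    simp [Pi.single_eq_same]
  · intro i _ hi
    obtain ⟨i', rfl⟩ := Fin.exists_succ_eq.mpr hi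
    simp [emb, Fin.cons_succ]
  · intro h
    exact absurd (Finset.mem_univ _) h

lemma cof_emb_ne {k : ℕ} (A : Matrix (Fin k) (Fin k) F) (j : Fin (k+1)) (hj : j ≠ 0) :
    cof (emb A) j = 0 := by
  unfold cof
  apply Matrix.det_eq_zero_of_column_eq_zero 0
  intro i
  refine Fin.cases ?_ (fun i => ?_) i
  · simp only [Matrix.of_apply, Fin.cons_zero]
    exact Pi.single_eq_of_ne (Ne.symm hj) 1
  · show Matrix.of (Fin.cons (Pi.single j 1) (emb A)) i.succ 0 = 0
    rw [Matrix.of_apply, Fin.cons_succ]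
    show (Fin.cons (0:F) (A i) : Fin (k+1) → F) 0 = 0
    rw [Fin.cons_zero]

lemma col_zero_of_fiber {k : ℕ} (Y : Fin k → Fin (k+1) → F) (h0 : cof Y 0 ≠ 0)
    (h : ∀ j, j ≠ 0 → cof Y j = 0) : ∀ i, Y i 0 = 0 := by
  intro i
  have h1 : (Matrix.of (Fin.cons (Y i) Y)).det = 0 := by
    apply Matrix.det_zero_of_row_eq (Fin.succ_ne_zero i).symm
    show (Fin.cons (Y i) Y : Fin (k+1) → Fin (k+1) → F) 0
      = (Fin.cons (Y i) Y : Fin (k+1) → Fin (k+1) → F) i.succ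
    rw [Fin.cons_zero, Fin.cons_succ]
  rw [det_cons_expand] at h1
  rw [Finset.sum_eq_single_of_mem 0 (Finset.mem_univ _)
    (fun j _ hj => by rw [h j hj, mul_zero])] at h1
  exact (mul_eq_zero.mp h1).resolve_right h0

lemma fiber_sum {k : ℕ} (G : F → (Fin k → Fin (k+1) → F) → ℂ) :
    (∑ Y : Fin k → Fin (k+1) → F,
        if cof Y 0 ≠ 0 ∧ (∀ j, j ≠ 0 → cof Y j = 0) then G (cof Y 0) Y else 0)
    = ∑ A : Matrix (Fin k) (Fin k) F, if A.det ≠ 0 then G A.det (emb A) else 0 := by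
  classical
  rw [← Finset.sum_filter, ← Finset.sum_filter]
  refine Finset.sum_nbij' (fun Y => Matrix.of (fun i j => Y i j.succ)) (fun A => emb A)
    ?_ ?_ ?_ ?_ ?_
  · intro Y hY
    rw [Finset.mem_filter] at hY ⊢
    obtain ⟨-, h0, hne⟩ := hY
    have hemb : emb (Matrix.of (fun i j => Y i j.succ)) = Y := by
      funext i j
      refine Fin.cases ?_ (fun j => ?_) j
      · show (Fin.cons (0:F) _ : Fin (k+1) → F) 0 = Y i 0
        rw [Fin.cons_zero, col_zero_of_fiber Y h0 hne i]
      · show (Fin.cons (0:F) (fun j' => Y i j'.succ) : Fin (k+1) → F) j.succ = Y i j.succ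
        rw [Fin.cons_succ]
    refine ⟨Finset.mem_univ _, ?_⟩
    rw [show (Matrix.of (fun i j => Y i j.succ)).det = cof Y 0 by
      rw [← cof_emb_zero (Matrix.of (fun i j => Y i j.succ)), hemb]]
    exact h0
  · intro A hA
    rw [Finset.mem_filter] at hA ⊢
    refine ⟨Finset.mem_univ _, ?_, ?_⟩
    · rw [cof_emb_zero]; exact hA.2
    · exact fun j hj => cof_emb_ne A j hj
  · intro Y hY
    rw [Finset.mem_filter] at hY
    obtain ⟨-, h0, hne⟩ := hY
    funext i j
    refine Fin.cases ?_ (fun j => ?_) j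
    · show (Fin.cons (0:F) _ : Fin (k+1) → F) 0 = Y i 0
      rw [Fin.cons_zero, col_zero_of_fiber Y h0 hne i]
    · show (Fin.cons (0:F) (fun j' => Y i j'.succ) : Fin (k+1) → F) j.succ = Y i j.succ
      rw [Fin.cons_succ]
  · intro A hA
    funext i j
    show emb A i j.succ = A i j
    show (Fin.cons (0:F) (A i) : Fin (k+1) → F) j.succ = A i j
    rw [Fin.cons_succ]
  · intro Y hY
    rw [Finset.mem_filter] at hY
    obtain ⟨-, h0, hne⟩ := hY
    have hemb : emb (Matrix.of (fun i j => Y i j.succ)) = Y := by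
      funext i j
      refine Fin.cases ?_ (fun j => ?_) j
      · show (Fin.cons (0:F) _ : Fin (k+1) → F) 0 = Y i 0
        rw [Fin.cons_zero, col_zero_of_fiber Y h0 hne i]
      · show (Fin.cons (0:F) (fun j' => Y i j'.succ) : Fin (k+1) → F) j.succ = Y i j.succ
        rw [Fin.cons_succ]
    have hdet : (Matrix.of (fun i j => Y i j.succ)).det = cof Y 0 := by
      rw [← cof_emb_zero (Matrix.of (fun i j => Y i j.succ)), hemb]
    rw [hdet, hemb]

lemma sum_by_det {k : ℕ} (G : F → Matrix (Fin k) (Fin k) F → ℂ) :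
    (∑ A : Matrix (Fin k) (Fin k) F, if A.det ≠ 0 then G A.det A else 0)
    = ∑ s : F, if s ≠ 0 then
        (∑ A : Matrix (Fin k) (Fin k) F, if A.det = s then G s A else 0) else 0 := by
  classical
  have h1 : ∀ A : Matrix (Fin k) (Fin k) F,
      (if A.det ≠ 0 then G A.det A else 0)
      = ∑ s : F, if A.det = s then (if s ≠ 0 then G s A else 0) else 0 := by
    intro A
    rw [Finset.sum_ite_eq Finset.univ A.det (fun s => if s ≠ 0 then G s A else 0),
      if_pos (Finset.mem_univ _)]
  simp_rw [h1]
  rw [Finset.sum_comm]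
  refine Finset.sum_congr rfl fun s _ => ?_
  by_cases hs : s ≠ 0
  · rw [if_pos hs]
    refine Finset.sum_congr rfl fun A _ => ?_
    by_cases h : A.det = s
    · rw [if_pos h, if_pos h, if_pos hs]
    · rw [if_neg h, if_neg h]
  · rw [if_neg hs]
    refine Finset.sum_eq_zero fun A _ => ?_
    by_cases h : A.det = s
    · rw [if_pos h, if_neg hs]
    · rw [if_neg h]

lemma count_det_const {k : ℕ} (s : F) (hs : s ≠ 0) :
    (∑ A : Matrix (Fin (k+1)) (Fin (k+1)) F, if A.det = s then (1:ℂ) else 0)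
    = ∑ A : Matrix (Fin (k+1)) (Fin (k+1)) F, if A.det = 1 then (1:ℂ) else 0 := by
  classical
  set D : Matrix (Fin (k+1)) (Fin (k+1)) F :=
    Matrix.diagonal (Function.update (fun _ => 1) 0 s⁻¹) with hD
  have hdet : D.det = s⁻¹ := by
    rw [hD, Matrix.det_diagonal]
    rw [Finset.prod_eq_single 0 (fun j _ hj => by rw [Function.update_of_ne hj]) (by simp)]
    rw [Function.update_self]
  have hDunit : IsUnit D.det := by
    rw [hdet]; exact (isUnit_iff_ne_zero).mpr (inv_ne_zero hs)
  refine Fintype.sum_equiv ⟨fun A => A * D, fun A => A * D⁻¹, ?_, ?_⟩ _ _ ?_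
  · intro A
    show A * D * D⁻¹ = A
    rw [Matrix.mul_assoc, Matrix.mul_nonsing_inv D hDunit, Matrix.mul_one]
  · intro A
    show A * D⁻¹ * D = A
    rw [Matrix.mul_assoc, Matrix.nonsing_inv_mul D hDunit, Matrix.mul_one]
  · intro A
    show (if A.det = s then (1:ℂ) else 0) = if (A * D).det = 1 then (1:ℂ) else 0
    rw [Matrix.det_mul, hdet]
    congr 1
    rw [eq_iff_iff]
    exact (mul_inv_eq_one₀ hs).symm

lemma inner_sum {k : ℕ} (lam : AddChar F ℂ) (hlam : lam ≠ 1) (c : Fin (k+1) → F) (d : F)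
    (hd : d ≠ 0) :
    (∑ x : Fin (k+1) → F, if (∑ j, x j * c j) = d then lam (x 0) else 0)
    = if c 0 ≠ 0 ∧ (∀ j, j ≠ 0 → c j = 0) then (Fintype.card F : ℂ)^k * lam (d * (c 0)⁻¹)
      else 0 := by
  classical
  by_cases hex : ∃ j, j ≠ 0 ∧ c j ≠ 0
  · obtain ⟨j, hj0, hcj⟩ := hex
    have hcond : ¬(c 0 ≠ 0 ∧ ∀ j, j ≠ 0 → c j = 0) := by
      rintro ⟨-, hall⟩
      exact hcj (hall j hj0)
    rw [if_neg hcond]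
    set u : Fin (k+1) → F :=
      fun l => (if l = 0 then 1 else 0) - c 0 / c j * (if l = j then 1 else 0) with hu
    have hu0 : u 0 = 1 := by
      rw [hu]
      simp only [if_pos rfl, if_neg (Ne.symm hj0), mul_zero, sub_zero]
      simp
    have huc : ∑ l, u l * c l = 0 := by
      simp only [hu, sub_mul, Finset.sum_sub_distrib, ite_mul, one_mul, zero_mul]
      rw [Finset.sum_ite_eq' Finset.univ (0 : Fin (k+1)) c, if_pos (Finset.mem_univ _)]
      have : ∀ l, (if l = j then c 0 / c j * c l else 0)
          = if l = j then c 0 / c j * c j else 0 := by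
        intro l; by_cases h : l = j
        · rw [if_pos h, if_pos h, h]
        · rw [if_neg h, if_neg h]
      calc c 0 - ∑ l, c 0 / c j * (if l = j then 1 else 0) * c l
          = c 0 - ∑ l, (if l = j then c 0 / c j * c j else 0) := by
            congr 1
            refine Finset.sum_congr rfl fun l _ => ?_
            rw [← this l]
            by_cases h : l = j
            · rw [if_pos h, if_pos h, mul_one]
            · rw [if_neg h, if_neg h, mul_zero, zero_mul]
        _ = c 0 - c 0 / c j * c j := by
            rw [Finset.sum_ite_eq' Finset.univ j, if_pos (Finset.mem_univ _)]
        _ = 0 := by rw [div_mul_cancel₀ _ hcj, sub_self]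
    obtain ⟨t, ht⟩ := AddChar.ne_one_iff.mp hlam
    set L := ∑ x : Fin (k+1) → F, if (∑ j, x j * c j) = d then lam (x 0) else 0 with hL
    have hinv : L = lam t * L := by
      have h2 : L = ∑ x : Fin (k+1) → F,
          (if (∑ l, (x + t • u) l * c l) = d then lam ((x + t • u) 0) else 0) := by
        rw [hL]
        exact (Equiv.sum_comp (Equiv.addRight (t • u))
          (fun x => if (∑ l, x l * c l) = d then lam (x 0) else 0)).symm
      refine h2.trans ?_
      rw [hL, Finset.mul_sum]
      refine Finset.sum_congr rfl fun x _ => ?_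
      have hc : (∑ l, (x + t • u) l * c l) = ∑ l, x l * c l := by
        simp only [Pi.add_apply, Pi.smul_apply, smul_eq_mul, add_mul,
          Finset.sum_add_distrib]
        have : ∑ l, t * u l * c l = t * ∑ l, u l * c l := by
          rw [Finset.mul_sum]; exact Finset.sum_congr rfl fun l _ => by ring
        rw [this, huc, mul_zero, add_zero]
      rw [hc]
      by_cases h : (∑ l, x l * c l) = d
      · rw [if_pos h, if_pos h]
        have : (x + t • u) 0 = x 0 + t := by
          simp [Pi.add_apply, Pi.smul_apply, smul_eq_mul, hu0]
        rw [this, AddChar.map_add_eq_mul]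
        ring
      · rw [if_neg h, if_neg h, mul_zero]
    have : (lam t - 1) * L = 0 := by
      rw [sub_mul, one_mul, ← hinv, sub_self]
    exact (mul_eq_zero.mp this).resolve_left (sub_ne_zero.mpr ht)
  · push_neg at hex
    have hsum : ∀ x : Fin (k+1) → F, (∑ l, x l * c l) = x 0 * c 0 := by
      intro x
      exact Finset.sum_eq_single_of_mem 0 (Finset.mem_univ _)
        (fun l _ hl => by rw [hex l hl, mul_zero])
    by_cases hc0 : c 0 = 0
    · rw [if_neg (fun h => h.1 hc0)]
      refine Finset.sum_eq_zero fun x _ => ?_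
      rw [hsum, hc0, mul_zero, if_neg (fun h => hd h.symm)]
    · rw [if_pos ⟨hc0, hex⟩]
      have hcond : ∀ x : Fin (k+1) → F,
          ((∑ l, x l * c l) = d) = (x 0 = d * (c 0)⁻¹) := by
        intro x
        rw [hsum, eq_iff_iff, eq_mul_inv_iff_mul_eq₀ hc0]
      simp_rw [hcond]
      rw [← Equiv.sum_comp (Fin.consEquiv (fun _ => F))
        (fun x => if x 0 = d * (c 0)⁻¹ then lam (x 0) else 0)]
      rw [Fintype.sum_prod_type]
      have hpt : ∀ (a : F) (y : Fin k → F),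
          (fun x : Fin (k+1) → F => if x 0 = d * (c 0)⁻¹ then lam (x 0) else 0)
            (Fin.consEquiv (fun _ => F) (a, y))
          = if a = d * (c 0)⁻¹ then lam a else 0 := by
        intro a y
        show (if (Fin.cons a y : Fin (k+1) → F) 0 = d * (c 0)⁻¹
          then lam ((Fin.cons a y : Fin (k+1) → F) 0) else 0) = _
        rw [Fin.cons_zero]
      simp_rw [hpt]
      simp_rw [Finset.sum_const, Finset.card_univ, nsmul_eq_mul]
      rw [← Finset.mul_sum, Finset.sum_ite_eq' Finset.univ (d * (c 0)⁻¹) lam,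
        if_pos (Finset.mem_univ _), Fintype.card_fun, Fintype.card_fin]
      push_cast
      ring

noncomputable def GS {k : ℕ} (lam : AddChar F ℂ) (W : Matrix (Fin k) (Fin k) F) (d : F) : ℂ :=
  ∑ X : Matrix (Fin k) (Fin k) F, if X.det = d then lam ((Wᵀ * X).trace) else 0

lemma GS_transform {k : ℕ} (lam : AddChar F ℂ) (P Q W : Matrix (Fin k) (Fin k) F)
    (hP : P.det ≠ 0) (hQ : Q.det ≠ 0) (d : F) :
    GS lam W d = GS lam (P * W * Q) (d * (P.det * Q.det)⁻¹) := by
  classical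
  have hPT : IsUnit Pᵀ.det := by
    rw [Matrix.det_transpose]; exact isUnit_iff_ne_zero.mpr hP
  have hQT : IsUnit Qᵀ.det := by
    rw [Matrix.det_transpose]; exact isUnit_iff_ne_zero.mpr hQ
  have hPQ : P.det * Q.det ≠ 0 := mul_ne_zero hP hQ
  set e : Matrix (Fin k) (Fin k) F ≃ Matrix (Fin k) (Fin k) F :=
    { toFun := fun Y => Pᵀ * Y * Qᵀ
      invFun := fun Y => Pᵀ⁻¹ * Y * Qᵀ⁻¹
      left_inv := by
        intro Y
        show Pᵀ⁻¹ * (Pᵀ * Y * Qᵀ) * Qᵀ⁻¹ = Y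
        rw [← Matrix.mul_assoc, ← Matrix.mul_assoc, Matrix.nonsing_inv_mul _ hPT,
          Matrix.one_mul, Matrix.mul_assoc, Matrix.mul_nonsing_inv _ hQT, Matrix.mul_one]
      right_inv := by
        intro Y
        show Pᵀ * (Pᵀ⁻¹ * Y * Qᵀ⁻¹) * Qᵀ = Y
        rw [← Matrix.mul_assoc, ← Matrix.mul_assoc, Matrix.mul_nonsing_inv _ hPT,
          Matrix.one_mul, Matrix.mul_assoc, Matrix.nonsing_inv_mul _ hQT, Matrix.mul_one] }
    with he
  unfold GS
  refine (Fintype.sum_equiv e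
    (fun Y => if Y.det = d * (P.det * Q.det)⁻¹ then lam (((P * W * Q)ᵀ * Y).trace) else 0)
    (fun X => if X.det = d then lam ((Wᵀ * X).trace) else 0) ?_).symm
  intro Y
  have hdet : (Pᵀ * Y * Qᵀ).det = P.det * Y.det * Q.det := by
    rw [Matrix.det_mul, Matrix.det_mul, Matrix.det_transpose, Matrix.det_transpose]
  have hcond : (Y.det = d * (P.det * Q.det)⁻¹) = ((Pᵀ * Y * Qᵀ).det = d) := by
    rw [hdet, eq_iff_iff, eq_mul_inv_iff_mul_eq₀ hPQ]
    constructor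
    · intro h; rw [← h]; ring
    · intro h; rw [← h]; ring
  have htr : ((P * W * Q)ᵀ * Y).trace = (Wᵀ * (Pᵀ * Y * Qᵀ)).trace := by
    rw [show (P * W * Q)ᵀ = Qᵀ * (Wᵀ * Pᵀ) by
      rw [Matrix.transpose_mul, Matrix.transpose_mul]]
    rw [Matrix.mul_assoc Qᵀ (Wᵀ * Pᵀ) Y, Matrix.trace_mul_comm Qᵀ (Wᵀ * Pᵀ * Y)]
    simp only [Matrix.mul_assoc]
  show (if Y.det = d * (P.det * Q.det)⁻¹ then lam (((P * W * Q)ᵀ * Y).trace) else 0)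
    = if (Pᵀ * Y * Qᵀ).det = d then lam ((Wᵀ * (Pᵀ * Y * Qᵀ)).trace) else 0
  simp only [htr, hcond]

lemma exists_rowreduce {k : ℕ} (W : Matrix (Fin (k+1)) (Fin (k+1)) F) (hW : W ≠ 0) :
    ∃ P Q : Matrix (Fin (k+1)) (Fin (k+1)) F,
      P.det ≠ 0 ∧ Q.det ≠ 0 ∧ (P * W * Q) 0 = Pi.single 0 1 := by
  classical
  have hent : ∃ i j, W i j ≠ 0 := by
    by_contra h
    push_neg at h
    exact hW (by ext i j; exact h i j)
  obtain ⟨i₀, j₀, hij⟩ := hent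
  set σ1 : Equiv.Perm (Fin (k+1)) := Equiv.swap 0 i₀ with hσ1
  set P : Matrix (Fin (k+1)) (Fin (k+1)) F := σ1.permMatrix F with hPdef
  have hsign : ∀ σ : Equiv.Perm (Fin (k+1)), ((Equiv.Perm.permMatrix F σ).det) ≠ 0 := by
    intro σ
    rw [Matrix.det_permutation]
    rcases Int.units_eq_one_or (Equiv.Perm.sign σ) with h | h <;> rw [h]
    · simp
    · simp
  have hPdet : P.det ≠ 0 := hsign σ1
  set v : Fin (k+1) → F := W i₀ with hv
  set σ2 : Equiv.Perm (Fin (k+1)) := Equiv.swap 0 j₀ with hσ2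
  set N : Matrix (Fin (k+1)) (Fin (k+1)) F := σ2.permMatrix F with hNdef
  have hNrow : ∀ l, N l = Pi.single (σ2 l) (1:F) := by
    intro l
    funext l'
    rw [hNdef]
    show σ2.toPEquiv.toMatrix l l' = _
    rw [PEquiv.toMatrix_apply, Equiv.toPEquiv_apply, Pi.single_apply]
    simp only [Option.mem_some_iff]
    exact if_congr eq_comm rfl rfl
  set M : Matrix (Fin (k+1)) (Fin (k+1)) F := N.updateRow 0 v with hMdef
  have hMrow : v = ∑ l, (v (σ2 l)) • N l := by
    have h1 : ∑ l, (v (σ2 l)) • N l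
        = ∑ l, (fun l' => (v l') • (Pi.single l' 1 : Fin (k+1) → F)) (σ2 l) := by
      refine Finset.sum_congr rfl fun l _ => ?_
      rw [hNrow l]
    rw [h1, Equiv.sum_comp σ2 (fun l' => (v l') • (Pi.single l' 1 : Fin (k+1) → F))]
    have h2 : ∀ l' : Fin (k+1), (v l') • (Pi.single l' 1 : Fin (k+1) → F)
        = Pi.single l' (v l') := by
      intro l'
      funext l''
      simp only [Pi.smul_apply, Pi.single_apply, smul_eq_mul]
      split <;> simp
    rw [Finset.sum_congr rfl fun l' _ => h2 l']
    rw [Finset.univ_sum_single]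
  have h0 : σ2 0 = j₀ := Equiv.swap_apply_left 0 j₀
  have hMdet : M.det = v j₀ * N.det := by
    have hM2 : M = N.updateRow 0 (∑ l, (v (σ2 l)) • N l) := by rw [hMdef, ← hMrow]
    rw [hM2, Matrix.det_updateRow_sum N 0 (fun l => v (σ2 l)), smul_eq_mul]
    show v (σ2 0) * N.det = v j₀ * N.det
    rw [h0]
  have hMne : M.det ≠ 0 := by
    rw [hMdet]
    exact mul_ne_zero hij (hsign σ2)
  have hMunit : IsUnit M.det := isUnit_iff_ne_zero.mpr hMne
  refine ⟨P, M⁻¹, hPdet, (Matrix.isUnit_nonsing_inv_det M hMunit).ne_zero, ?_⟩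
  have hPW : P * W = W.submatrix σ1 id := PEquiv.toMatrix_toPEquiv_mul σ1 W
  have h1 : (P * W) 0 = M 0 := by
    rw [hPW, hMdef, Matrix.updateRow_self]
    funext l
    show W (σ1 0) l = v l
    rw [show σ1 0 = i₀ from Equiv.swap_apply_left 0 i₀]
  have h2 : (P * W * M⁻¹) 0 = (M * M⁻¹) 0 := by
    funext j
    rw [Matrix.mul_apply, Matrix.mul_apply]
    exact Finset.sum_congr rfl fun l _ => by rw [congrFun h1 l]
  rw [h2, Matrix.mul_nonsing_inv M hMunit]
  funext j
  rw [Matrix.one_apply, Pi.single_apply]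
  simp [eq_comm]

lemma GS_step {k : ℕ} (lam : AddChar F ℂ) (hlam : lam ≠ 1)
    (W : Matrix (Fin (k+1)) (Fin (k+1)) F) (hW0 : W 0 = Pi.single 0 1) (d : F) (hd : d ≠ 0) :
    GS lam W d = (Fintype.card F : ℂ)^k *
      ∑ s : F, (if s ≠ 0 then
        lam (d * s⁻¹) * GS lam (Matrix.of fun i j => W i.succ j.succ) s else 0) := by
  classical
  set q : ℂ := (Fintype.card F : ℂ) with hq
  set V : Matrix (Fin k) (Fin k) F := Matrix.of (fun i j => W i.succ j.succ) with hV
  set T : (Fin k → Fin (k+1) → F) → F := fun Y => ∑ i, ∑ j, W i.succ j * Y i j with hT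
  set e : (Fin (k+1) → F) × (Fin k → Fin (k+1) → F) ≃ Matrix (Fin (k+1)) (Fin (k+1)) F :=
    { toFun := fun p => Matrix.of (Fin.cons p.1 p.2)
      invFun := fun X => (X 0, fun i => X i.succ)
      left_inv := by
        rintro ⟨x, Y⟩
        refine Prod.ext ?_ ?_
        · show (Fin.cons x Y : Fin (k+1) → Fin (k+1) → F) 0 = x
          rw [Fin.cons_zero]
        · funext i
          show (Fin.cons x Y : Fin (k+1) → Fin (k+1) → F) i.succ = Y i
          rw [Fin.cons_succ]
      right_inv := by
        intro X
        ext i j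
        refine Fin.cases ?_ (fun i => ?_) i
        · show (Fin.cons (X 0) (fun i => X i.succ) : Fin (k+1) → Fin (k+1) → F) 0 j = X 0 j
          rw [Fin.cons_zero]
        · show (Fin.cons (X 0) (fun i => X i.succ) : Fin (k+1) → Fin (k+1) → F) i.succ j
            = X i.succ j
          rw [Fin.cons_succ] }
    with he
  have hpt : ∀ (x : Fin (k+1) → F) (Y : Fin k → Fin (k+1) → F),
      (if (e (x, Y)).det = d then lam ((Wᵀ * e (x, Y)).trace) else 0)
      = (if (∑ j, x j * cof Y j) = d then lam (x 0) else 0) * lam (T Y) := by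
    intro x Y
    have hdet : (e (x, Y)).det = ∑ j, x j * cof Y j := det_cons_expand x Y
    have htr : ((Wᵀ * e (x, Y)).trace) = x 0 + T Y := by
      rw [trace_decomp W (e (x, Y)), Fin.sum_univ_succ]
      congr 1
      · rw [hW0]
        have h1 : ∀ j : Fin (k+1), (Pi.single 0 1 : Fin (k+1) → F) j * (e (x, Y)) 0 j
            = if j = 0 then (e (x, Y)) 0 j else 0 := by
          intro j
          rw [Pi.single_apply]
          split <;> simp
        rw [Finset.sum_congr rfl fun j _ => h1 j,
          Finset.sum_ite_eq' Finset.univ (0 : Fin (k+1)) (fun j => (e (x, Y)) 0 j),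
          if_pos (Finset.mem_univ _)]
        show (Fin.cons x Y : Fin (k+1) → Fin (k+1) → F) 0 0 = x 0
        rw [Fin.cons_zero]

    by_cases hcnd : (∑ j, x j * cof Y j) = d
    · rw [if_pos (by rw [hdet]; exact hcnd), if_pos hcnd, htr, AddChar.map_add_eq_mul]
    · rw [if_neg (by rw [hdet]; exact hcnd), if_neg hcnd, zero_mul]
  calc GS lam W d
      = ∑ p : (Fin (k+1) → F) × (Fin k → Fin (k+1) → F),
          (if (e p).det = d then lam ((Wᵀ * e p).trace) else 0) :=
        (Equiv.sum_comp e (fun X => if X.det = d then lam ((Wᵀ * X).trace) else 0)).symm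
    _ = ∑ x : Fin (k+1) → F, ∑ Y : Fin k → Fin (k+1) → F,
          (if (e (x, Y)).det = d then lam ((Wᵀ * e (x, Y)).trace) else 0) :=
        Fintype.sum_prod_type _
    _ = ∑ Y : Fin k → Fin (k+1) → F, ∑ x : Fin (k+1) → F,
          (if (e (x, Y)).det = d then lam ((Wᵀ * e (x, Y)).trace) else 0) :=
        Finset.sum_comm
    _ = ∑ Y : Fin k → Fin (k+1) → F,
          (∑ x : Fin (k+1) → F, if (∑ j, x j * cof Y j) = d then lam (x 0) else 0)
            * lam (T Y) := by
        refine Finset.sum_congr rfl fun Y _ => ?_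
        rw [Finset.sum_mul]
        exact Finset.sum_congr rfl fun x _ => hpt x Y
    _ = ∑ Y : Fin k → Fin (k+1) → F,
          (if cof Y 0 ≠ 0 ∧ (∀ j, j ≠ 0 → cof Y j = 0)
            then q^k * lam (d * (cof Y 0)⁻¹) * lam (T Y) else 0) := by
        refine Finset.sum_congr rfl fun Y _ => ?_
        rw [inner_sum lam hlam (cof Y) d hd, ite_mul, zero_mul]
    _ = ∑ A : Matrix (Fin k) (Fin k) F,
          (if A.det ≠ 0 then q^k * lam (d * A.det⁻¹) * lam (T (emb A)) else 0) :=
        fiber_sum (fun s Y => q^k * lam (d * s⁻¹) * lam (T Y))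
    _ = ∑ A : Matrix (Fin k) (Fin k) F,
          (if A.det ≠ 0 then q^k * lam (d * A.det⁻¹) * lam ((Vᵀ * A).trace) else 0) := by
        refine Finset.sum_congr rfl fun A _ => ?_
        have hTemb : T (emb A) = (Vᵀ * A).trace := by
          rw [hT, trace_decomp V A]
          refine Finset.sum_congr rfl fun i _ => ?_
          rw [Fin.sum_univ_succ]
          have h0 : emb A i 0 = 0 := by
            show (Fin.cons (0:F) (A i) : Fin (k+1) → F) 0 = 0
            rw [Fin.cons_zero]
          rw [h0, mul_zero, zero_add]
          refine Finset.sum_congr rfl fun j _ => ?_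
          have h2 : emb A i j.succ = A i j := by
            show (Fin.cons (0:F) (A i) : Fin (k+1) → F) j.succ = A i j
            rw [Fin.cons_succ]
          rw [h2]
          rfl
        rw [hTemb]
    _ = ∑ s : F, (if s ≠ 0 then
          ∑ A : Matrix (Fin k) (Fin k) F,
            (if A.det = s then q^k * lam (d * s⁻¹) * lam ((Vᵀ * A).trace) else 0) else 0) :=
        sum_by_det (fun s A => q^k * lam (d * s⁻¹) * lam ((Vᵀ * A).trace))
    _ = q^k * ∑ s : F, (if s ≠ 0 then lam (d * s⁻¹) * GS lam V s else 0) := by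
        rw [Finset.mul_sum]
        refine Finset.sum_congr rfl fun s _ => ?_
        by_cases hs : s ≠ 0
        · rw [if_pos hs, if_pos hs]
          have : GS lam V s = ∑ A : Matrix (Fin k) (Fin k) F,
              (if A.det = s then lam ((Vᵀ * A).trace) else 0) := rfl
          rw [this, Finset.mul_sum, Finset.mul_sum]
          refine Finset.sum_congr rfl fun A _ => ?_
          by_cases h : A.det = s
          · rw [if_pos h, if_pos h]
            ring
          · rw [if_neg h, if_neg h]
            ring
        · rw [if_neg hs, if_neg hs, mul_zero]

def Ee (m : ℕ) : ℕ := if m = 1 then 0 else if m = 2 then 2 else m ^ 2 - m - 1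

lemma Ee_arith1 (m : ℕ) : (m + 1) + 1 + Ee (m+1) ≤ Ee (m+2) := by
  rcases m with _ | _ | m
  · decide
  · decide
  · show (m + 3) + 1 + Ee (m+3) ≤ Ee (m+4)
    simp only [Ee]
    rw [if_neg (by omega), if_neg (by omega), if_neg (by omega), if_neg (by omega)]
    have h1 : (m+3)^2 = m*m + 6*m + 9 := by ring
    have h2 : (m+4)^2 = m*m + 8*m + 16 := by ring
    omega

lemma Ee_arith2 (m : ℕ) : (m + 1) + ((m+1)^2 - 1) ≤ Ee (m+2) := by
  rcases m with _ | m
  · decide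
  · show (m + 2) + ((m+2)^2 - 1) ≤ Ee (m+3)
    simp only [Ee]
    rw [if_neg (by omega), if_neg (by omega)]
    have h1 : (m+2)^2 = m*m + 4*m + 4 := by ring
    have h2 : (m+3)^2 = m*m + 6*m + 9 := by ring
    omega

lemma abs_lam (lam : AddChar F ℂ) (x : F) : ‖lam x‖ = 1 := by
  exact AddChar.norm_apply lam x

lemma key (lam : AddChar F ℂ) (hlam : lam ≠ 1) :
    ∀ m : ℕ, ∀ W : Matrix (Fin (m+1)) (Fin (m+1)) F, W ≠ 0 → ∀ d : F, d ≠ 0 →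
      ‖GS lam W d‖ ≤ 2 * (Fintype.card F : ℝ) ^ (Ee (m+1)) := by
  classical
  have ha1 : (1:ℝ) ≤ (Fintype.card F : ℝ) := by
    have := Fintype.card_pos (α := F)
    exact_mod_cast this
  set a : ℝ := (Fintype.card F : ℝ) with haa
  intro m
  induction m with
  | zero =>
    intro W hW d hd
    have hval : GS lam W d = lam (W 0 0 * d) := by
      simp only [GS]
      rw [Finset.sum_eq_single (Matrix.of (fun _ _ => d) : Matrix (Fin 1) (Fin 1) F)]
      · rw [if_pos (by rw [Matrix.det_fin_one]; rfl)]
        congr 1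
        rw [trace_decomp]
        rw [Fin.sum_univ_one, Fin.sum_univ_one]
        rfl
      · intro X _ hne
        rw [if_neg]
        intro hdet
        apply hne
        ext i j
        rw [Subsingleton.elim i 0, Subsingleton.elim j 0]
        show X 0 0 = d
        rw [← Matrix.det_fin_one X]
        exact hdet
      · intro h
        exact absurd (Finset.mem_univ _) h
    rw [hval, abs_lam]
    have : Ee 1 = 0 := rfl
    rw [this, pow_zero, mul_one]
    norm_num
  | succ m ih =>
    intro W hW d hd
    obtain ⟨P, Q, hP, hQ, hrow⟩ := exists_rowreduce W hW
    rw [GS_transform lam P Q W hP hQ d]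
    set W' : Matrix (Fin (m+2)) (Fin (m+2)) F := P * W * Q with hW'
    set d' : F := d * (P.det * Q.det)⁻¹ with hd'def
    have hd' : d' ≠ 0 :=
      mul_ne_zero hd (inv_ne_zero (mul_ne_zero hP hQ))
    rw [GS_step lam hlam W' hrow d' hd']
    set V : Matrix (Fin (m+1)) (Fin (m+1)) F := Matrix.of fun i j => W' i.succ j.succ with hVdef
    rw [norm_mul, norm_pow, Complex.norm_natCast]
    by_cases hV : V = 0
    · -- rank-one case: GS over V is a determinant count
      have hGSV : ∀ s : F, GS lam V s
          = ∑ A : Matrix (Fin (m+1)) (Fin (m+1)) F, (if A.det = s then (1:ℂ) else 0) := by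
        intro s
        simp only [GS]
        refine Finset.sum_congr rfl fun A _ => ?_
        rw [hV]
        rw [Matrix.transpose_zero, Matrix.zero_mul, Matrix.trace_zero,
          AddChar.map_zero_eq_one]
      set c1 : ℕ := (Finset.univ.filter
        (fun A : Matrix (Fin (m+1)) (Fin (m+1)) F => A.det = 1)).card with hc1
      have hGSV1 : ∀ s : F, s ≠ 0 → GS lam V s = (c1 : ℂ) := by
        intro s hs
        rw [hGSV s, count_det_const s hs, hc1, Finset.sum_boole]
      -- the character sum over s
      have hsplit : (∑ s : F, (if s ≠ 0 then lam (d' * s⁻¹) * GS lam V s else 0))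
          = (∑ s : F, (if s ≠ 0 then lam (d' * s⁻¹) else 0)) * (c1 : ℂ) := by
        rw [Finset.sum_mul]
        refine Finset.sum_congr rfl fun s _ => ?_
        by_cases hs : s ≠ 0
        · rw [if_pos hs, if_pos hs, hGSV1 s hs]
        · rw [if_neg hs, if_neg hs, zero_mul]
      have hchar : (∑ s : F, (if s ≠ 0 then lam (d' * s⁻¹) else 0)) = -1 := by
        set e' : F ≃ F :=
          { toFun := fun s => d' * s⁻¹
            invFun := fun s => d' * s⁻¹
            left_inv := by
              intro s
              by_cases hs : s = 0
              · simp [hs]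
              · show d' * (d' * s⁻¹)⁻¹ = s
                field_simp
            right_inv := by
              intro s
              by_cases hs : s = 0
              · simp [hs]
              · show d' * (d' * s⁻¹)⁻¹ = s
                field_simp }
          with he'
        have h1 : (∑ s : F, (if s ≠ 0 then lam (d' * s⁻¹) else 0))
            = ∑ s : F, (if s ≠ 0 then lam s else 0) := by
          refine Fintype.sum_equiv e' _ _ ?_
          intro s
          by_cases hs : s = 0
          · rw [if_neg (by simpa using hs), hs]
            show (0:ℂ) = if (d' * (0:F)⁻¹) ≠ 0 then lam (d' * (0:F)⁻¹) else 0
            rw [_root_.inv_zero, mul_zero, if_neg (by simp)]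
          · rw [if_pos hs]
            show lam (d' * s⁻¹) = if (d' * s⁻¹) ≠ 0 then lam (d' * s⁻¹) else 0
            rw [if_pos (mul_ne_zero hd' (inv_ne_zero hs))]
        rw [h1]
        have h2 : ∀ s : F, (if s ≠ 0 then lam s else 0)
            = lam s - (if s = 0 then lam s else 0) := by
          intro s
          by_cases hs : s = 0
          · rw [if_neg (by simpa using hs), if_pos hs, sub_self]
          · rw [if_pos hs, if_neg hs, sub_zero]
        rw [Finset.sum_congr rfl fun s _ => h2 s, Finset.sum_sub_distrib]
        rw [Finset.sum_ite_eq' Finset.univ (0:F) lam, if_pos (Finset.mem_univ _)]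
        have hzero : (∑ s : F, lam s) = 0 := by
          refine AddChar.sum_eq_zero_iff_ne_zero.mpr ?_
          intro h
          exact hlam (by rw [h]; rfl)
        rw [hzero, AddChar.map_zero_eq_one, zero_sub]
      rw [hsplit, hchar]
      rw [neg_one_mul, norm_neg, Complex.norm_natCast]
      -- now bound the count c1
      have hq2 : 2 ≤ Fintype.card F := Fintype.one_lt_card
      have hfibers : ∀ s : F, s ≠ 0 →
          (Finset.univ.filter
            (fun A : Matrix (Fin (m+1)) (Fin (m+1)) F => A.det = s)).card = c1 := by
        intro s hs
        have := count_det_const (F := F) (k := m) s hs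
        rw [Finset.sum_boole, Finset.sum_boole] at this
        exact_mod_cast this
      have hcard : Fintype.card (Matrix (Fin (m+1)) (Fin (m+1)) F)
          = (Fintype.card F)^((m+1)^2) := by
        show Fintype.card (Fin (m+1) → Fin (m+1) → F) = _
        rw [Fintype.card_fun, Fintype.card_fun, Fintype.card_fin, ← pow_mul, pow_two]
      have hdisj : (Fintype.card F - 1) * c1 ≤ (Fintype.card F)^((m+1)^2) := by
        have hmaps : ∀ A ∈ Finset.univ.filter
            (fun A : Matrix (Fin (m+1)) (Fin (m+1)) F => A.det ≠ 0),
            A.det ∈ Finset.univ.filter (fun s : F => s ≠ 0) := by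
          intro A hA
          rw [Finset.mem_filter] at hA ⊢
          exact ⟨Finset.mem_univ _, hA.2⟩
        have hsum := Finset.card_eq_sum_card_fiberwise hmaps
        have hfib2 : ∀ s ∈ Finset.univ.filter (fun s : F => s ≠ 0),
            ((Finset.univ.filter
              (fun A : Matrix (Fin (m+1)) (Fin (m+1)) F => A.det ≠ 0)).filter
              (fun A => A.det = s)).card = c1 := by
          intro s hs
          rw [Finset.mem_filter] at hs
          rw [Finset.filter_filter]
          rw [show (Finset.univ.filter
              (fun A : Matrix (Fin (m+1)) (Fin (m+1)) F => A.det ≠ 0 ∧ A.det = s))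
              = Finset.univ.filter
              (fun A : Matrix (Fin (m+1)) (Fin (m+1)) F => A.det = s) by
            refine Finset.filter_congr fun A _ => ?_
            constructor
            · rintro ⟨-, h⟩; exact h
            · intro h; exact ⟨by rw [h]; exact hs.2, h⟩]
          exact hfibers s hs.2
        rw [Finset.sum_congr rfl hfib2, Finset.sum_const, smul_eq_mul] at hsum
        have hcfil : (Finset.univ.filter (fun s : F => s ≠ 0)).card
            = Fintype.card F - 1 := by
          rw [show Finset.univ.filter (fun s : F => s ≠ 0) = Finset.univ.erase 0 by
            ext x; simp [Finset.mem_erase, and_comm]]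
          rw [Finset.card_erase_of_mem (Finset.mem_univ _), Finset.card_univ]
        rw [hcfil] at hsum
        calc (Fintype.card F - 1) * c1
            = (Finset.univ.filter
              (fun A : Matrix (Fin (m+1)) (Fin (m+1)) F => A.det ≠ 0)).card := hsum.symm
          _ ≤ Fintype.card (Matrix (Fin (m+1)) (Fin (m+1)) F) := by
              rw [← Finset.card_univ]
              exact Finset.card_filter_le _ _
          _ = (Fintype.card F)^((m+1)^2) := hcard
      have hc1bound : c1 ≤ 2 * (Fintype.card F)^((m+1)^2 - 1) := by
        have h1 : c1 * Fintype.card F ≤ 2 * (Fintype.card F)^((m+1)^2) := by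
          calc c1 * Fintype.card F ≤ c1 * (2 * (Fintype.card F - 1)) := by
                refine Nat.mul_le_mul_left _ ?_
                omega
            _ = 2 * ((Fintype.card F - 1) * c1) := by ring
            _ ≤ 2 * (Fintype.card F)^((m+1)^2) := Nat.mul_le_mul_left _ hdisj
        have h2 : 2 * (Fintype.card F)^((m+1)^2)
            = (2 * (Fintype.card F)^((m+1)^2 - 1)) * Fintype.card F := by
          have h3 : (m+1)^2 - 1 + 1 = (m+1)^2 := by
            have : 1 ≤ (m+1)^2 := Nat.one_le_pow _ _ (by omega)
            omega
          rw [mul_assoc, ← pow_succ, h3]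
        rw [h2] at h1
        exact Nat.le_of_mul_le_mul_right h1 (by omega)
      have hc1R : (c1 : ℝ) ≤ 2 * a ^ ((m+1)^2 - 1) := by
        rw [haa]
        exact_mod_cast hc1bound
      calc (Fintype.card F : ℝ) ^ (m+1) * (c1 : ℝ)
          ≤ a ^ (m+1) * (2 * a ^ ((m+1)^2 - 1)) := by
            refine mul_le_mul_of_nonneg_left hc1R ?_
            positivity
        _ = 2 * a ^ ((m + 1) + ((m+1)^2 - 1)) := by
            rw [pow_add]; ring
        _ ≤ 2 * a ^ Ee (m+2) := by
            refine mul_le_mul_of_nonneg_left ?_ (by norm_num)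
            exact pow_le_pow_right₀ ha1 (Ee_arith2 m)
    · -- main case : induction hypothesis
      have h1 : ‖∑ s : F, (if s ≠ 0 then lam (d' * s⁻¹) * GS lam V s else 0)‖
          ≤ a * (2 * a ^ Ee (m+1)) := by
        refine le_trans (norm_sum_le _ _) ?_
        have h2 : ∀ s : F,
            ‖if s ≠ 0 then lam (d' * s⁻¹) * GS lam V s else 0‖
            ≤ 2 * a ^ Ee (m+1) := by
          intro s
          by_cases hs : s ≠ 0
          · rw [if_pos hs, norm_mul, abs_lam, one_mul]
            exact ih V hV s hs
          · rw [if_neg hs, norm_zero]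
            positivity
        calc ∑ s : F, ‖if s ≠ 0 then lam (d' * s⁻¹) * GS lam V s else 0‖
            ≤ ∑ _s : F, 2 * a ^ Ee (m+1) := Finset.sum_le_sum fun s _ => h2 s
          _ = a * (2 * a ^ Ee (m+1)) := by
              rw [Finset.sum_const, Finset.card_univ, nsmul_eq_mul, haa]
      calc (Fintype.card F : ℝ) ^ (m+1)
            * ‖∑ s : F, (if s ≠ 0 then lam (d' * s⁻¹) * GS lam V s else 0)‖
          ≤ a ^ (m+1) * (a * (2 * a ^ Ee (m+1))) := by
            refine mul_le_mul_of_nonneg_left h1 ?_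
            positivity
        _ = 2 * a ^ ((m + 1) + 1 + Ee (m+1)) := by
            rw [pow_add, pow_add, pow_one]; ring
        _ ≤ 2 * a ^ Ee (m+2) := by
            refine mul_le_mul_of_nonneg_left ?_ (by norm_num)
            exact pow_le_pow_right₀ ha1 (Ee_arith1 m)

end GaussSL

theorem gauss_sum_SL_bound (n : ℕ) (hn : 3 ≤ n) :
    ∃ C : ℝ, ∀ (F : Type) [Field F] [Fintype F] [DecidableEq F]
      (lam : AddChar F ℂ), lam ≠ 1 →
      (∀ y : Fˣ, ‖kloostermanSum n lam (y : F)‖ ≤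
        (n : ℝ) * (Fintype.card F : ℝ) ^ (((n : ℝ) - 1) / 2)) →
      ∀ U : Matrix (Fin n) (Fin n) F, U ≠ 0 →
        ‖∑ X : Matrix.SpecialLinearGroup (Fin n) F,
            lam ((Uᵀ * (X : Matrix (Fin n) (Fin n) F)).trace)‖ ≤
          C * (Fintype.card F : ℝ) ^ (n ^ 2 - n - 1) := by
  refine ⟨2, ?_⟩
  intro F _ _ _ lam hlam _hKl U hU
  obtain ⟨m, rfl⟩ : ∃ m, n = m + 1 := ⟨n - 1, by omega⟩
  classical
  have hSL : (∑ X : Matrix.SpecialLinearGroup (Fin (m+1)) F,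
      lam ((Uᵀ * (X : Matrix (Fin (m+1)) (Fin (m+1)) F)).trace)) = GaussSL.GS lam U 1 := by
    rw [show GaussSL.GS lam U 1 = ∑ X : Matrix (Fin (m+1)) (Fin (m+1)) F,
      (if X.det = 1 then lam ((Uᵀ * X).trace) else 0) from rfl]
    rw [← Finset.sum_filter]
    refine Finset.sum_nbij' (fun X : Matrix.SpecialLinearGroup (Fin (m+1)) F =>
      (X : Matrix (Fin (m+1)) (Fin (m+1)) F))
      (fun X => if h : X.det = 1 then ⟨X, h⟩ else 1) ?_ ?_ ?_ ?_ ?_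
    · intro X _
      rw [Finset.mem_filter]
      exact ⟨Finset.mem_univ _, X.prop⟩
    · intro A _
      exact Finset.mem_univ _
    · intro X _
      show (if h : ((X : Matrix (Fin (m+1)) (Fin (m+1)) F)).det = 1
        then (⟨(X : Matrix (Fin (m+1)) (Fin (m+1)) F), h⟩ :
          Matrix.SpecialLinearGroup (Fin (m+1)) F)
        else (1 : Matrix.SpecialLinearGroup (Fin (m+1)) F)) = X
      exact (dif_pos X.prop).trans (Subtype.coe_eta X X.prop)
    · intro A hA
      rw [Finset.mem_filter] at hA
      show (((if h : A.det = 1 then (⟨A, h⟩ : Matrix.SpecialLinearGroup (Fin (m+1)) F) else 1) :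
        Matrix.SpecialLinearGroup (Fin (m+1)) F) : Matrix (Fin (m+1)) (Fin (m+1)) F) = A
      exact congrArg Subtype.val (dif_pos hA.2)
    · intro X _
      rfl
  rw [hSL]
  have hkey := GaussSL.key lam hlam m U hU 1 one_ne_zero
  have hEe : GaussSL.Ee (m+1) = (m+1)^2 - (m+1) - 1 := by
    rw [GaussSL.Ee, if_neg (by omega), if_neg (by omega)]
  rw [hEe] at hkey
  exact hkey
end
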